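/- arXiv:1406.0731 — 12 statements merged into one kernel-verified Lean document; each statement's English description precedes it below -/
import Mathlib

section
/- Suppose there exist constants C₀, γ₀ > 0 such that |θ^{(i)}_{j,𝔫,x,t}| ≤ C₀ e^{−γ₀ |𝔫|_{ℓ¹}} for all i, j ∈ {1,…,N}, all 𝔫 ∈ 𝔑, all x ∈ [0,L_j], and all t ∈ ℝ. Then there exist constants C, γ > 0 (independent of p) such that for every p ∈ [1, +∞), every family u_{j,0} ∈ L^p(0, L_j) (j ∈ {1,…,N}), and every t ≥ max_i L_i, the functions Φ_i(t) = ∑_{j=1}^N ∑_{𝔫 ∈ 𝔑_j, L(𝔫) ≤ t} θ^{(i)}_{j, 𝔫 + ⌊(t−L(𝔫))/L_j⌋·𝟏_j, L_j − {t−L(𝔫)}_{L_j}, t} · u_{j,0}(L_j − {t−L(𝔫)}_{L_j}) satisfy ∑_{i=1}^N ‖Φ_i‖_{L^p(t−L_i,t)}^p ≤ C^p e^{−pγt} ∑_{j=1}^N ‖u_{j,0}‖_{L^p(0,L_j)}^p. -/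
open MeasureTheory Finset

noncomputable def Lsum {N : ℕ} (L : Fin N → ℝ) (n : Fin N → ℕ) : ℝ :=
  ∑ i, (n i : ℝ) * L i

noncomputable def eps {N : ℕ} (L a b : Fin N → ℝ) (α : Fin N → ℝ → ℝ)
    (j : Fin N) (n : Fin N → ℕ) (x t : ℝ) : ℝ :=
  Real.exp (- ∫ s in Set.Icc (t - Lsum L n - L j + max x (a j)) (t - Lsum L n - L j + b j), α j s)

def IsTheta {N : ℕ} (L a b : Fin N → ℝ) (m : Fin N → Fin N → ℝ) (α : Fin N → ℝ → ℝ)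
    (θ : Fin N → Fin N → (Fin N → ℕ) → ℝ → ℝ → ℝ) : Prop :=
  (∀ i j n x t, θ i j n x t = eps L a b α j n x t * θ i j n (L j) t) ∧
  (∀ i j t, θ i j (fun _ => 0) (L j) t = m i j) ∧
  (∀ i j n t, n ≠ (fun _ => 0) → θ i j n (L j) t =
    ∑ k ∈ Finset.univ.filter (fun k => 1 ≤ n k),
      m k j * θ i k (fun l => n l - if l = k then 1 else 0) 0 t)

def PEsignal (T μ : ℝ) (α : ℝ → ℝ) : Prop :=
  Measurable α ∧ (∀ s, α s ∈ Set.Icc (0:ℝ) 1) ∧ ∀ t : ℝ, μ ≤ ∫ s in t..(t + T), α s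

noncomputable def fracMod (x y : ℝ) : ℝ := x - ⌊x / y⌋ * y

/-- The junction values `Φ_i(s) = u_i(s,0)` given by the explicit formula. -/
noncomputable def Phi {N : ℕ} (L : Fin N → ℝ) (θ : Fin N → Fin N → (Fin N → ℕ) → ℝ → ℝ → ℝ)
    (u0 : Fin N → ℝ → ℝ) (i : Fin N) (s : ℝ) : ℝ :=
  ∑ j, ∑ᶠ (n : Fin N → ℕ) (_ : n j = 0 ∧ Lsum L n ≤ s),
    θ i j (fun l => n l + if l = j then ⌊(s - Lsum L n) / L j⌋₊ else 0)
        (L j - fracMod (s - Lsum L n) (L j)) s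
      * u0 j (L j - fracMod (s - Lsum L n) (L j))

section AuxLemmas

lemma fracMod_eq' (x : ℝ) {y : ℝ} (hy : y ≠ 0) : fracMod x y = y * Int.fract (x / y) := by
  unfold fracMod Int.fract
  field_simp

lemma fracMod_nonneg' (x : ℝ) {y : ℝ} (hy : 0 < y) : 0 ≤ fracMod x y := by
  rw [fracMod_eq' x hy.ne']
  exact mul_nonneg hy.le (Int.fract_nonneg _)

lemma fracMod_lt' (x : ℝ) {y : ℝ} (hy : 0 < y) : fracMod x y < y := by
  rw [fracMod_eq' x hy.ne']
  calc y * Int.fract (x / y) < y * 1 := mul_lt_mul_of_pos_left (Int.fract_lt_one _) hy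
    _ = y := mul_one y

lemma fracMod_add_int' (x : ℝ) {y : ℝ} (hy : y ≠ 0) (k : ℤ) :
    fracMod (x + k * y) y = fracMod x y := by
  rw [fracMod_eq' _ hy, fracMod_eq' x hy]
  congr 1
  have : (x + k * y) / y = x / y + k := by field_simp
  rw [this, Int.fract_add_intCast]

lemma fracMod_eq_self' {x y : ℝ} (h0 : 0 ≤ x) (h1 : x < y) : fracMod x y = x := by
  have hy : 0 < y := lt_of_le_of_lt h0 h1
  rw [fracMod_eq' x hy.ne']
  rw [Int.fract_eq_self.2 ⟨by positivity, by rwa [div_lt_one hy]⟩]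
  field_simp

lemma jensen_sum' {ι : Type*} (s : Finset ι) (w z : ι → ℝ) (hw : ∀ i ∈ s, 0 ≤ w i)
    (hz : ∀ i ∈ s, 0 ≤ z i) {p WW : ℝ} (hp : 1 ≤ p) (hWle : ∑ i ∈ s, w i ≤ WW) (hW1 : 1 ≤ WW) :
    (∑ i ∈ s, w i * z i) ^ p ≤ WW ^ p * ∑ i ∈ s, w i * z i ^ p := by
  have hp0 : (0:ℝ) < p := lt_of_lt_of_le one_pos hp
  set W := ∑ i ∈ s, w i with hWdef
  have hW0 : 0 ≤ W := Finset.sum_nonneg hw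
  rcases eq_or_lt_of_le hW0 with hW | hW
  · have hwz : ∀ i ∈ s, w i = 0 := by
      intro i hi
      exact (Finset.sum_eq_zero_iff_of_nonneg hw).1 hW.symm i hi
    have h1 : ∑ i ∈ s, w i * z i = 0 :=
      Finset.sum_eq_zero fun i hi => by rw [hwz i hi, zero_mul]
    have h2 : ∑ i ∈ s, w i * z i ^ p = 0 :=
      Finset.sum_eq_zero fun i hi => by rw [hwz i hi, zero_mul]
    rw [h1, h2, Real.zero_rpow hp0.ne', mul_zero]
  · have key := Real.rpow_arith_mean_le_arith_mean_rpow s (fun i => w i / W) z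
      (fun i hi => div_nonneg (hw i hi) hW0)
      (by rw [← Finset.sum_div, div_self hW.ne'])
      hz hp
    have e1 : ∑ i ∈ s, w i * z i = W * ∑ i ∈ s, (w i / W) * z i := by
      rw [Finset.mul_sum]
      refine Finset.sum_congr rfl fun i hi => ?_
      field_simp
    have e2 : ∑ i ∈ s, (w i / W) * z i ^ p = (∑ i ∈ s, w i * z i ^ p) / W := by
      rw [Finset.sum_div]
      refine Finset.sum_congr rfl fun i hi => ?_
      ring
    have hs0 : 0 ≤ ∑ i ∈ s, (w i / W) * z i :=
      Finset.sum_nonneg fun i hi => mul_nonneg (div_nonneg (hw i hi) hW0) (hz i hi)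
    calc (∑ i ∈ s, w i * z i) ^ p
        = W ^ p * (∑ i ∈ s, (w i / W) * z i) ^ p := by
          rw [e1, Real.mul_rpow hW0 hs0]
      _ ≤ W ^ p * ∑ i ∈ s, (w i / W) * z i ^ p :=
          mul_le_mul_of_nonneg_left key (Real.rpow_nonneg hW0 p)
      _ = W ^ (p - 1) * ∑ i ∈ s, w i * z i ^ p := by
          rw [e2, Real.rpow_sub hW, Real.rpow_one]
          ring
      _ ≤ WW ^ p * ∑ i ∈ s, w i * z i ^ p := by
          have hsum : 0 ≤ ∑ i ∈ s, w i * z i ^ p :=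
            Finset.sum_nonneg fun i hi => mul_nonneg (hw i hi)
              (Real.rpow_nonneg (hz i hi) p)
          refine mul_le_mul_of_nonneg_right ?_ hsum
          calc W ^ (p-1) ≤ WW ^ (p-1) :=
                Real.rpow_le_rpow hW0 hWle (by linarith)
            _ ≤ WW ^ p := Real.rpow_le_rpow_of_exponent_le hW1 (by linarith)

lemma period_piece' {h : ℝ → ℝ} {l : ℝ} (hl : 0 < l)
    (hint : IntegrableOn h (Set.Ioc 0 l)) (c : ℝ) (k : ℤ) :
    IntervalIntegrable (fun s => h (l - fracMod (s - c) l)) volume (c + k * l) (c + k * l + l) ∧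
    ∫ s in (c + k * l)..(c + k * l + l), h (l - fracMod (s - c) l)
      = ∫ x in Set.Ioc 0 l, h x := by
  set A := c + k * l with hA
  have hintI : IntervalIntegrable h volume 0 l :=
    (intervalIntegrable_iff_integrableOn_Ioc_of_le hl.le).2 hint
  have hG : IntervalIntegrable (fun s => h (A + l - s)) volume A (A + l) := by
    have := (hintI.comp_sub_left (A + l)).symm
    simpa using this
  have heq : ∀ s ∈ Set.Ioo A (A + l),
      h (l - fracMod (s - c) l) = h (A + l - s) := by
    intro s hs
    have h1 : fracMod (s - c) l = s - A := by
      have : s - c = (s - A) + k * l := by rw [hA]; ring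
      rw [this, fracMod_add_int' _ hl.ne' k]
      exact fracMod_eq_self' (by have := hs.1; simp only [hA] at *; linarith)
        (by have := hs.2; simp only [hA] at *; linarith)
    rw [h1]
    ring_nf
  have haeeq : (fun s => h (l - fracMod (s - c) l)) =ᵐ[volume.restrict (Set.Ioc A (A+l))]
      (fun s => h (A + l - s)) := by
    rw [← Measure.restrict_congr_set MeasureTheory.Ioo_ae_eq_Ioc]
    exact (ae_restrict_iff' measurableSet_Ioo).2 (Filter.Eventually.of_forall
      (fun s hs => heq s hs))
  have hFint : IntervalIntegrable (fun s => h (l - fracMod (s - c) l)) volume A (A + l) := by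
    rw [intervalIntegrable_iff_integrableOn_Ioc_of_le (by linarith)] at hG ⊢
    exact hG.congr haeeq.symm
  refine ⟨hFint, ?_⟩
  rw [intervalIntegral.integral_of_le (by linarith : A ≤ A + l)]
  rw [integral_congr_ae haeeq]
  have : ∫ s in Set.Ioc A (A+l), h (A + l - s)
      = ∫ s in A..(A+l), h (A + l - s) := by
    rw [intervalIntegral.integral_of_le (by linarith : A ≤ A + l)]
  rw [this, intervalIntegral.integral_comp_sub_left h (A + l)]
  simp only [sub_self, add_sub_cancel_left]
  rw [intervalIntegral.integral_of_le hl.le]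

lemma periodized_bound' {h : ℝ → ℝ} {l : ℝ} (hl : 0 < l)
    (hh0 : ∀ x, 0 ≤ h x) (hint : IntegrableOn h (Set.Ioc 0 l))
    (c u v : ℝ) (huv : u ≤ v) (K : ℕ) (hK : v - u + l ≤ K * l) :
    IntegrableOn (fun s => h (l - fracMod (s - c) l)) (Set.Ioc u v) ∧
    ∫ s in Set.Ioc u v, h (l - fracMod (s - c) l) ≤ K * ∫ x in Set.Ioc 0 l, h x := by
  set F := fun s => h (l - fracMod (s - c) l) with hF
  set k₀ : ℤ := ⌊(u - c) / l⌋ with hk₀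
  set a : ℕ → ℝ := fun m => c + (k₀ + m) * l with ha
  have ha0 : a 0 ≤ u := by
    have := Int.floor_le ((u - c) / l)
    simp only [ha, Nat.cast_zero, add_zero]
    rw [← sub_nonneg]
    have h2 : (k₀ : ℝ) * l ≤ u - c := by
      calc (k₀:ℝ) * l ≤ ((u - c)/l) * l := mul_le_mul_of_nonneg_right this hl.le
        _ = u - c := by field_simp
    linarith
  have hau : u < a 0 + l := by
    have := Int.lt_floor_add_one ((u - c) / l)
    simp only [ha, Nat.cast_zero, add_zero]
    have h2 : u - c < (k₀ : ℝ) * l + l := by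
      have := mul_lt_mul_of_pos_right this hl
      rw [div_mul_cancel₀ _ hl.ne'] at this
      linarith [this]
    linarith
  have haK : v ≤ a K := by
    simp only [ha]
    have : (k₀ : ℝ) * l + (K : ℝ) * l ≥ (u - c) - l + (v - u + l) := by
      have h1 : (u - c) - l ≤ (k₀:ℝ) * l := by
        simp only [ha, Nat.cast_zero, add_zero] at hau ha0
        linarith
      linarith
    push_cast
    nlinarith [this]
  have hpieces : ∀ m : ℕ, m < K → IntervalIntegrable F volume (a m) (a (m+1)) ∧
      ∫ s in (a m)..(a (m+1)), F s = ∫ x in Set.Ioc 0 l, h x := by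
    intro m _
    have h1 : a (m+1) = c + (((k₀ + (m:ℤ)) : ℤ) : ℝ) * l + l := by
      simp only [ha]; push_cast; ring
    have h2 : a m = c + (((k₀ + (m:ℤ)) : ℤ) : ℝ) * l := by
      simp only [ha]; push_cast; ring
    have := period_piece' hl hint c (k₀ + (m:ℤ))
    constructor
    · rw [h1, h2]; exact this.1
    · rw [h1, h2]; exact this.2
  have hintAB : IntervalIntegrable F volume (a 0) (a K) :=
    IntervalIntegrable.trans_iterate fun m hm => (hpieces m hm).1
  have hsum : ∫ s in (a 0)..(a K), F s = K * ∫ x in Set.Ioc 0 l, h x := by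
    rw [← intervalIntegral.sum_integral_adjacent_intervals fun m hm => (hpieces m hm).1]
    rw [Finset.sum_congr rfl fun m hm => (hpieces m (Finset.mem_range.1 hm)).2]
    simp [Finset.sum_const, Finset.card_range]
  have ha0K : a 0 ≤ a K := by
    calc a 0 ≤ u := ha0
      _ ≤ v := huv
      _ ≤ a K := haK
  have hintOn : IntegrableOn F (Set.Ioc (a 0) (a K)) :=
    (intervalIntegrable_iff_integrableOn_Ioc_of_le ha0K).1 hintAB
  have hsub : Set.Ioc u v ⊆ Set.Ioc (a 0) (a K) :=
    Set.Ioc_subset_Ioc ha0 haK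
  refine ⟨hintOn.mono_set hsub, ?_⟩
  calc ∫ s in Set.Ioc u v, F s ≤ ∫ s in Set.Ioc (a 0) (a K), F s := by
        refine setIntegral_mono_set hintOn ?_ (HasSubset.Subset.eventuallyLE hsub)
        exact Filter.Eventually.of_forall fun s => hh0 _
    _ = K * ∫ x in Set.Ioc 0 l, h x := by
        rw [← intervalIntegral.integral_of_le ha0K]; exact hsum

lemma geom_box_bound' {N : ℕ} {γ' : ℝ} (hγ' : 0 < γ') (M : Fin N → ℕ) :
    ∑ n ∈ Fintype.piFinset (fun i : Fin N => Finset.range (M i)),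
      Real.exp (-γ' * ∑ l, (n l : ℝ))
      ≤ ((1 - Real.exp (-γ'))⁻¹) ^ N := by
  set r := Real.exp (-γ') with hr
  have hr0 : 0 < r := Real.exp_pos _
  have hr1 : r < 1 := by
    rw [hr]; exact Real.exp_lt_one_iff.2 (by linarith)
  have key : ∀ n : Fin N → ℕ, Real.exp (-γ' * ∑ l, (n l : ℝ)) = ∏ l, r ^ (n l) := by
    intro n
    rw [Finset.mul_sum, Real.exp_sum]
    refine Finset.prod_congr rfl fun l _ => ?_
    rw [hr, ← Real.exp_nat_mul]
    ring_nf
  calc ∑ n ∈ Fintype.piFinset (fun i : Fin N => Finset.range (M i)),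
        Real.exp (-γ' * ∑ l, (n l : ℝ))
      = ∑ n ∈ Fintype.piFinset (fun i : Fin N => Finset.range (M i)), ∏ l, r ^ (n l) :=
        Finset.sum_congr rfl fun n _ => key n
    _ = ∏ l : Fin N, ∑ k ∈ Finset.range (M l), r ^ k :=
        (Finset.prod_univ_sum _ _).symm
    _ ≤ ∏ _l : Fin N, (1 - r)⁻¹ := by
        refine Finset.prod_le_prod (fun l _ => Finset.sum_nonneg fun k _ => by positivity)
          (fun l _ => ?_)
        calc ∑ k ∈ Finset.range (M l), r ^ k
            ≤ ∑' k : ℕ, r ^ k := Summable.sum_le_tsum _ (fun k _ => by positivity)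
              (summable_geometric_of_lt_one hr0.le hr1)
          _ = (1 - r)⁻¹ := tsum_geometric_of_lt_one hr0.le hr1
    _ = ((1 - r)⁻¹) ^ N := by
        rw [Finset.prod_const, Finset.card_univ, Fintype.card_fin]

lemma finsum_cond_eq_sum' {α : Type*} (f : α → ℝ) (P : α → Prop) [DecidablePred P]
    (S : Finset α) (h : ∀ n, P n → n ∈ S) :
    (∑ᶠ (n) (_ : P n), f n) = ∑ n ∈ S, if P n then f n else 0 := by
  have h1 : ∀ n, (∑ᶠ (_ : P n), f n) = if P n then f n else 0 := fun n => finsum_eq_if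
  rw [finsum_congr h1]
  apply finsum_eq_sum_of_support_subset
  intro n hn
  simp only [Function.mem_support] at hn
  by_cases hP : P n
  · exact h n hP
  · simp [hP] at hn

end AuxLemmas

set_option maxHeartbeats 2000000 in
/-- Convergence of the coefficients implies convergence of the solution
(Proposition `LemmConvCoefConvSol`). -/
theorem stmt1 {N Nd : ℕ} (hN : 2 ≤ N) (hNd1 : 1 ≤ Nd) (hNdN : Nd ≤ N)
    (L a b : Fin N → ℝ) (m : Fin N → Fin N → ℝ)
    (hL : ∀ i, 0 < L i)
    (hab : ∀ j : Fin N, (j : ℕ) < Nd → 0 ≤ a j ∧ a j < b j ∧ b j ≤ L j)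
    (hab' : ∀ j : Fin N, Nd ≤ (j : ℕ) → a j = L j ∧ b j = L j)
    (α : Fin N → ℝ → ℝ)
    (hαmeas : ∀ j, Measurable (α j)) (hα01 : ∀ j s, α j s ∈ Set.Icc (0:ℝ) 1)
    (hα1 : ∀ j : Fin N, Nd ≤ (j : ℕ) → ∀ s, α j s = 1)
    (θ : Fin N → Fin N → (Fin N → ℕ) → ℝ → ℝ → ℝ) (hθ : IsTheta L a b m α θ)
    (C₀ γ₀ : ℝ) (hC₀ : 0 < C₀) (hγ₀ : 0 < γ₀)
    (hdecay : ∀ (i j : Fin N) (n : Fin N → ℕ) (x t : ℝ), x ∈ Set.Icc 0 (L j) →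
      |θ i j n x t| ≤ C₀ * Real.exp (-γ₀ * ∑ i, (n i : ℝ))) :
    ∃ C γ : ℝ, 0 < C ∧ 0 < γ ∧
      ∀ p : ℝ, 1 ≤ p →
      ∀ u0 : Fin N → ℝ → ℝ, (∀ j, Measurable (u0 j)) →
        (∀ j, IntegrableOn (fun x => |u0 j x| ^ p) (Set.Ioc 0 (L j))) →
      ∀ t : ℝ, (∀ i, L i ≤ t) →
        (∑ i, ∫ s in Set.Ioc (t - L i) t, |Phi L θ u0 i s| ^ p)
          ≤ C ^ p * Real.exp (-(p * γ * t)) *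
            (∑ j, ∫ x in Set.Ioc 0 (L j), |u0 j x| ^ p) := by
  classical
  have i0 : Fin N := ⟨0, by omega⟩
  have hne : (Finset.univ : Finset (Fin N)).Nonempty := ⟨i0, Finset.mem_univ i0⟩
  set Lmax : ℝ := ∑ i, L i with hLmaxdef
  have hLile : ∀ i, L i ≤ Lmax := fun i =>
    Finset.single_le_sum (fun l _ => (hL l).le) (Finset.mem_univ i)
  have hLmax : 0 < Lmax := lt_of_lt_of_le (hL i0) (hLile i0)
  set Lmin : ℝ := Finset.univ.inf' hne L with hLmindef
  have hLminle : ∀ i, Lmin ≤ L i := fun i => Finset.inf'_le L (Finset.mem_univ i)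
  have hLmin : 0 < Lmin := by
    rw [hLmindef, Finset.lt_inf'_iff]
    exact fun i _ => hL i
  set γ' : ℝ := γ₀ / 2 with hγ'def
  have hγ' : 0 < γ' := by positivity
  set γ : ℝ := γ₀ / (2 * Lmax) with hγdef
  have hγ : 0 < γ := by positivity
  set r : ℝ := Real.exp (-γ') with hrdef
  set Wg : ℝ := max 1 ((1 - r)⁻¹ ^ N) with hWgdef
  have hWg1 : 1 ≤ Wg := le_max_left _ _
  have hWg0 : 0 < Wg := lt_of_lt_of_le one_pos hWg1
  set K : ℕ := ⌈2 * Lmax / Lmin⌉₊ with hKdef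
  have hK1 : 1 ≤ K := by
    rw [hKdef]
    refine Nat.one_le_iff_ne_zero.2 ?_
    simp only [ne_eq, Nat.ceil_eq_zero, not_le]
    positivity
  have hKl : ∀ j, 2 * Lmax ≤ K * L j := by
    intro j
    calc 2 * Lmax = (2 * Lmax / Lmin) * Lmin := by field_simp
      _ ≤ (K : ℝ) * Lmin := mul_le_mul_of_nonneg_right (Nat.le_ceil _) hLmin.le
      _ ≤ (K : ℝ) * L j := by
          refine mul_le_mul_of_nonneg_left (hLminle j) (by positivity)
  set C₁ : ℝ := C₀ * Real.exp γ' with hC₁def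
  have hC₁ : 0 < C₁ := by positivity
  set C₂ : ℝ := C₁ * Real.exp (γ * Lmax) with hC₂def
  have hC₂ : 0 < C₂ := by positivity
  set WW : ℝ := N * Wg with hWWdef
  have hWW1 : 1 ≤ WW := by
    rw [hWWdef]
    calc (1:ℝ) = 1 * 1 := (one_mul 1).symm
      _ ≤ N * Wg := by
          refine mul_le_mul ?_ hWg1 one_pos.le (by positivity)
          exact_mod_cast le_trans (by norm_num) hN
  set C : ℝ := ((N : ℝ) * Wg * K) * WW * max 1 C₂ with hCdef
  have hA1 : 1 ≤ (N : ℝ) * Wg * K := by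
    have h2 : (1:ℝ) ≤ N := by exact_mod_cast le_trans (by norm_num) hN
    have h3 : (1:ℝ) ≤ K := by exact_mod_cast hK1
    nlinarith
  have hC : 0 < C := by
    rw [hCdef]
    exact mul_pos (mul_pos (lt_of_lt_of_le one_pos hA1) (lt_of_lt_of_le one_pos hWW1))
      (lt_of_lt_of_le one_pos (le_max_left 1 C₂))
  refine ⟨C, γ, hC, hγ, ?_⟩
  intro p hp u0 hu0meas hu0int t ht
  have hp0 : (0:ℝ) < p := lt_of_lt_of_le one_pos hp
  have ht0 : 0 ≤ t := le_trans (hL i0).le (ht i0)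
  -- the finite index set
  set S : Finset (Fin N → ℕ) :=
    Fintype.piFinset (fun i => Finset.range (⌊t / L i⌋₊ + 1)) with hSdef
  have hS : ∀ n : Fin N → ℕ, Lsum L n ≤ t → n ∈ S := by
    intro n hn
    rw [hSdef, Fintype.mem_piFinset]
    intro i
    rw [Finset.mem_range, Nat.lt_succ_iff, Nat.le_floor_iff (div_nonneg ht0 (hL i).le)]
    have h1 : (n i : ℝ) * L i ≤ Lsum L n :=
      Finset.single_le_sum (f := fun l => (n l : ℝ) * L l)
        (fun l _ => mul_nonneg (Nat.cast_nonneg _) (hL l).le) (Finset.mem_univ i)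
    rw [le_div_iff₀ (hL i)]
    linarith
  set w : (Fin N × (Fin N → ℕ)) → ℝ := fun q => Real.exp (-γ' * ∑ l, (q.2 l : ℝ)) with hwdef
  have hw0 : ∀ q, 0 < w q := fun q => Real.exp_pos _
  set xx : Fin N × (Fin N → ℕ) → ℝ → ℝ :=
    fun q s => L q.1 - fracMod (s - Lsum L q.2) (L q.1) with hxxdef
  set z : Fin N × (Fin N → ℕ) → ℝ → ℝ := fun q s => |u0 q.1 (xx q s)| with hzdef
  set T : Finset (Fin N × (Fin N → ℕ)) := Finset.univ ×ˢ S with hTdef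
  have hxxmem : ∀ q s, xx q s ∈ Set.Icc 0 (L q.1) := by
    intro q s
    constructor
    · simp only [hxxdef]
      have := fracMod_lt' (s - Lsum L q.2) (hL q.1)
      linarith
    · simp only [hxxdef]
      have := fracMod_nonneg' (s - Lsum L q.2) (hL q.1)
      linarith
  have hWsum : ∑ n ∈ S, Real.exp (-γ' * ∑ l, (n l : ℝ)) ≤ Wg :=
    le_trans (geom_box_bound' hγ' _) (le_max_right _ _)
  have hWT : ∑ q ∈ T, w q ≤ WW := by
    rw [hTdef, Finset.sum_product]
    calc ∑ _j : Fin N, ∑ n ∈ S, Real.exp (-γ' * ∑ l, (n l : ℝ))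
        ≤ ∑ _j : Fin N, Wg := Finset.sum_le_sum fun j _ => hWsum
      _ = N * Wg := by rw [Finset.sum_const, Finset.card_univ, Fintype.card_fin]; ring
  -- pointwise bound
  have hγγ' : γ * Lmax = γ' := by
    rw [hγdef, hγ'def]; field_simp
  have hγ₀2 : γ₀ = 2 * γ' := by rw [hγ'def]; ring
  -- the per-term estimate
  have hterm : ∀ (i j : Fin N) (n : Fin N → ℕ) (s : ℝ), n j = 0 ∧ Lsum L n ≤ s →
      |θ i j (fun l => n l + if l = j then ⌊(s - Lsum L n) / L j⌋₊ else 0)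
          (L j - fracMod (s - Lsum L n) (L j)) s
        * u0 j (L j - fracMod (s - Lsum L n) (L j))|
      ≤ C₁ * Real.exp (-(γ * s)) * (w (j, n) * z (j, n) s) := by
    intro i j n s hP
    set c := Lsum L n with hcdef
    set fl : ℕ := ⌊(s - c) / L j⌋₊ with hfldef
    set n' : Fin N → ℕ := fun l => n l + if l = j then fl else 0 with hn'def
    have hb := hdecay i j n' (L j - fracMod (s - c) (L j)) s (hxxmem (j, n) s)
    have hsum' : (∑ l, (n' l : ℝ)) = (∑ l, (n l : ℝ)) + fl := by
      simp only [hn'def]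
      push_cast
      rw [Finset.sum_add_distrib]
      congr 1
      simp [Finset.sum_ite_eq']
    set Sn := ∑ l, (n l : ℝ) with hSn
    have hSn0 : 0 ≤ Sn := Finset.sum_nonneg fun l _ => Nat.cast_nonneg _
    have hfl0 : (0:ℝ) ≤ fl := Nat.cast_nonneg _
    have hcle : c ≤ Sn * Lmax := by
      rw [hcdef]
      calc Lsum L n = ∑ l, (n l : ℝ) * L l := rfl
        _ ≤ ∑ l, (n l : ℝ) * Lmax := Finset.sum_le_sum fun l _ =>
            mul_le_mul_of_nonneg_left (hLile l) (Nat.cast_nonneg _)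
        _ = Sn * Lmax := by rw [hSn, Finset.sum_mul]
    have hcs : c ≤ s := hP.2
    have hflge : s - c - Lmax ≤ (fl:ℝ) * Lmax := by
      have h1 : (s - c) / L j < (fl:ℝ) + 1 := Nat.lt_floor_add_one _
      have h2 : s - c < ((fl:ℝ) + 1) * L j := by
        rw [div_lt_iff₀ (hL j)] at h1; linarith
      have h3 : ((fl:ℝ) + 1) * L j ≤ ((fl:ℝ) + 1) * Lmax :=
        mul_le_mul_of_nonneg_left (hLile j) (by positivity)
      have h4 : ((fl:ℝ) + 1) * Lmax = (fl:ℝ) * Lmax + Lmax := by ring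
      linarith
    have hkey : s - Lmax ≤ (Sn + fl) * Lmax := by
      have h5 : (Sn + (fl:ℝ)) * Lmax = Sn * Lmax + (fl:ℝ) * Lmax := by ring
      linarith
    have hb2 : γ * s - γ' ≤ γ' * (Sn + fl) := by
      calc γ * s - γ' = γ * (s - Lmax) := by rw [← hγγ']; ring
        _ ≤ γ * ((Sn + fl) * Lmax) := mul_le_mul_of_nonneg_left hkey hγ.le
        _ = γ' * (Sn + fl) := by rw [← hγγ']; ring
    have ha2 : γ' * Sn ≤ γ' * (Sn + fl) :=
      mul_le_mul_of_nonneg_left (by linarith) hγ'.le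
    have hexpo : -γ₀ * (Sn + (fl:ℝ)) ≤ γ' + (-(γ * s)) + (-γ' * Sn) := by
      rw [hγ₀2]; linarith
    have hexp : C₀ * Real.exp (-γ₀ * (∑ l, (n' l : ℝ)))
        ≤ C₁ * Real.exp (-(γ * s)) * w (j, n) := by
      have hrhs : C₁ * Real.exp (-(γ * s)) * w (j, n)
          = C₀ * Real.exp (γ' + (-(γ * s)) + (-γ' * Sn)) := by
        simp only [hC₁def, hwdef, hSn]
        rw [Real.exp_add, Real.exp_add]
        ring
      rw [hsum', hrhs]
      exact mul_le_mul_of_nonneg_left (Real.exp_le_exp.2 hexpo) hC₀.le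
    rw [abs_mul]
    calc |θ i j n' (L j - fracMod (s - c) (L j)) s| * |u0 j (L j - fracMod (s - c) (L j))|
        ≤ (C₀ * Real.exp (-γ₀ * ∑ l, (n' l : ℝ))) * |u0 j (L j - fracMod (s - c) (L j))| :=
          mul_le_mul_of_nonneg_right hb (abs_nonneg _)
      _ ≤ (C₁ * Real.exp (-(γ * s)) * w (j, n)) * |u0 j (L j - fracMod (s - c) (L j))| :=
          mul_le_mul_of_nonneg_right hexp (abs_nonneg _)
      _ = C₁ * Real.exp (-(γ * s)) * (w (j, n) * z (j, n) s) := by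
          simp only [hzdef, hxxdef]; ring
  have hpoint : ∀ i : Fin N, ∀ s : ℝ, 0 ≤ s → s ≤ t →
      |Phi L θ u0 i s| ≤ C₁ * Real.exp (-(γ * s)) * ∑ q ∈ T, w q * z q s := by
    intro i s hs0 hst
    have hrw : ∀ j : Fin N,
        (∑ᶠ (n : Fin N → ℕ) (_ : n j = 0 ∧ Lsum L n ≤ s),
          θ i j (fun l => n l + if l = j then ⌊(s - Lsum L n) / L j⌋₊ else 0)
            (L j - fracMod (s - Lsum L n) (L j)) s
          * u0 j (L j - fracMod (s - Lsum L n) (L j)))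
        = ∑ n ∈ S, if (n j = 0 ∧ Lsum L n ≤ s) then
            θ i j (fun l => n l + if l = j then ⌊(s - Lsum L n) / L j⌋₊ else 0)
              (L j - fracMod (s - Lsum L n) (L j)) s
            * u0 j (L j - fracMod (s - Lsum L n) (L j)) else 0 := by
      intro j
      exact finsum_cond_eq_sum' _ _ S (fun n hn => hS n (le_trans hn.2 hst))
    show |∑ j, ∑ᶠ (n : Fin N → ℕ) (_ : n j = 0 ∧ Lsum L n ≤ s),
        θ i j (fun l => n l + if l = j then ⌊(s - Lsum L n) / L j⌋₊ else 0)
          (L j - fracMod (s - Lsum L n) (L j)) s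
        * u0 j (L j - fracMod (s - Lsum L n) (L j))| ≤ _
    calc |∑ j, ∑ᶠ (n : Fin N → ℕ) (_ : n j = 0 ∧ Lsum L n ≤ s),
          θ i j (fun l => n l + if l = j then ⌊(s - Lsum L n) / L j⌋₊ else 0)
            (L j - fracMod (s - Lsum L n) (L j)) s
          * u0 j (L j - fracMod (s - Lsum L n) (L j))|
        ≤ ∑ j, |∑ᶠ (n : Fin N → ℕ) (_ : n j = 0 ∧ Lsum L n ≤ s),
            θ i j (fun l => n l + if l = j then ⌊(s - Lsum L n) / L j⌋₊ else 0)
              (L j - fracMod (s - Lsum L n) (L j)) s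
            * u0 j (L j - fracMod (s - Lsum L n) (L j))| :=
          Finset.abs_sum_le_sum_abs _ _
      _ ≤ ∑ j, ∑ n ∈ S, C₁ * Real.exp (-(γ * s)) * (w (j, n) * z (j, n) s) := by
          refine Finset.sum_le_sum fun j _ => ?_
          rw [hrw j]
          refine le_trans (Finset.abs_sum_le_sum_abs _ _)
            (Finset.sum_le_sum fun n hn => ?_)
          by_cases hPn : (n j = 0 ∧ Lsum L n ≤ s)
          · rw [if_pos hPn]; exact hterm i j n s hPn
          · rw [if_neg hPn, abs_zero]
            exact mul_nonneg (mul_nonneg hC₁.le (Real.exp_pos _).le)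
              (mul_nonneg (hw0 _).le (abs_nonneg _))
      _ = C₁ * Real.exp (-(γ * s)) * ∑ q ∈ T, w q * z q s := by
          rw [hTdef, Finset.sum_product, Finset.mul_sum]
          exact Finset.sum_congr rfl fun j _ => by rw [Finset.mul_sum]
  -- the integral estimates
  set I : Fin N → ℝ := fun j => ∫ x in Set.Ioc 0 (L j), |u0 j x| ^ p with hIdef
  have hIj0 : ∀ j, 0 ≤ I j := fun j =>
    integral_nonneg fun x => Real.rpow_nonneg (abs_nonneg _) p
  set E : ℝ := C₂ ^ p * Real.exp (-(p * γ * t)) * WW ^ p with hEdef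
  have hE0 : 0 ≤ E := by positivity
  have hEeq : (C₂ * Real.exp (-(γ * t))) ^ p * WW ^ p = E := by
    rw [hEdef, Real.mul_rpow hC₂.le (Real.exp_pos _).le, ← Real.exp_mul,
      show -(γ * t) * p = -(p * γ * t) by ring]
  have hmain : ∀ i : Fin N, (∫ s in Set.Ioc (t - L i) t, |Phi L θ u0 i s| ^ p)
      ≤ E * ((K : ℝ) * (Wg * ∑ j, I j)) := by
    intro i
    have hFq : ∀ q ∈ T, IntegrableOn (fun s => z q s ^ p) (Set.Ioc (t - L i) t) ∧
        ∫ s in Set.Ioc (t - L i) t, z q s ^ p ≤ (K : ℝ) * I q.1 := by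
      intro q _
      have h0 : ∀ x, 0 ≤ |u0 q.1 x| ^ p := fun x => Real.rpow_nonneg (abs_nonneg _) p
      have hKcond : t - (t - L i) + L q.1 ≤ (K : ℝ) * L q.1 := by
        have := hKl q.1
        have h6 := hLile i
        have h7 := hLile q.1
        linarith
      exact periodized_bound' (hL q.1) h0 (hu0int q.1) (Lsum L q.2) (t - L i) t
        (by linarith [hL i]) K hKcond
    set g : ℝ → ℝ := fun s => E * ∑ q ∈ T, w q * z q s ^ p with hgdef
    have hgint : IntegrableOn g (Set.Ioc (t - L i) t) := by
      apply Integrable.const_mul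
      apply integrable_finset_sum
      intro q hq
      exact ((hFq q hq).1).const_mul (w q)
    have hle : ∀ s ∈ Set.Ioc (t - L i) t, |Phi L θ u0 i s| ^ p ≤ g s := by
      intro s hs
      have hs0 : 0 ≤ s := by
        have := ht i
        have := hs.1
        linarith
      have h1 := hpoint i s hs0 hs.2
      have hsum0 : 0 ≤ ∑ q ∈ T, w q * z q s :=
        Finset.sum_nonneg fun q _ => mul_nonneg (hw0 q).le (abs_nonneg _)
      have h2 : |Phi L θ u0 i s| ^ p
          ≤ (C₁ * Real.exp (-(γ * s)) * ∑ q ∈ T, w q * z q s) ^ p :=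
        Real.rpow_le_rpow (abs_nonneg _) h1 hp0.le
      have h3 : (C₁ * Real.exp (-(γ * s)) * ∑ q ∈ T, w q * z q s) ^ p
          = (C₁ * Real.exp (-(γ * s))) ^ p * (∑ q ∈ T, w q * z q s) ^ p :=
        Real.mul_rpow (by positivity) hsum0
      have h4 : (∑ q ∈ T, w q * z q s) ^ p ≤ WW ^ p * ∑ q ∈ T, w q * z q s ^ p :=
        jensen_sum' T w (fun q => z q s) (fun q _ => (hw0 q).le)
          (fun q _ => abs_nonneg _) hp hWT hWW1
      have h5 : (C₁ * Real.exp (-(γ * s))) ^ p ≤ (C₂ * Real.exp (-(γ * t))) ^ p := by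
        refine Real.rpow_le_rpow (by positivity) ?_ hp0.le
        have hsge : t - Lmax ≤ s := by
          have := hs.1
          have := hLile i
          linarith
        have : Real.exp (-(γ * s)) ≤ Real.exp (γ * Lmax) * Real.exp (-(γ * t)) := by
          rw [← Real.exp_add]
          refine Real.exp_le_exp.2 ?_
          have := mul_le_mul_of_nonneg_left hsge hγ.le
          nlinarith [hγ.le]
        calc C₁ * Real.exp (-(γ * s)) ≤ C₁ * (Real.exp (γ * Lmax) * Real.exp (-(γ * t))) :=
              mul_le_mul_of_nonneg_left this hC₁.le
          _ = C₂ * Real.exp (-(γ * t)) := by rw [hC₂def]; ring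
      have hsum0' : 0 ≤ ∑ q ∈ T, w q * z q s ^ p :=
        Finset.sum_nonneg fun q _ => mul_nonneg (hw0 q).le (Real.rpow_nonneg (abs_nonneg _) p)
      calc |Phi L θ u0 i s| ^ p
          ≤ (C₁ * Real.exp (-(γ * s))) ^ p * (∑ q ∈ T, w q * z q s) ^ p := by
            rw [← h3]; exact h2
        _ ≤ (C₁ * Real.exp (-(γ * s))) ^ p * (WW ^ p * ∑ q ∈ T, w q * z q s ^ p) :=
            mul_le_mul_of_nonneg_left h4 (Real.rpow_nonneg (by positivity) p)
        _ ≤ (C₂ * Real.exp (-(γ * t))) ^ p * (WW ^ p * ∑ q ∈ T, w q * z q s ^ p) :=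
            mul_le_mul_of_nonneg_right h5 (mul_nonneg (Real.rpow_nonneg (by positivity) p) hsum0')
        _ = g s := by rw [hgdef, ← hEeq]; ring
    calc ∫ s in Set.Ioc (t - L i) t, |Phi L θ u0 i s| ^ p
        ≤ ∫ s in Set.Ioc (t - L i) t, g s := by
          refine integral_mono_of_nonneg ?_ hgint ?_
          · exact Filter.Eventually.of_forall fun s => Real.rpow_nonneg (abs_nonneg _) p
          · exact (ae_restrict_iff' measurableSet_Ioc).2
              (Filter.Eventually.of_forall fun s hs => hle s hs)
      _ = E * ∑ q ∈ T, w q * ∫ s in Set.Ioc (t - L i) t, z q s ^ p := by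
          rw [hgdef]
          rw [integral_const_mul]
          congr 1
          rw [integral_finset_sum T fun q hq => ((hFq q hq).1).const_mul (w q)]
          exact Finset.sum_congr rfl fun q _ => integral_const_mul _ _
      _ ≤ E * ((K : ℝ) * (Wg * ∑ j, I j)) := by
          refine mul_le_mul_of_nonneg_left ?_ hE0
          calc ∑ q ∈ T, w q * ∫ s in Set.Ioc (t - L i) t, z q s ^ p
              ≤ ∑ q ∈ T, w q * ((K : ℝ) * I q.1) :=
                Finset.sum_le_sum fun q hq =>
                  mul_le_mul_of_nonneg_left (hFq q hq).2 (hw0 q).le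
            _ = ∑ j : Fin N, ∑ n ∈ S, Real.exp (-γ' * ∑ l, (n l : ℝ)) * ((K : ℝ) * I j) := by
                rw [hTdef, Finset.sum_product]
            _ = ∑ j : Fin N, (∑ n ∈ S, Real.exp (-γ' * ∑ l, (n l : ℝ))) * ((K : ℝ) * I j) := by
                exact Finset.sum_congr rfl fun j _ => by rw [Finset.sum_mul]
            _ ≤ ∑ j : Fin N, Wg * ((K : ℝ) * I j) :=
                Finset.sum_le_sum fun j _ => mul_le_mul_of_nonneg_right hWsum
                  (mul_nonneg (by positivity) (hIj0 j))
            _ = (K : ℝ) * (Wg * ∑ j, I j) := by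
                rw [Finset.mul_sum, Finset.mul_sum]
                exact Finset.sum_congr rfl fun j _ => by ring
  -- final constant comparison
  have hCp : ((N : ℝ) * (K : ℝ) * Wg * WW ^ p * C₂ ^ p) ≤ C ^ p := by
    have h1 : C ^ p = (((N : ℝ) * Wg * (K : ℝ)) * WW * max 1 C₂) ^ p := by rw [hCdef]
    have h2 : (((N : ℝ) * Wg * (K : ℝ)) * WW * max 1 C₂) ^ p
        = ((N : ℝ) * Wg * (K : ℝ)) ^ p * WW ^ p * (max 1 C₂) ^ p := by
      rw [Real.mul_rpow (mul_nonneg (by positivity) (by linarith)) (by positivity),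
        Real.mul_rpow (by positivity) (by linarith)]
    have h3 : (N : ℝ) * Wg * (K : ℝ) ≤ ((N : ℝ) * Wg * (K : ℝ)) ^ p := by
      calc (N : ℝ) * Wg * (K : ℝ) = ((N : ℝ) * Wg * (K : ℝ)) ^ (1:ℝ) :=
            (Real.rpow_one _).symm
        _ ≤ ((N : ℝ) * Wg * (K : ℝ)) ^ p := Real.rpow_le_rpow_of_exponent_le hA1 hp
    have h4 : C₂ ^ p ≤ (max 1 C₂) ^ p :=
      Real.rpow_le_rpow hC₂.le (le_max_right _ _) hp0.le
    calc (N : ℝ) * (K : ℝ) * Wg * WW ^ p * C₂ ^ p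
        = ((N : ℝ) * Wg * (K : ℝ)) * WW ^ p * C₂ ^ p := by ring
      _ ≤ (((N : ℝ) * Wg * (K : ℝ)) ^ p) * WW ^ p * C₂ ^ p := by
          refine mul_le_mul_of_nonneg_right (mul_le_mul_of_nonneg_right h3 ?_) ?_
          · exact Real.rpow_nonneg (by linarith) p
          · exact Real.rpow_nonneg hC₂.le p
      _ ≤ (((N : ℝ) * Wg * (K : ℝ)) ^ p) * WW ^ p * (max 1 C₂) ^ p := by
          refine mul_le_mul_of_nonneg_left h4 ?_
          exact mul_nonneg (Real.rpow_nonneg (by positivity) p)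
            (Real.rpow_nonneg (by linarith) p)
      _ = C ^ p := by rw [h1, h2]
  calc ∑ i, ∫ s in Set.Ioc (t - L i) t, |Phi L θ u0 i s| ^ p
      ≤ ∑ _i : Fin N, E * ((K : ℝ) * (Wg * ∑ j, I j)) :=
        Finset.sum_le_sum fun i _ => hmain i
    _ = (N : ℝ) * (E * ((K : ℝ) * (Wg * ∑ j, I j))) := by
        rw [Finset.sum_const, Finset.card_univ, Fintype.card_fin]
        rw [nsmul_eq_mul]
    _ = ((N : ℝ) * (K : ℝ) * Wg * WW ^ p * C₂ ^ p) *
          (Real.exp (-(p * γ * t)) * ∑ j, I j) := by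
        rw [hEdef]; ring
    _ ≤ C ^ p * (Real.exp (-(p * γ * t)) * ∑ j, I j) := by
        refine mul_le_mul_of_nonneg_right hCp ?_
        exact mul_nonneg (Real.exp_pos _).le (Finset.sum_nonneg fun j _ => hIj0 j)
    _ = C ^ p * Real.exp (-(p * γ * t)) * ∑ j, I j := by ring
end

section
/- Assume |M|_{ℓ¹} ≤ 1 with m_{ij} ≠ 0 for all i, j ∈ {1,…,N}. Then there exist ρ ∈ (0, 1/2) and constants C, γ > 0 such that for every choice of measurable signals α_r : ℝ → [0,1] (r ∈ {1,…,N_d}), every i, j ∈ {1,…,N}, every 𝔫 ∈ 𝔑 for which there exists k ∈ {1,…,N} with n_k ≤ ρ |𝔫|_{ℓ¹}, every x ∈ [0, L_j], and every t ∈ ℝ, one has |θ^{(i)}_{j,𝔫,x,t}| ≤ C e^{−γ |𝔫|_{ℓ¹}}. -/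
open MeasureTheory Finset

set_option maxHeartbeats 2000000 in
/-- Exponential decay of the coefficients `θ` in the "bad" region `𝔑_b(ρ)`
(Theorem `TheoVarthetaNb`). -/
theorem stmt3 {N Nd : ℕ} (hN : 2 ≤ N) (hNd1 : 1 ≤ Nd) (hNdN : Nd ≤ N)
    (L a b : Fin N → ℝ) (m : Fin N → Fin N → ℝ)
    (hL : ∀ i, 0 < L i)
    (hab : ∀ j : Fin N, (j : ℕ) < Nd → 0 ≤ a j ∧ a j < b j ∧ b j ≤ L j)
    (hab' : ∀ j : Fin N, Nd ≤ (j : ℕ) → a j = L j ∧ b j = L j)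
    (hM : ∀ j, ∑ i, |m i j| ≤ 1)
    (hMne : ∀ i j, m i j ≠ 0) :
    ∃ ρ C γ : ℝ, ρ ∈ Set.Ioo (0:ℝ) (1/2) ∧ 0 < C ∧ 0 < γ ∧
      ∀ α : Fin N → ℝ → ℝ,
        (∀ j, Measurable (α j)) → (∀ j s, α j s ∈ Set.Icc (0:ℝ) 1) →
        (∀ j : Fin N, Nd ≤ (j : ℕ) → ∀ s, α j s = 1) →
        ∀ θ : Fin N → Fin N → (Fin N → ℕ) → ℝ → ℝ → ℝ, IsTheta L a b m α θ →
        ∀ (i j : Fin N) (n : Fin N → ℕ),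
          (∃ k : Fin N, (n k : ℝ) ≤ ρ * ∑ i, (n i : ℝ)) →
        ∀ (x t : ℝ), x ∈ Set.Icc 0 (L j) →
          |θ i j n x t| ≤ C * Real.exp (-γ * ∑ i, (n i : ℝ)) := by
  have hNpos : 0 < N := by omega
  haveI : Nonempty (Fin N) := ⟨⟨0, hNpos⟩⟩
  obtain ⟨δ, hδpos, hδ1, hδle⟩ :
      ∃ δ : ℝ, 0 < δ ∧ δ ≤ 1 ∧ ∀ i j, δ ≤ |m i j| := by
    refine ⟨Finset.univ.inf' Finset.univ_nonempty
      (fun p : Fin N × Fin N => |m p.1 p.2|), ?_, ?_, ?_⟩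
    · rw [Finset.lt_inf'_iff]
      exact fun p _ => abs_pos.mpr (hMne p.1 p.2)
    · have h2 : |m ⟨0, hNpos⟩ ⟨0, hNpos⟩| ≤ ∑ i, |m i ⟨0, hNpos⟩| :=
        Finset.single_le_sum (f := fun i => |m i (⟨0, hNpos⟩ : Fin N)|)
          (fun i _ => abs_nonneg _) (Finset.mem_univ _)
      have h1 : Finset.univ.inf' Finset.univ_nonempty
          (fun p : Fin N × Fin N => |m p.1 p.2|) ≤ |m ⟨0, hNpos⟩ ⟨0, hNpos⟩| :=
        Finset.inf'_le _ (Finset.mem_univ ((⟨0, hNpos⟩, ⟨0, hNpos⟩) : Fin N × Fin N))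
      have := hM ⟨0, hNpos⟩
      linarith
    · exact fun i j => Finset.inf'_le _ (Finset.mem_univ (i, j))
  have hhalf : (0:ℝ) < 1 - δ/2 := by linarith
  obtain ⟨β, hβpos, hexpβ⟩ :
      ∃ β : ℝ, 0 < β ∧ Real.exp β = (1 - δ/2)⁻¹ := by
    refine ⟨-Real.log (1 - δ/2), ?_, ?_⟩
    · have := Real.log_neg hhalf (by linarith)
      linarith
    · rw [Real.exp_neg, Real.exp_log hhalf]
  obtain ⟨A, hApos, hexpA⟩ :
      ∃ A : ℝ, 0 < A ∧ Real.exp (-A) = δ/2 := by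
    refine ⟨Real.log (2/δ), Real.log_pos ?_, ?_⟩
    · rw [lt_div_iff₀ hδpos]; linarith
    · rw [Real.exp_neg, Real.exp_log (by positivity), inv_div]
  have hABpos : (0:ℝ) < A + β := by linarith
  obtain ⟨ρ, hρpos, hρhalf, hρmul⟩ :
      ∃ ρ : ℝ, 0 < ρ ∧ ρ < 1/2 ∧ ρ * (A + β) ≤ β / 2 := by
    refine ⟨min (1/4) (β / (2*(A+β))),
      lt_min (by norm_num) (div_pos hβpos (by linarith)),
      lt_of_le_of_lt (min_le_left _ _) (by norm_num), ?_⟩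
    have h1 : min (1/4) (β / (2*(A+β))) ≤ β / (2*(A+β)) := min_le_right _ _
    have h2 := mul_le_mul_of_nonneg_right h1 hABpos.le
    have h3 : β / (2*(A+β)) * (A+β) = β/2 := by
      field_simp
    rw [h3] at h2
    exact h2
  refine ⟨ρ, 1, β/2, ⟨hρpos, hρhalf⟩, one_pos, half_pos hβpos, ?_⟩
  intro α hαm hα hα1 θ hθ i j n hk x t hx
  obtain ⟨k₀, hk₀⟩ := hk
  -- eps bounds
  have heps1 : ∀ (j : Fin N) n x t, eps L a b α j n x t ≤ 1 := by
    intro j n x t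
    rw [eps, Real.exp_le_one_iff, neg_nonpos]
    exact setIntegral_nonneg measurableSet_Icc (fun s _ => (hα j s).1)
  have heps0 : ∀ (j : Fin N) n x t, 0 ≤ eps L a b α j n x t :=
    fun j n x t => (Real.exp_pos _).le
  -- key inductive bound
  have key : ∀ s : ℕ, ∀ n : Fin N → ℕ, ∑ l, n l = s → ∀ (j : Fin N) (t : ℝ),
      |θ i j n (L j) t| ≤ Real.exp ((n k₀ : ℝ) * (A + β) - (s : ℝ) * β) := by
    intro s
    induction s using Nat.strong_induction_on with
    | _ s IH =>
      intro n hs j t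
      by_cases hn : n = fun _ => 0
      · have hk0 : n k₀ = 0 := by rw [hn]
        have hs0 : s = 0 := by rw [hn] at hs; simpa using hs.symm
        have hle1 : |m i j| ≤ 1 := by
          have h1 : |m i j| ≤ ∑ i, |m i j| :=
            Finset.single_le_sum (f := fun i => |m i j|)
              (fun i _ => abs_nonneg _) (Finset.mem_univ _)
          linarith [hM j]
        rw [hk0, hs0, hn, hθ.2.1]
        simpa using hle1
      · rw [hθ.2.2 i j n t hn]
        have hs1 : 1 ≤ s := by
          rcases Function.ne_iff.mp hn with ⟨l, hl⟩
          have : 1 ≤ n l := by omega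
          have : n l ≤ ∑ l, n l :=
            Finset.single_le_sum (fun _ _ => Nat.zero_le _) (Finset.mem_univ _)
          omega
        set F := Finset.univ.filter (fun k => 1 ≤ n k) with hFdef
        set T : ℝ := Real.exp ((n k₀ : ℝ) * (A + β) - (s : ℝ) * β) with hTdef
        have hTpos : 0 < T := Real.exp_pos _
        have hsum' : ∀ k, 1 ≤ n k → ∑ l, (n l - if l = k then 1 else 0) = s - 1 := by
          intro k hk
          have h1 : ∑ l, ((n l - if l = k then 1 else 0) + if l = k then 1 else 0)
              = ∑ l, n l := by
            refine Finset.sum_congr rfl fun l _ => ?_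
            by_cases h : l = k <;> simp [h] <;> omega
          rw [Finset.sum_add_distrib] at h1
          simp only [Finset.sum_ite_eq', Finset.mem_univ, if_true] at h1
          omega
        -- bound each term
        have hterm : ∀ k ∈ F,
            |m k j * θ i k (fun l => n l - if l = k then 1 else 0) 0 t| ≤
            |m k j| * Real.exp
              (((n k₀ - if k₀ = k then 1 else 0 : ℕ) : ℝ) * (A + β) - ((s:ℝ) - 1) * β) := by
          intro k hkF
          have hnk : 1 ≤ n k := (Finset.mem_filter.mp hkF).2
          have hrec := hθ.1 i k (fun l => n l - if l = k then 1 else 0) 0 t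
          have hIH := IH (s-1) (by omega) (fun l => n l - if l = k then 1 else 0)
            (hsum' k hnk) k t
          have hcast : ((s - 1 : ℕ) : ℝ) = (s : ℝ) - 1 := by
            push_cast [hs1]; ring
          rw [hcast] at hIH
          rw [abs_mul, hrec, abs_mul, abs_of_nonneg (heps0 _ _ _ _)]
          calc |m k j| * (eps L a b α k (fun l => n l - if l = k then 1 else 0) 0 t *
                  |θ i k (fun l => n l - if l = k then 1 else 0) (L k) t|)
              ≤ |m k j| * (1 * |θ i k (fun l => n l - if l = k then 1 else 0) (L k) t|) := by
                apply mul_le_mul_of_nonneg_left _ (abs_nonneg _)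
                exact mul_le_mul_of_nonneg_right (heps1 _ _ _ _) (abs_nonneg _)
            _ = |m k j| * |θ i k (fun l => n l - if l = k then 1 else 0) (L k) t| := by ring
            _ ≤ _ := mul_le_mul_of_nonneg_left hIH (abs_nonneg _)
        -- value of the exponential for k ≠ k₀ and k = k₀
        have hEne : ∀ k : Fin N, k ≠ k₀ →
            Real.exp (((n k₀ - if k₀ = k then 1 else 0 : ℕ) : ℝ) * (A + β) - ((s:ℝ) - 1) * β)
              = T * Real.exp β := by
          intro k hne
          rw [if_neg (Ne.symm hne ∘ Eq.symm ∘ Eq.symm), hTdef, ← Real.exp_add]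
          · congr 1
            simp only [Nat.sub_zero]
            ring
        have hEeq : k₀ ∈ F →
            Real.exp (((n k₀ - if k₀ = k₀ then 1 else 0 : ℕ) : ℝ) * (A + β) - ((s:ℝ) - 1) * β)
              = T * Real.exp (-A) := by
          intro hkF
          have hnk : 1 ≤ n k₀ := (Finset.mem_filter.mp hkF).2
          rw [if_pos rfl, hTdef, ← Real.exp_add]
          congr 1
          push_cast [hnk]
          ring
        have habs : |∑ k ∈ F, m k j * θ i k (fun l => n l - if l = k then 1 else 0) 0 t|
            ≤ ∑ k ∈ F, |m k j| * Real.exp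
              (((n k₀ - if k₀ = k then 1 else 0 : ℕ) : ℝ) * (A + β) - ((s:ℝ) - 1) * β) := by
          refine le_trans (Finset.abs_sum_le_sum_abs _ _) (Finset.sum_le_sum hterm)
        -- sum over F minus k₀
        have hsumF : ∀ (G : Finset (Fin N)), G ⊆ Finset.univ.erase k₀ →
            ∑ k ∈ G, |m k j| * Real.exp
              (((n k₀ - if k₀ = k then 1 else 0 : ℕ) : ℝ) * (A + β) - ((s:ℝ) - 1) * β)
            ≤ (1 - δ) * (T * Real.exp β) := by
          intro G hG
          have h1 : ∀ k ∈ G, |m k j| * Real.exp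
              (((n k₀ - if k₀ = k then 1 else 0 : ℕ) : ℝ) * (A + β) - ((s:ℝ) - 1) * β)
              = |m k j| * (T * Real.exp β) := by
            intro k hkG
            rw [hEne k (Finset.ne_of_mem_erase (hG hkG))]
          rw [Finset.sum_congr rfl h1, ← Finset.sum_mul]
          have h2 : ∑ k ∈ G, |m k j| ≤ 1 - δ := by
            have h3 : ∑ k ∈ G, |m k j| ≤ ∑ k ∈ Finset.univ.erase k₀, |m k j| :=
              Finset.sum_le_sum_of_subset_of_nonneg hG (fun k _ _ => abs_nonneg _)
            have h4 : |m k₀ j| + ∑ k ∈ Finset.univ.erase k₀, |m k j| = ∑ k, |m k j| :=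
              Finset.add_sum_erase Finset.univ (fun k => |m k j|) (Finset.mem_univ k₀)
            have := hM j
            have := hδle k₀ j
            linarith
          exact mul_le_mul_of_nonneg_right h2 (le_of_lt (mul_pos hTpos (Real.exp_pos _)))
        have hfinal : ∑ k ∈ F, |m k j| * Real.exp
              (((n k₀ - if k₀ = k then 1 else 0 : ℕ) : ℝ) * (A + β) - ((s:ℝ) - 1) * β) ≤ T := by
          by_cases hkF : k₀ ∈ F
          · rw [← Finset.add_sum_erase F _ hkF]
            beta_reduce
            have h1 : ∑ k ∈ F.erase k₀, |m k j| * Real.exp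
                (((n k₀ - if k₀ = k then 1 else 0 : ℕ) : ℝ) * (A + β) - ((s:ℝ) - 1) * β)
                ≤ (1 - δ) * (T * Real.exp β) := by
              apply hsumF
              intro k hk
              exact Finset.mem_erase.mpr ⟨(Finset.mem_erase.mp hk).1, Finset.mem_univ k⟩
            have h2 : |m k₀ j| * Real.exp
                (((n k₀ - if k₀ = k₀ then 1 else 0 : ℕ) : ℝ) * (A + β) - ((s:ℝ) - 1) * β)
                ≤ 1 * (T * Real.exp (-A)) := by
              rw [hEeq hkF]
              apply mul_le_mul_of_nonneg_right _ (le_of_lt (mul_pos hTpos (Real.exp_pos _)))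
              have h1 : |m k₀ j| ≤ ∑ i, |m i j| :=
                Finset.single_le_sum (f := fun i => |m i j|)
                  (fun i _ => abs_nonneg _) (Finset.mem_univ _)
              linarith [hM j]
            have hnum : (1 - δ) * (1 - δ/2)⁻¹ + δ/2 ≤ 1 := by
              have hinv : (1 - δ/2)⁻¹ * (1 - δ/2) = 1 := inv_mul_cancel₀ (ne_of_gt hhalf)
              nlinarith [inv_pos.mpr hhalf]
            rw [hexpβ] at h1
            rw [hexpA] at h2
            have h5 := add_le_add h2 h1
            have h6 : 1 * (T * (δ/2)) + (1 - δ) * (T * (1 - δ/2)⁻¹) ≤ T := by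
              nlinarith [hnum, hTpos]
            exact h5.trans h6
          · have hFsub : F ⊆ Finset.univ.erase k₀ := by
              intro k hk
              refine Finset.mem_erase.mpr ⟨fun h => ?_, Finset.mem_univ k⟩
              rw [h] at hk
              exact hkF hk
            have h1 := hsumF F hFsub
            rw [hexpβ] at h1
            have hnum : (1 - δ) * (1 - δ/2)⁻¹ ≤ 1 := by
              have hinv : (1 - δ/2)⁻¹ * (1 - δ/2) = 1 := inv_mul_cancel₀ (ne_of_gt hhalf)
              nlinarith [inv_pos.mpr hhalf]
            have h6 : (1 - δ) * (T * (1 - δ/2)⁻¹) ≤ T := by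
              nlinarith [hnum, hTpos]
            exact h1.trans h6
        exact le_trans habs hfinal
  -- conclude
  have hS : ((∑ l, n l : ℕ) : ℝ) = ∑ l, (n l : ℝ) := by push_cast; rfl
  set S : ℝ := ∑ l, (n l : ℝ) with hSdef
  have hS0 : 0 ≤ S := Finset.sum_nonneg fun l _ => Nat.cast_nonneg _
  have hkey := key (∑ l, n l) n rfl j t
  rw [hS] at hkey
  have hrec := hθ.1 i j n x t
  have hbound : |θ i j n x t| ≤ Real.exp ((n k₀ : ℝ) * (A + β) - S * β) := by
    rw [hrec, abs_mul, abs_of_nonneg (heps0 _ _ _ _)]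
    calc eps L a b α j n x t * |θ i j n (L j) t|
        ≤ 1 * |θ i j n (L j) t| :=
          mul_le_mul_of_nonneg_right (heps1 _ _ _ _) (abs_nonneg _)
      _ = |θ i j n (L j) t| := one_mul _
      _ ≤ _ := hkey
  rw [one_mul]
  refine le_trans hbound (Real.exp_le_exp.mpr ?_)
  have h2 : (n k₀ : ℝ) * (A + β) ≤ ρ * S * (A + β) :=
    mul_le_mul_of_nonneg_right hk₀ hABpos.le
  have h3 : ρ * (A + β) * S ≤ (β/2) * S := mul_le_mul_of_nonneg_right hρmul hS0
  nlinarith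
end

section
/- Assume |M|_{ℓ¹} ≤ 1 with m_{ij} ≠ 0 for all i, j ∈ {1,…,N}, and that there exist k₁ ∈ {1,…,N} and k₂ ∈ {1,…,N_d} with L_{k₁}/L_{k₂} irrational. Let T ≥ μ > 0 and σ ∈ (0,1). Then there exist C ≥ 1, γ > 0, and K ∈ ℕ, K ≥ 1, such that for every 𝔫 ∈ 𝔑 satisfying min_{i} n_i ≥ K and n_k > σ |𝔫|_{ℓ¹} for all k ∈ {1,…,N}, every i, j ∈ {1,…,N}, every x ∈ [0, L_j], every t ∈ ℝ, and every choice of signals α_k ∈ G(T,μ) for k ∈ {1,…,N_d}, one has |θ^{(i)}_{j,𝔫,x,t}| ≤ C e^{−γ |𝔫|_{ℓ¹}}. -/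
open MeasureTheory Finset

theorem exists_intCombination_mem_Ioo {L₁ L₂ ε : ℝ} (hirr : Irrational (L₁ / L₂)) (hε : 0 < ε) :
    ∃ p q : ℤ, p * L₁ + q * L₂ ∈ Set.Ioo 0 ε := by
  obtain ⟨h, hmem, hh⟩ := (dense_addSubgroupClosure_pair_iff.2 hirr).exists_mem_open isOpen_Ioo
    (Set.nonempty_Ioo.2 hε)
  obtain ⟨p, q, rfl⟩ := AddSubgroup.mem_closure_pair.1 hmem
  exact ⟨p, q, by simpa only [zsmul_eq_mul] using hh⟩

theorem exists_natCombination_mem_Icc {L₁ L₂ ε T : ℝ} (hirr : Irrational (L₁ / L₂)) (hε : 0 < ε) :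
    ∃ (B : ℝ) (R₀ : ℕ), ∀ u ∈ Set.Icc 0 T, ∃ q₁ q₂ : ℕ, q₁ + q₂ ≤ R₀ ∧
      q₁ * L₁ + q₂ * L₂ ∈ Set.Icc (B + u - ε) (B + u) := by
  obtain ⟨p, q, hh0, hhε⟩ := exists_intCombination_mem_Ioo hirr hε
  set h := p * L₁ + q * L₂
  set K := ⌈T / h⌉₊
  set R₁ := K * (p.natAbs + q.natAbs)
  -- `B` is large enough for `B + k * h` to have nonnegative coefficients whenever `k ≤ K`.
  refine ⟨R₁ * (L₁ + L₂), 4 * R₁, fun u ⟨hu0, huT⟩ => ?_⟩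
  set k := ⌊u / h⌋₊
  have hkh : k * h ≤ u := by
    simpa only [div_mul_cancel₀ u hh0.ne'] using
      mul_le_mul_of_nonneg_right (Nat.floor_le (div_nonneg hu0 hh0.le)) hh0.le
  have hkh' : u < k * h + h := by
    simpa only [add_one_mul, div_mul_cancel₀ u hh0.ne'] using
      mul_lt_mul_of_pos_right (Nat.lt_floor_add_one (u / h)) hh0
  have hkK : k ≤ K :=
    (Nat.floor_mono (div_le_div_of_nonneg_right huT hh0.le)).trans (Nat.floor_le_ceil _)
  have hp : |(k : ℤ) * p| ≤ R₁ := by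
    rw [abs_mul, Nat.abs_cast, ← Int.natCast_natAbs]
    exact_mod_cast Nat.mul_le_mul hkK (Nat.le_add_right _ _)
  have hq : |(k : ℤ) * q| ≤ R₁ := by
    rw [abs_mul, Nat.abs_cast, ← Int.natCast_natAbs]
    exact_mod_cast Nat.mul_le_mul hkK (Nat.le_add_left _ _)
  obtain ⟨q₁, hq₁⟩ := Int.eq_ofNat_of_zero_le (by linarith [(abs_le.1 hp).1] : 0 ≤ R₁ + k * p)
  obtain ⟨q₂, hq₂⟩ := Int.eq_ofNat_of_zero_le (by linarith [(abs_le.1 hq).1] : 0 ≤ R₁ + k * q)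
  have hsum : (q₁ : ℝ) * L₁ + q₂ * L₂ = R₁ * (L₁ + L₂) + k * h := by
    have e₁ : (q₁ : ℝ) = R₁ + k * p := by exact_mod_cast hq₁.symm
    have e₂ : (q₂ : ℝ) = R₁ + k * q := by exact_mod_cast hq₂.symm
    rw [e₁, e₂]
    ring
  refine ⟨q₁, q₂, ?_, ?_, ?_⟩
  · have : (q₁ : ℤ) + q₂ ≤ 4 * R₁ := by linarith [(abs_le.1 hp).2, (abs_le.1 hq).2]
    exact_mod_cast this
  · linarith
  · linarith

theorem PEsignal.integrableOn {T μ : ℝ} {α : ℝ → ℝ} (hα : PEsignal T μ α) {s : Set ℝ}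
    (hs : volume s ≠ ⊤) : IntegrableOn α s :=
  Measure.integrableOn_of_bounded (M := 1) hs hα.1.aestronglyMeasurable <|
    Filter.Eventually.of_forall fun x => by
      rw [Real.norm_eq_abs, abs_le]
      exact ⟨by linarith [(hα.2.1 x).1], (hα.2.1 x).2⟩

theorem PEsignal.exists_window {T μ : ℝ} {α : ℝ → ℝ} (hα : PEsignal T μ α) (hT : 0 ≤ T)
    {M : ℕ} (hM : 0 < M) (c : ℝ) :
    ∃ u ∈ Set.Icc 0 T, μ / M ≤ ∫ s in Set.Ioc (c + u) (c + u + T / M), α s := by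
  have hM' : (0 : ℝ) < M := Nat.cast_pos.2 hM
  set f : ℕ → ℝ := fun j => c + j * (T / M)
  have hsum : ∑ j ∈ range M, μ / M ≤ ∑ j ∈ range M, ∫ s in f j..f (j + 1), α s := by
    rw [intervalIntegral.sum_integral_adjacent_intervals fun j _ =>
      (intervalIntegrable_iff.2 (hα.integrableOn measure_Ioc_lt_top.ne))]
    simpa [f, mul_div_cancel₀ T hM'.ne', mul_div_cancel₀ μ hM'.ne'] using hα.2.2 c
  obtain ⟨j, hj, hjμ⟩ := exists_le_of_sum_le (nonempty_range_iff.2 hM.ne') hsum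
  have hjM : (j : ℝ) + 1 ≤ M := by exact_mod_cast mem_range.1 hj
  have hTM : 0 ≤ T / M := div_nonneg hT hM'.le
  refine ⟨j * (T / M), ⟨by positivity, ?_⟩, ?_⟩
  · calc (j : ℝ) * (T / M) ≤ M * (T / M) := mul_le_mul_of_nonneg_right (by linarith) hTM
      _ = T := mul_div_cancel₀ T hM'.ne'
  · have hfj : f (j + 1) = c + j * (T / M) + T / M := by simp only [f]; push_cast; ring
    rwa [intervalIntegral.integral_of_le (by rw [hfj]; linarith), hfj] at hjμ

theorem exists_uniform_natCombination_window {L₁ L₂ T μ ℓ : ℝ} (hirr : Irrational (L₁ / L₂))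
    (hμ : 0 < μ) (hTμ : μ ≤ T) (hℓ : 0 < ℓ) :
    ∃ (R₀ : ℕ) (μ' : ℝ), 0 < μ' ∧ ∀ α, PEsignal T μ α → ∀ c : ℝ, ∃ q₁ q₂ : ℕ, q₁ + q₂ ≤ R₀ ∧
      μ' ≤ ∫ s in Set.Icc (c + q₁ * L₁ + q₂ * L₂) (c + q₁ * L₁ + q₂ * L₂ + ℓ), α s := by
  obtain ⟨B, R₀, hnear⟩ := exists_natCombination_mem_Icc (T := T) hirr (half_pos hℓ)
  set M := max 1 ⌈2 * T / ℓ⌉₊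
  have hM : 0 < M := lt_max_of_lt_left one_pos
  have hM' : (0 : ℝ) < M := Nat.cast_pos.2 hM
  have hTM : T / M ≤ ℓ / 2 := by
    have h : 2 * T / ℓ ≤ M := (Nat.le_ceil _).trans (by exact_mod_cast le_max_right _ _)
    rw [div_le_iff₀ hℓ] at h
    rw [div_le_iff₀ hM']
    linarith
  refine ⟨R₀, μ / M, div_pos hμ hM', fun α hα c => ?_⟩
  obtain ⟨u, hu, hwin⟩ := hα.exists_window (hμ.le.trans hTμ) hM (c + B)
  obtain ⟨q₁, q₂, hq, hlo, hhi⟩ := hnear u hu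
  refine ⟨q₁, q₂, hq, hwin.trans (setIntegral_mono_set (hα.integrableOn measure_Icc_lt_top.ne)
    (Filter.Eventually.of_forall fun s => (hα.2.1 s).1) (Filter.Eventually.of_forall ?_))⟩
  rintro s ⟨hs₁, hs₂⟩
  exact ⟨by linarith, by linarith⟩

theorem abs_sum_mul_le_sub {ι : Type*} [DecidableEq ι] {s : Finset ι} {c v : ι → ℝ} {X Y : ℝ}
    {k₀ : ι} (hk₀ : k₀ ∈ s) (hc : ∑ k ∈ s, |c k| ≤ 1) (hv : ∀ k ∈ s, |v k| ≤ X) (hv₀ : |v k₀| ≤ Y) :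
    |∑ k ∈ s, c k * v k| ≤ X - |c k₀| * (X - Y) := by
  have hX : 0 ≤ X := (abs_nonneg _).trans (hv k₀ hk₀)
  calc |∑ k ∈ s, c k * v k| ≤ ∑ k ∈ s, |c k| * |v k| :=
        (abs_sum_le_sum_abs _ _).trans_eq (sum_congr rfl fun k _ => abs_mul _ _)
    _ = ∑ k ∈ s.erase k₀, |c k| * |v k| + |c k₀| * |v k₀| := (sum_erase_add _ _ hk₀).symm
    _ ≤ ∑ k ∈ s.erase k₀, |c k| * X + |c k₀| * Y := by
        gcongr with k hk
        exact hv k (mem_of_mem_erase hk)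
    _ = (∑ k ∈ s, |c k| - |c k₀|) * X + |c k₀| * Y := by
        rw [← sum_mul, ← sum_erase_add _ _ hk₀]
        ring
    _ ≤ (1 - |c k₀|) * X + |c k₀| * Y := by gcongr
    _ = X - |c k₀| * (X - Y) := by ring

theorem Lsum_sub_count {N : ℕ} (L : Fin N → ℝ) {n : Fin N → ℕ} {p : List (Fin N)}
    (hp : ∀ l, p.count l ≤ n l) :
    Lsum L (fun l => n l - p.count l) = Lsum L n - (p.map L).sum := by
  have hp_sum : (p.map L).sum = ∑ l, (p.count l : ℝ) * L l := by
    rw [sum_list_map_count]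
    simp_rw [nsmul_eq_mul]
    exact sum_subset (subset_univ _) fun l _ hl => by
      simp [List.count_eq_zero_of_not_mem (by simpa using hl)]
  simp only [Lsum, hp_sum, ← sum_sub_distrib, Nat.cast_sub (hp _), sub_mul]

theorem pow_le_inv_mul_exp_log_mul {ρ x : ℝ} (hρ0 : 0 < ρ) (hρ1 : ρ ≤ 1) {r : ℕ}
    (hx : x ≤ r + 1) : ρ ^ r ≤ ρ⁻¹ * Real.exp (Real.log ρ * x) := by
  rw [← Real.rpow_def_of_pos hρ0, le_inv_mul_iff₀ hρ0, ← pow_succ', ← Real.rpow_natCast]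
  push_cast
  exact Real.rpow_le_rpow_of_exponent_ge hρ0 hρ1 hx

section Theta

variable {N : ℕ} {L a b : Fin N → ℝ} {m : Fin N → Fin N → ℝ} {α : Fin N → ℝ → ℝ}
  {θ : Fin N → Fin N → (Fin N → ℕ) → ℝ → ℝ → ℝ}

theorem eps_pos (j : Fin N) (n : Fin N → ℕ) (x t : ℝ) : 0 < eps L a b α j n x t :=
  Real.exp_pos _

theorem eps_le_one {j : Fin N} (hα : ∀ s, 0 ≤ α j s) (n : Fin N → ℕ) (x t : ℝ) :
    eps L a b α j n x t ≤ 1 :=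
  Real.exp_le_one_iff.2 (neg_nonpos.2 (setIntegral_nonneg measurableSet_Icc fun s _ => hα s))

theorem eps_append_singleton_eq {kf : Fin N} {p : List (Fin N)} {n : Fin N → ℕ}
    (ha : 0 ≤ a kf) (hp : ∀ l, (p ++ [kf]).count l ≤ n l) (t : ℝ) :
    eps L a b α kf (fun l => n l - (p ++ [kf]).count l) 0 t =
      Real.exp (-∫ s in Set.Icc (t - Lsum L n + a kf + (p.map L).sum)
        (t - Lsum L n + a kf + (p.map L).sum + (b kf - a kf)), α kf s) := by
  rw [eps, Lsum_sub_count L hp, max_eq_right ha]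
  simp only [List.map_append, List.sum_append, List.map_cons, List.map_nil, List.sum_cons,
    List.sum_nil]
  ring_nf

theorem exists_path_eps_le {k₁ k₂ : Fin N} {R₀ : ℕ} {μ' : ℝ} (ha : 0 ≤ a k₂)
    (hwin : ∀ c : ℝ, ∃ q₁ q₂ : ℕ, q₁ + q₂ ≤ R₀ ∧ μ' ≤ ∫ s in Set.Icc (c + q₁ * L k₁ + q₂ * L k₂)
      (c + q₁ * L k₁ + q₂ * L k₂ + (b k₂ - a k₂)), α k₂ s)
    (t : ℝ) {n : Fin N → ℕ} (hn : ∀ k, R₀ + 1 ≤ n k) :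
    ∃ p : List (Fin N), p.length < R₀ + 1 ∧
      eps L a b α k₂ (fun l => n l - (p ++ [k₂]).count l) 0 t ≤ Real.exp (-μ') := by
  obtain ⟨q₁, q₂, hq, hμ'⟩ := hwin (t - Lsum L n + a k₂)
  set p := List.replicate q₁ k₁ ++ List.replicate q₂ k₂
  have hlen : p.length = q₁ + q₂ := by simp [p]
  refine ⟨p, by omega, ?_⟩
  rw [eps_append_singleton_eq ha fun l => List.count_le_length.trans <| by
    simp only [List.length_append, List.length_singleton, hlen]
    have := hn l
    omega]
  have hsum : (p.map L).sum = q₁ * L k₁ + q₂ * L k₂ := by simp [p]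
  rw [hsum, ← add_assoc]
  exact Real.exp_le_exp.2 (neg_le_neg hμ')

namespace IsTheta

theorem abs_le_abs_apply_length (hθ : IsTheta L a b m α θ) (hα : ∀ j s, 0 ≤ α j s)
    (i j : Fin N) (n : Fin N → ℕ) (x t : ℝ) : |θ i j n x t| ≤ |θ i j n (L j) t| := by
  rw [hθ.1, abs_mul, abs_of_pos (eps_pos ..)]
  exact mul_le_of_le_one_left (abs_nonneg _) (eps_le_one (hα j) ..)

theorem abs_apply_length_le_sub (hθ : IsTheta L a b m α θ) (hα : ∀ j s, 0 ≤ α j s)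
    (hM : ∀ j, ∑ k, |m k j| ≤ 1) {i : Fin N} {t : ℝ} {n : Fin N → ℕ} {k₀ : Fin N}
    (hk₀ : 1 ≤ n k₀) {X Y : ℝ}
    (hX : ∀ k, 1 ≤ n k → |θ i k (fun l => n l - if l = k then 1 else 0) (L k) t| ≤ X)
    (hY : |θ i k₀ (fun l => n l - if l = k₀ then 1 else 0) 0 t| ≤ Y) (j : Fin N) :
    |θ i j n (L j) t| ≤ X - |m k₀ j| * (X - Y) := by
  have hn : n ≠ fun _ => 0 := fun h => by simp [h] at hk₀
  rw [hθ.2.2 i j n t hn]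
  refine abs_sum_mul_le_sub (mem_filter.2 ⟨mem_univ _, hk₀⟩)
    ((sum_le_sum_of_subset_of_nonneg (filter_subset _ _) fun _ _ _ => abs_nonneg _).trans (hM j))
    (fun k hk => ?_) hY
  exact (hθ.abs_le_abs_apply_length hα ..).trans (hX k (mem_filter.1 hk).2)

theorem abs_apply_length_le_one (hθ : IsTheta L a b m α θ) (hα : ∀ j s, 0 ≤ α j s)
    (hM : ∀ j, ∑ k, |m k j| ≤ 1) (i : Fin N) (t : ℝ) (n : Fin N → ℕ) (j : Fin N) :
    |θ i j n (L j) t| ≤ 1 := by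
  induction n using WellFoundedLT.induction generalizing j with
  | _ n ih =>
  by_cases hn : n = fun _ => 0
  · subst hn
    rw [hθ.2.1]
    exact (single_le_sum (fun k _ => abs_nonneg (m k j)) (mem_univ i)).trans (hM j)
  obtain ⟨k₀, hk₀⟩ : ∃ k, n k ≠ 0 := by
    by_contra! h
    exact hn (funext h)
  have hlt : ∀ k, 1 ≤ n k → (fun l => n l - if l = k then 1 else 0) < n := fun k hk =>
    Pi.lt_def.2 ⟨fun l => Nat.sub_le _ _, k, by simp only [if_true]; omega⟩
  have hexit : ∀ k, 1 ≤ n k → |θ i k (fun l => n l - if l = k then 1 else 0) (L k) t| ≤ 1 :=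
    fun k hk => ih _ (hlt k hk) k
  simpa using hθ.abs_apply_length_le_sub hα hM (Nat.one_le_iff_ne_zero.2 hk₀) hexit
    ((hθ.abs_le_abs_apply_length hα ..).trans (hexit k₀ (Nat.one_le_iff_ne_zero.2 hk₀))) j

theorem abs_apply_length_le_mul_of_exit (hθ : IsTheta L a b m α θ) (hα : ∀ j s, 0 ≤ α j s)
    (hM : ∀ j, ∑ k, |m k j| ≤ 1) {δ D X : ℝ} (hδ : ∀ k j, δ ≤ |m k j|) (hD : 0 ≤ D)
    {i : Fin N} {t : ℝ} {n : Fin N → ℕ} {k₀ : Fin N} (hk₀ : 1 ≤ n k₀)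
    (hX : ∀ k, 1 ≤ n k → |θ i k (fun l => n l - if l = k then 1 else 0) (L k) t| ≤ X)
    (hY : |θ i k₀ (fun l => n l - if l = k₀ then 1 else 0) 0 t| ≤ (1 - D) * X) (j : Fin N) :
    |θ i j n (L j) t| ≤ (1 - δ * D) * X := by
  have hX0 : 0 ≤ X := (abs_nonneg _).trans (hX k₀ hk₀)
  calc |θ i j n (L j) t| ≤ X - |m k₀ j| * (X - (1 - D) * X) :=
        hθ.abs_apply_length_le_sub hα hM hk₀ hX hY j
    _ ≤ X - δ * (X - (1 - D) * X) :=
        sub_le_sub_left (mul_le_mul_of_nonneg_right (hδ k₀ j) (by nlinarith)) X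
    _ = (1 - δ * D) * X := by ring

-- `p ++ [kf]` is a path of successive exits from `n`, `(p ++ [kf]).count l` of them through `l`;
-- `hend` bounds the damping of its last exit by `E`.
theorem abs_apply_length_le_of_path (hθ : IsTheta L a b m α θ) (hα : ∀ j s, 0 ≤ α j s)
    (hM : ∀ j, ∑ k, |m k j| ≤ 1) {δ E X : ℝ} (hδ0 : 0 ≤ δ) (hδ : ∀ k j, δ ≤ |m k j|)
    (hE : E ≤ 1) {i : Fin N} {t : ℝ} {kf : Fin N} (p : List (Fin N)) {n : Fin N → ℕ}
    (hcount : ∀ l, (p ++ [kf]).count l ≤ n l)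
    (hX : ∀ k w, (∀ l, n l ≤ w l + (p.length + 1)) → |θ i k w (L k) t| ≤ X)
    (hend : eps L a b α kf (fun l => n l - (p ++ [kf]).count l) 0 t ≤ E) (j : Fin N) :
    |θ i j n (L j) t| ≤ (1 - δ ^ (p.length + 1) * (1 - E)) * X := by
  have hexit : ∀ {n : Fin N → ℕ} {d : ℕ},
      (∀ k w, (∀ l, n l ≤ w l + (d + 1)) → |θ i k w (L k) t| ≤ X) →
      ∀ k, 1 ≤ n k → |θ i k (fun l => n l - if l = k then 1 else 0) (L k) t| ≤ X :=
    fun hX k _ => hX k _ fun l => by split_ifs <;> omega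
  induction p generalizing n j with
  | nil =>
    have hk : 1 ≤ n kf := by simpa using hcount kf
    have hstate :
        (fun l => n l - ([] ++ [kf]).count l) = fun l => n l - if l = kf then 1 else 0 := by
      funext l
      rcases eq_or_ne l kf with rfl | h <;> simp [*, Ne.symm]
    rw [hstate] at hend
    have hY : |θ i kf (fun l => n l - if l = kf then 1 else 0) 0 t| ≤ (1 - (1 - E)) * X := by
      rw [sub_sub_cancel, hθ.1, abs_mul, abs_of_pos (eps_pos ..)]
      exact mul_le_mul hend (hexit hX kf hk) (abs_nonneg _) ((eps_pos ..).le.trans hend)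
    simpa using hθ.abs_apply_length_le_mul_of_exit hα hM hδ (sub_nonneg.2 hE) hk (hexit hX) hY j
  | cons k p ih =>
    have hk : 1 ≤ n k := (List.count_pos_iff.2 (by simp)).trans_le (hcount k)
    have hstate : ∀ l, (n l - if l = k then 1 else 0) - (p ++ [kf]).count l =
        n l - (k :: p ++ [kf]).count l := fun l => by
      simp only [List.cons_append, List.count_cons, beq_iff_eq]
      split_ifs <;> omega
    have hY : |θ i k (fun l => n l - if l = k then 1 else 0) 0 t| ≤
        (1 - δ ^ (p.length + 1) * (1 - E)) * X := by
      refine (hθ.abs_le_abs_apply_length hα ..).trans (ih (fun l => ?_) (fun k' w hw => ?_) ?_ k)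
      · have := hcount l
        simp only [List.cons_append, List.count_cons, beq_iff_eq] at this
        split_ifs at this ⊢ <;> omega
      · refine hX k' w fun l => ?_
        have := hw l
        simp only [List.length_cons]
        split_ifs at this <;> omega
      · simp only [hstate]
        exact hend
    refine (hθ.abs_apply_length_le_mul_of_exit hα hM hδ
      (mul_nonneg (pow_nonneg hδ0 _) (sub_nonneg.2 hE)) hk (hexit hX) hY j).trans_eq ?_
    simp only [List.length_cons]
    ring

theorem abs_apply_length_le_pow (hθ : IsTheta L a b m α θ) (hα : ∀ j s, 0 ≤ α j s)
    (hM : ∀ j, ∑ k, |m k j| ≤ 1) {δ E : ℝ} (hδ0 : 0 ≤ δ) (hδ1 : δ ≤ 1)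
    (hδ : ∀ k j, δ ≤ |m k j|) (hE : E ≤ 1) {i : Fin N} {t : ℝ} {R : ℕ}
    (hpath : ∀ n : Fin N → ℕ, (∀ k, R ≤ n k) → ∃ (kf : Fin N) (p : List (Fin N)),
      p.length < R ∧ eps L a b α kf (fun l => n l - (p ++ [kf]).count l) 0 t ≤ E)
    (r : ℕ) {n : Fin N → ℕ} (hn : ∀ k, r * R ≤ n k) (j : Fin N) :
    |θ i j n (L j) t| ≤ (1 - δ ^ R * (1 - E)) ^ r := by
  induction r generalizing n j with
  | zero => simpa using hθ.abs_apply_length_le_one hα hM i t n j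
  | succ r ih =>
    have hn' : ∀ k, r * R + R ≤ n k := fun k => (add_one_mul r R).symm.trans_le (hn k)
    obtain ⟨kf, p, hp, hend⟩ := hpath n fun k => (Nat.le_add_left _ _).trans (hn' k)
    have hcount : ∀ l, (p ++ [kf]).count l ≤ n l := fun l => List.count_le_length.trans <| by
      simp only [List.length_append, List.length_singleton]
      have := hn' l
      omega
    calc |θ i j n (L j) t| ≤ (1 - δ ^ (p.length + 1) * (1 - E)) * (1 - δ ^ R * (1 - E)) ^ r :=
          hθ.abs_apply_length_le_of_path hα hM hδ0 hδ hE p hcount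
            (fun k w hw => ih (fun l => by linarith [hn' l, hw l]) k) hend j
      _ ≤ (1 - δ ^ R * (1 - E)) * (1 - δ ^ R * (1 - E)) ^ r := by
          have hE0 : 0 ≤ E := (eps_pos ..).le.trans hend
          have hρ0 : 0 ≤ 1 - δ ^ R * (1 - E) := by
            nlinarith [pow_le_one₀ hδ0 hδ1 (n := R), pow_nonneg hδ0 R]
          exact mul_le_mul_of_nonneg_right (sub_le_sub_left (mul_le_mul_of_nonneg_right
            (pow_le_pow_of_le_one hδ0 hδ1 hp) (sub_nonneg.2 hE)) 1) (pow_nonneg hρ0 r)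
      _ = _ := (pow_succ' _ _).symm

theorem abs_le_inv_mul_exp (hθ : IsTheta L a b m α θ) (hα : ∀ j s, 0 ≤ α j s)
    (hM : ∀ j, ∑ k, |m k j| ≤ 1) {δ E : ℝ} (hδ0 : 0 ≤ δ) (hδ1 : δ ≤ 1)
    (hδ : ∀ k j, δ ≤ |m k j|) (hE : E ≤ 1) {i : Fin N} {t : ℝ} {R : ℕ} (hR : 0 < R)
    (hpath : ∀ n : Fin N → ℕ, (∀ k, R ≤ n k) → ∃ (kf : Fin N) (p : List (Fin N)),
      p.length < R ∧ eps L a b α kf (fun l => n l - (p ++ [kf]).count l) 0 t ≤ E)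
    (hρ : 0 < 1 - δ ^ R * (1 - E)) {σ : ℝ} (hσ : 0 ≤ σ) {n : Fin N → ℕ}
    (hn : ∀ k, σ * ∑ l, (n l : ℝ) < n k) (j : Fin N) (x : ℝ) :
    |θ i j n x t| ≤ (1 - δ ^ R * (1 - E))⁻¹ *
      Real.exp (-(-Real.log (1 - δ ^ R * (1 - E)) * σ / R) * ∑ l, (n l : ℝ)) := by
  set ρ := 1 - δ ^ R * (1 - E)
  have hR' : (0 : ℝ) < R := Nat.cast_pos.2 hR
  set r := ⌊σ * (∑ l, (n l : ℝ)) / R⌋₊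
  have hr : ∀ k, r * R ≤ n k := fun k => by
    have : (r : ℝ) * R ≤ σ * ∑ l, (n l : ℝ) :=
      (le_div_iff₀ hR').1 (Nat.floor_le (div_nonneg (mul_nonneg hσ (by positivity)) hR'.le))
    exact_mod_cast this.trans (hn k).le
  calc |θ i j n x t| ≤ |θ i j n (L j) t| := hθ.abs_le_abs_apply_length hα ..
    _ ≤ ρ ^ r := hθ.abs_apply_length_le_pow hα hM hδ0 hδ1 hδ hE hpath r hr j
    _ ≤ ρ⁻¹ * Real.exp (Real.log ρ * (σ * (∑ l, (n l : ℝ)) / R)) :=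
        pow_le_inv_mul_exp_log_mul hρ (by have := pow_nonneg hδ0 R; nlinarith)
          (Nat.lt_floor_add_one _).le
    _ = ρ⁻¹ * Real.exp (-(-Real.log ρ * σ / R) * ∑ l, (n l : ℝ)) := by congr 2; ring

end IsTheta

end Theta

theorem stmt4_general {N Nd : ℕ}
    (L a b : Fin N → ℝ) (m : Fin N → Fin N → ℝ)
    (hab : ∀ j : Fin N, (j : ℕ) < Nd → 0 ≤ a j ∧ a j < b j ∧ b j ≤ L j)
    (hM : ∀ j, ∑ i, |m i j| ≤ 1)
    (hMne : ∀ i j, m i j ≠ 0)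
    (k₁ k₂ : Fin N) (hk₂ : (k₂ : ℕ) < Nd) (hirr : Irrational (L k₁ / L k₂))
    (T μ : ℝ) (hμ : 0 < μ) (hTμ : μ ≤ T)
    (σ : ℝ) (hσ : σ ∈ Set.Ioo (0:ℝ) 1) :
    ∃ (C γ : ℝ) (K : ℕ), 1 ≤ C ∧ 0 < γ ∧ 1 ≤ K ∧
      ∀ n : Fin N → ℕ, (∀ i, K ≤ n i) → (∀ k, σ * ∑ i, (n i : ℝ) < n k) →
      ∀ (i j : Fin N) (x t : ℝ), x ∈ Set.Icc 0 (L j) →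
      ∀ α : Fin N → ℝ → ℝ,
        (∀ k : Fin N, (k : ℕ) < Nd → PEsignal T μ (α k)) →
        (∀ j : Fin N, Nd ≤ (j : ℕ) → ∀ s, α j s = 1) →
        (∀ j, Measurable (α j)) → (∀ j s, α j s ∈ Set.Icc (0:ℝ) 1) →
        ∀ θ : Fin N → Fin N → (Fin N → ℕ) → ℝ → ℝ → ℝ, IsTheta L a b m α θ →
          |θ i j n x t| ≤ C * Real.exp (-γ * ∑ i, (n i : ℝ)) := by
  obtain ⟨ha₂, hab₂, -⟩ := hab k₂ hk₂
  obtain ⟨R₀, μ', hμ', hwin⟩ := exists_uniform_natCombination_window hirr hμ hTμ (sub_pos.2 hab₂)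
  obtain ⟨⟨k₀, j₀⟩, -, hδ⟩ := exists_min_image univ (fun kj : Fin N × Fin N => |m kj.1 kj.2|)
    ⟨(k₁, k₁), mem_univ _⟩
  set δ := |m k₀ j₀|
  set R := R₀ + 1
  set ρ := 1 - δ ^ R * (1 - Real.exp (-μ'))
  have hδ0 : 0 < δ := abs_pos.2 (hMne k₀ j₀)
  have hδ1 : δ ≤ 1 := (single_le_sum (fun k _ => abs_nonneg (m k j₀)) (mem_univ k₀)).trans (hM j₀)
  have hE1 : Real.exp (-μ') < 1 := Real.exp_lt_one_iff.2 (neg_lt_zero.2 hμ')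
  have hρ0 : 0 < ρ := by nlinarith [pow_le_one₀ hδ0.le hδ1 (n := R), Real.exp_pos (-μ')]
  have hρ1 : ρ < 1 := by nlinarith [pow_pos hδ0 R]
  refine ⟨ρ⁻¹, -Real.log ρ * σ / R, 1, one_le_inv₀ hρ0 |>.2 hρ1.le,
    div_pos (mul_pos (neg_pos.2 (Real.log_neg hρ0 hρ1)) hσ.1) (Nat.cast_pos.2 R₀.succ_pos), le_rfl,
    fun n _ hcentral i j x t _ α hPE _ _ hα θ hθ => ?_⟩
  refine hθ.abs_le_inv_mul_exp (fun j s => (hα j s).1) hM hδ0.le hδ1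
    (fun k j => hδ (k, j) (mem_univ _)) hE1.le R₀.succ_pos (fun n' hn' => ?_) hρ0 hσ.1.le
    hcentral j x
  exact ⟨k₂, exists_path_eps_le ha₂ (hwin (α k₂) (hPE k₂ hk₂)) t hn'⟩

/-- Exponential decay of the coefficients `θ` in the "central" region `𝔑_c(σ)`
(Theorem `TheoEstimMiddle`). -/
theorem stmt4 {N Nd : ℕ} (hN : 2 ≤ N) (hNd1 : 1 ≤ Nd) (hNdN : Nd ≤ N)
    (L a b : Fin N → ℝ) (m : Fin N → Fin N → ℝ)
    (hL : ∀ i, 0 < L i)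
    (hab : ∀ j : Fin N, (j : ℕ) < Nd → 0 ≤ a j ∧ a j < b j ∧ b j ≤ L j)
    (hab' : ∀ j : Fin N, Nd ≤ (j : ℕ) → a j = L j ∧ b j = L j)
    (hM : ∀ j, ∑ i, |m i j| ≤ 1)
    (hMne : ∀ i j, m i j ≠ 0)
    (k₁ k₂ : Fin N) (hk₂ : (k₂ : ℕ) < Nd) (hirr : Irrational (L k₁ / L k₂))
    (T μ : ℝ) (hμ : 0 < μ) (hTμ : μ ≤ T)
    (σ : ℝ) (hσ : σ ∈ Set.Ioo (0:ℝ) 1) :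
    ∃ (C γ : ℝ) (K : ℕ), 1 ≤ C ∧ 0 < γ ∧ 1 ≤ K ∧
      ∀ n : Fin N → ℕ, (∀ i, K ≤ n i) → (∀ k, σ * ∑ i, (n i : ℝ) < n k) →
      ∀ (i j : Fin N) (x t : ℝ), x ∈ Set.Icc 0 (L j) →
      ∀ α : Fin N → ℝ → ℝ,
        (∀ k : Fin N, (k : ℕ) < Nd → PEsignal T μ (α k)) →
        (∀ j : Fin N, Nd ≤ (j : ℕ) → ∀ s, α j s = 1) →
        (∀ j, Measurable (α j)) → (∀ j s, α j s ∈ Set.Icc (0:ℝ) 1) →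
        ∀ θ : Fin N → Fin N → (Fin N → ℕ) → ℝ → ℝ → ℝ, IsTheta L a b m α θ →
          |θ i j n x t| ≤ C * Real.exp (-γ * ∑ i, (n i : ℝ)) :=
  stmt4_general L a b m hab hM hMne k₁ k₂ hk₂ hirr T μ hμ hTμ σ hσ
end

section
/- Let K ∈ ℕ with K ≥ 1 and let 𝔫 ∈ 𝔑 be such that |𝔫|_{ℓ¹} ≥ K. Then for every i, j ∈ {1,…,N} and t ∈ ℝ, one has θ^{(i)}_{j,𝔫,L_j,t} = ∑_{v ∈ Φ_K(𝔫)} [ (m_{v_1 j} ∏_{s=2}^K m_{v_s v_{s−1}}) · (∏_{s=1}^K ε_{v_s, 𝔫 − ∑_{r=1}^s 𝟏_{v_r}, 0, t}) · θ^{(i)}_{v_K, 𝔫 − ∑_{s=1}^K 𝟏_{v_s}, L_{v_K}, t} ]. -/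
open MeasureTheory Finset

lemma snoc_mk_lt {K : ℕ} {β : Sort*} (v : Fin K → β) (k : β) (A : ℕ) (h : A < K) (h' : A < K + 1) :
    Fin.snoc (α := fun _ => _) v k ⟨A, h'⟩ = v ⟨A, h⟩ := by
  have : (⟨A, h'⟩ : Fin (K+1)) = Fin.castSucc ⟨A, h⟩ := rfl
  rw [this, Fin.snoc_castSucc]

lemma card_filter_snoc {K N : ℕ} (v : Fin K → Fin N) (k l : Fin N) :
    (Finset.univ.filter (fun s : Fin (K+1) => Fin.snoc (α := fun _ => _) v k s = l)).card
      = (Finset.univ.filter (fun s : Fin K => v s = l)).card + (if k = l then 1 else 0) := by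
  rw [Finset.card_filter, Finset.card_filter, Fin.sum_univ_castSucc]
  simp [Fin.snoc_castSucc, Fin.snoc_last]

lemma card_filter_le_castSucc {K N : ℕ} (v : Fin K → Fin N) (k : Fin N) (s : Fin K) (l : Fin N) :
    (Finset.univ.filter (fun r : Fin (K+1) => r ≤ Fin.castSucc s ∧ Fin.snoc (α := fun _ => _) v k r = l)).card
      = (Finset.univ.filter (fun r : Fin K => r ≤ s ∧ v r = l)).card := by
  rw [Finset.card_filter, Finset.card_filter, Fin.sum_univ_castSucc]
  have hlast : ¬ (Fin.last K ≤ Fin.castSucc s) := by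
    simp [Fin.le_def]
  simp [Fin.snoc_castSucc, hlast, Fin.castSucc_le_castSucc_iff]

lemma card_filter_le_last {K N : ℕ} (v : Fin K → Fin N) (k l : Fin N) :
    (Finset.univ.filter (fun r : Fin (K+1) => r ≤ Fin.last K ∧ Fin.snoc (α := fun _ => _) v k r = l)).card
      = (Finset.univ.filter (fun s : Fin K => v s = l)).card + (if k = l then 1 else 0) := by
  rw [← card_filter_snoc]
  congr 1
  apply Finset.filter_congr
  intro r _
  simp [Fin.le_last]

lemma count_sum {K N : ℕ} (v : Fin K → Fin N) :
    ∑ l, (Finset.univ.filter (fun s : Fin K => v s = l)).card = K := by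
  have := Finset.card_eq_sum_card_fiberwise (s := (Finset.univ : Finset (Fin K)))
    (t := Finset.univ) (f := v) (fun x _ => Finset.mem_univ _)
  simpa using this.symm

set_option maxHeartbeats 1000000 in
/-- `K`-step recursive formula for the coefficients `θ` (Proposition `PropAverage`). -/
theorem stmt6 {N Nd : ℕ} (hN : 2 ≤ N) (hNd1 : 1 ≤ Nd) (hNdN : Nd ≤ N)
    (L a b : Fin N → ℝ) (m : Fin N → Fin N → ℝ)
    (hL : ∀ i, 0 < L i)
    (hab : ∀ j : Fin N, (j : ℕ) < Nd → 0 ≤ a j ∧ a j < b j ∧ b j ≤ L j)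
    (hab' : ∀ j : Fin N, Nd ≤ (j : ℕ) → a j = L j ∧ b j = L j)
    (α : Fin N → ℝ → ℝ)
    (hαmeas : ∀ j, Measurable (α j)) (hα01 : ∀ j s, α j s ∈ Set.Icc (0:ℝ) 1)
    (hα1 : ∀ j : Fin N, Nd ≤ (j : ℕ) → ∀ s, α j s = 1)
    (θ : Fin N → Fin N → (Fin N → ℕ) → ℝ → ℝ → ℝ) (hθ : IsTheta L a b m α θ)
    (K : ℕ) (hK : 1 ≤ K) (n : Fin N → ℕ) (hn : K ≤ ∑ i, n i)
    (i j : Fin N) (t : ℝ) :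
    θ i j n (L j) t =
      ∑ v ∈ Finset.univ.filter (fun v : Fin K → Fin N =>
          ∀ l, (Finset.univ.filter (fun s : Fin K => v s = l)).card ≤ n l),
        (∏ s : Fin K, m (v s)
            (if h : (s : ℕ) = 0 then j else v ⟨(s : ℕ) - 1, by have := s.isLt; omega⟩)) *
        (∏ s : Fin K, eps L a b α (v s)
            (fun l => n l - (Finset.univ.filter (fun r : Fin K => r ≤ s ∧ v r = l)).card) 0 t) *
        θ i (v ⟨K - 1, by omega⟩)
          (fun l => n l - (Finset.univ.filter (fun r : Fin K => v r = l)).card)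
          (L (v ⟨K - 1, by omega⟩)) t := by
  obtain ⟨hrec1, hrec2, hrec3⟩ := hθ
  induction K, hK using Nat.le_induction generalizing n with
  | base =>
    have hne : n ≠ (fun _ => 0) := by
      intro h
      rw [h] at hn
      simp at hn
    rw [hrec3 i j n t hne]
    refine Finset.sum_nbij' (fun k => (fun _ : Fin 1 => k)) (fun v => v 0) ?_ ?_ ?_ ?_ ?_
    · intro k hk
      simp only [Finset.mem_filter, Finset.mem_univ, true_and] at hk ⊢
      intro l
      have hcard : (Finset.univ.filter (fun s : Fin 1 => k = l)).card = if k = l then 1 else 0 := by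
        rw [Finset.card_filter, Fin.sum_univ_one]
      rw [hcard]
      by_cases h : k = l
      · subst h; simpa using hk
      · simp [h]
    · intro v hv
      simp only [Finset.mem_filter, Finset.mem_univ, true_and] at hv ⊢
      have := hv (v 0)
      rw [Finset.card_filter, Fin.sum_univ_one] at this
      simpa using this
    · intro k _; rfl
    · intro v _
      funext s
      exact congrArg v (Subsingleton.elim _ _)
    · intro k hk
      simp only [Finset.mem_filter, Finset.mem_univ, true_and] at hk
      rw [hrec1 i k _ 0 t]
      rw [Fin.prod_univ_one, Fin.prod_univ_one]
      have h1 : (fun l => n l - (Finset.univ.filter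
          (fun r : Fin 1 => r ≤ (0 : Fin 1) ∧ k = l)).card)
          = fun l => n l - if l = k then 1 else 0 := by
        funext l
        rw [Finset.card_filter, Fin.sum_univ_one]
        congr 1
        simp [eq_comm]
      have h2 : (fun l => n l - (Finset.univ.filter
          (fun r : Fin 1 => k = l)).card)
          = fun l => n l - if l = k then 1 else 0 := by
        funext l
        rw [Finset.card_filter, Fin.sum_univ_one]
        congr 1
        simp [eq_comm]
      simp only [h1, h2, Fin.val_zero, reduceDIte]
      ring
  | succ K hK ih =>
    have hKn : K ≤ ∑ i, n i := by omega
    rw [ih n hKn]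
    have expand : ∀ v ∈ Finset.univ.filter (fun v : Fin K → Fin N =>
          ∀ l, (Finset.univ.filter (fun s : Fin K => v s = l)).card ≤ n l),
        (∏ s : Fin K, m (v s)
            (if h : (s : ℕ) = 0 then j else v ⟨(s : ℕ) - 1, by have := s.isLt; omega⟩)) *
        (∏ s : Fin K, eps L a b α (v s)
            (fun l => n l - (Finset.univ.filter (fun r : Fin K => r ≤ s ∧ v r = l)).card) 0 t) *
        θ i (v ⟨K - 1, by omega⟩)
          (fun l => n l - (Finset.univ.filter (fun r : Fin K => v r = l)).card)
          (L (v ⟨K - 1, by omega⟩)) t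
        = ∑ k ∈ Finset.univ.filter (fun k =>
              1 ≤ n k - (Finset.univ.filter (fun s : Fin K => v s = k)).card),
            (∏ s : Fin K, m (v s)
                (if h : (s : ℕ) = 0 then j else v ⟨(s : ℕ) - 1, by have := s.isLt; omega⟩)) *
            (∏ s : Fin K, eps L a b α (v s)
                (fun l => n l - (Finset.univ.filter (fun r : Fin K => r ≤ s ∧ v r = l)).card) 0 t) *
            (m k (v ⟨K - 1, by omega⟩) *
              (eps L a b α k
                (fun l => (n l - (Finset.univ.filter (fun r : Fin K => v r = l)).card)
                  - if l = k then 1 else 0) 0 t *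
               θ i k
                (fun l => (n l - (Finset.univ.filter (fun r : Fin K => v r = l)).card)
                  - if l = k then 1 else 0) (L k) t)) := by
      intro v hv
      simp only [Finset.mem_filter, Finset.mem_univ, true_and] at hv
      have hcnt := count_sum v
      have hsplit : ∑ l, ((Finset.univ.filter (fun s : Fin K => v s = l)).card
          + (n l - (Finset.univ.filter (fun s : Fin K => v s = l)).card)) = ∑ l, n l :=
        Finset.sum_congr rfl (fun l _ => Nat.add_sub_cancel' (hv l))
      rw [Finset.sum_add_distrib, hcnt] at hsplit
      have hne : (fun l => n l - (Finset.univ.filter (fun r : Fin K => v r = l)).card)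
          ≠ (fun _ => 0) := by
        intro h
        have h2 : ∑ l, (n l - (Finset.univ.filter (fun r : Fin K => v r = l)).card) = 0 := by
          rw [h]; simp
        omega
      rw [hrec3 i _ _ t hne, Finset.mul_sum]
      beta_reduce
      refine Finset.sum_congr rfl fun k hk => ?_
      rw [hrec1 i k _ 0 t]
    rw [Finset.sum_congr rfl expand, Finset.sum_sigma']
    refine Finset.sum_nbij' (fun x => Fin.snoc (α := fun _ => Fin N) x.1 x.2)
      (fun w => ⟨fun s => w (Fin.castSucc s), w (Fin.last K)⟩) ?_ ?_ ?_ ?_ ?_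
    · rintro ⟨v, k⟩ hx
      simp only [Finset.mem_sigma, Finset.mem_filter, Finset.mem_univ, true_and] at hx ⊢
      obtain ⟨hv, hk⟩ := hx
      intro l
      rw [card_filter_snoc]
      rcases eq_or_ne k l with h | h
      · subst h
        have h1 := hv k
        simp only [eq_self_iff_true, if_true]
        omega
      · simpa [h] using hv l
    · intro w hw
      simp only [Finset.mem_filter, Finset.mem_univ, true_and] at hw
      simp only [Finset.mem_sigma, Finset.mem_filter, Finset.mem_univ, true_and]
      have hsnoc : Fin.snoc (α := fun _ => Fin N) (fun s => w (Fin.castSucc s)) (w (Fin.last K)) = w :=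
        Fin.snoc_init_self w
      have hcard : ∀ l, (Finset.univ.filter (fun s : Fin (K+1) => w s = l)).card
          = (Finset.univ.filter (fun s : Fin K => w (Fin.castSucc s) = l)).card
            + (if w (Fin.last K) = l then 1 else 0) := by
        intro l
        conv_lhs => rw [← hsnoc]
        rw [card_filter_snoc]
      constructor
      · intro l
        have h1 := hw l
        rw [hcard l] at h1
        rcases eq_or_ne (w (Fin.last K)) l with h | h
        · simp only [if_pos h] at h1; omega
        · simpa [h] using h1
      · have h1 := hw (w (Fin.last K))
        rw [hcard _] at h1
        simp only [eq_self_iff_true, if_true] at h1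
        omega
    · rintro ⟨v, k⟩ _
      simp only [Fin.snoc_castSucc, Fin.snoc_last]
    · exact fun w _ => Fin.snoc_init_self w
    · rintro ⟨v, k⟩ hx
      have hlast_idx : (⟨K + 1 - 1, by omega⟩ : Fin (K + 1)) = Fin.last K := by
        apply Fin.ext; simp
      have hm : (∏ s : Fin (K + 1), m (Fin.snoc (α := fun _ => Fin N) v k s)
          (if h : (s : ℕ) = 0 then j
           else Fin.snoc (α := fun _ => Fin N) v k ⟨(s : ℕ) - 1, by have := s.isLt; omega⟩))
          = (∏ s : Fin K, m (v s)
              (if h : (s : ℕ) = 0 then j else v ⟨(s : ℕ) - 1, by have := s.isLt; omega⟩))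
            * m k (v ⟨K - 1, by omega⟩) := by
        rw [Fin.prod_univ_castSucc]
        congr 1
        · refine Finset.prod_congr rfl fun s _ => ?_
          rw [Fin.snoc_castSucc]
          congr 1
          simp only [Fin.coe_castSucc]
          by_cases h : (s : ℕ) = 0
          · rw [dif_pos h, dif_pos h]
          · rw [dif_neg h, dif_neg h]
            exact snoc_mk_lt v k _ (by omega) _
        · rw [Fin.snoc_last]
          congr 1
          rw [dif_neg (by simp [Fin.val_last]; omega)]
          exact snoc_mk_lt v k _ (by omega) _
      have heps : (∏ s : Fin (K + 1), eps L a b α (Fin.snoc (α := fun _ => Fin N) v k s)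
          (fun l => n l - (Finset.univ.filter
            (fun r : Fin (K + 1) => r ≤ s ∧ Fin.snoc (α := fun _ => Fin N) v k r = l)).card) 0 t)
          = (∏ s : Fin K, eps L a b α (v s)
              (fun l => n l - (Finset.univ.filter (fun r : Fin K => r ≤ s ∧ v r = l)).card) 0 t)
            * eps L a b α k
                (fun l => (n l - (Finset.univ.filter (fun r : Fin K => v r = l)).card)
                  - if l = k then 1 else 0) 0 t := by
        rw [Fin.prod_univ_castSucc, Fin.snoc_last]
        refine congrArg₂ (· * ·) ?_ ?_
        · refine Finset.prod_congr rfl fun s _ => ?_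
          rw [Fin.snoc_castSucc]
          refine congrArg (fun nn : Fin N → ℕ => eps L a b α (v s) nn 0 t) ?_
          funext l
          rw [card_filter_le_castSucc]
        · refine congrArg (fun nn : Fin N → ℕ => eps L a b α k nn 0 t) ?_
          funext l
          rw [card_filter_le_last]
          by_cases h : k = l
          · simp only [if_pos h, if_pos h.symm]; omega
          · simp only [if_neg h, if_neg (Ne.symm h)]; omega
      have hargθ : (fun l => n l - (Finset.univ.filter
            (fun r : Fin (K + 1) => Fin.snoc (α := fun _ => Fin N) v k r = l)).card)
          = (fun l => (n l - (Finset.univ.filter (fun r : Fin K => v r = l)).card)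
              - if l = k then 1 else 0) := by
        funext l
        rw [card_filter_snoc]
        by_cases h : k = l
        · simp only [if_pos h, if_pos h.symm]; omega
        · simp only [if_neg h, if_neg (Ne.symm h)]; omega
      rw [hlast_idx]
      beta_reduce
      rw [Fin.snoc_last, hm, heps, hargθ]
      ring
end

section
/- Suppose |M|_{ℓ¹} ≤ 1 and m_{ij} ≠ 0 for every i, j ∈ {1,…,N}. Then there exists ν ∈ (0,1) such that for every i, j, k ∈ {1,…,N}, every 𝔫 ∈ 𝔑, every x ∈ [0, L_j], every t ∈ ℝ, and every choice of measurable signals α_r : ℝ → [0,1] (r ∈ {1,…,N_d}), one has |θ^{(i)}_{j,𝔫,x,t}| ≤ C(|𝔫|_{ℓ¹}, n_k) · ν^{|𝔫|_{ℓ¹}}, where C(n, m) denotes the binomial coefficient n choose m. -/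
open MeasureTheory Finset

/-- Binomial estimate for the coefficients `θ` (Lemma `CoroBinBound`). -/
theorem stmt10 {N Nd : ℕ} (hN : 2 ≤ N) (hNd1 : 1 ≤ Nd) (hNdN : Nd ≤ N)
    (L a b : Fin N → ℝ) (m : Fin N → Fin N → ℝ)
    (hL : ∀ i, 0 < L i)
    (hab : ∀ j : Fin N, (j : ℕ) < Nd → 0 ≤ a j ∧ a j < b j ∧ b j ≤ L j)
    (hab' : ∀ j : Fin N, Nd ≤ (j : ℕ) → a j = L j ∧ b j = L j)
    (hM : ∀ j, ∑ i, |m i j| ≤ 1)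
    (hMne : ∀ i j, m i j ≠ 0) :
    ∃ ν : ℝ, ν ∈ Set.Ioo (0:ℝ) 1 ∧
      ∀ α : Fin N → ℝ → ℝ,
        (∀ j, Measurable (α j)) → (∀ j s, α j s ∈ Set.Icc (0:ℝ) 1) →
        (∀ j : Fin N, Nd ≤ (j : ℕ) → ∀ s, α j s = 1) →
        ∀ θ : Fin N → Fin N → (Fin N → ℕ) → ℝ → ℝ → ℝ, IsTheta L a b m α θ →
        ∀ (i j k : Fin N) (n : Fin N → ℕ) (x t : ℝ), x ∈ Set.Icc 0 (L j) →
          |θ i j n x t| ≤ ((∑ i', n i').choose (n k) : ℝ) * ν ^ (∑ i', n i') := by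
  classical
  haveI : Nonempty (Fin N) := ⟨⟨0, by omega⟩⟩
  haveI : Nontrivial (Fin N) := Fin.nontrivial_iff_two_le.mpr hN
  set δ : ℝ := Finset.univ.inf' Finset.univ_nonempty
    (fun p : Fin N × Fin N => |m p.1 p.2|) with hδdef
  have hδ_le : ∀ i j, δ ≤ |m i j| := fun i j => Finset.inf'_le _ (Finset.mem_univ (i, j))
  have hδpos : 0 < δ := by
    rw [hδdef, Finset.lt_inf'_iff]
    intro p _
    exact abs_pos.mpr (hMne p.1 p.2)
  have hmle : ∀ kk jj : Fin N, |m kk jj| ≤ 1 - δ := by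
    intro kk jj
    obtain ⟨i', hi'⟩ := exists_ne kk
    have h2 : |m kk jj| + |m i' jj| ≤ ∑ i, |m i jj| := by
      have h := Finset.sum_le_sum_of_subset_of_nonneg (Finset.subset_univ {kk, i'})
        (fun i _ _ => abs_nonneg (m i jj))
      rwa [Finset.sum_pair (Ne.symm hi')] at h
    have h3 := hδ_le i' jj
    have h4 := hM jj
    linarith
  have hδ_half : δ ≤ 1 - δ :=
    le_trans (hδ_le (Classical.arbitrary _) (Classical.arbitrary _))
      (hmle _ _)
  refine ⟨1 - δ, ⟨by linarith, by linarith⟩, ?_⟩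
  intro α hαm hα01 _ θ hθ
  obtain ⟨hθ1, hθ2, hθ3⟩ := hθ
  have heps_nonneg : ∀ jj nn xx tt, 0 ≤ eps L a b α jj nn xx tt :=
    fun jj nn xx tt => (Real.exp_pos _).le
  have heps_le : ∀ jj nn xx tt, eps L a b α jj nn xx tt ≤ 1 := by
    intro jj nn xx tt
    have h0 : (0:ℝ) ≤ ∫ s in Set.Icc (tt - Lsum L nn - L jj + max xx (a jj))
        (tt - Lsum L nn - L jj + b jj), α jj s :=
      MeasureTheory.setIntegral_nonneg measurableSet_Icc (fun s _ => (hα01 jj s).1)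
    calc eps L a b α jj nn xx tt ≤ Real.exp 0 := Real.exp_le_exp.mpr (by linarith)
      _ = 1 := Real.exp_zero
  suffices H : ∀ s : ℕ, ∀ n : Fin N → ℕ, ∑ i', n i' = s →
      ∀ (i j k : Fin N) (x t : ℝ), x ∈ Set.Icc 0 (L j) →
      |θ i j n x t| ≤ (s.choose (n k) : ℝ) * (1 - δ) ^ s by
    intro i j k n x t hx
    exact H _ n rfl i j k x t hx
  intro s
  induction s using Nat.strong_induction_on with
  | _ s IH =>
  intro n hn i j k x t hx
  have hred : |θ i j n x t| ≤ |θ i j n (L j) t| := by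
    rw [hθ1 i j n x t, abs_mul, abs_of_nonneg (heps_nonneg j n x t)]
    exact mul_le_of_le_one_left (abs_nonneg _) (heps_le j n x t)
  refine hred.trans ?_
  cases s with
  | zero =>
    have hn0 : n = fun _ => 0 := funext fun l =>
      (Finset.sum_eq_zero_iff.mp hn) l (Finset.mem_univ l)
    rw [hn0, hθ2]
    simp only [Nat.choose_self, Nat.cast_one, pow_zero, mul_one, Nat.choose_zero_right]
    calc |m i j| ≤ ∑ i', |m i' j| :=
          Finset.single_le_sum (f := fun i' => |m i' j|) (fun _ _ => abs_nonneg _)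
            (Finset.mem_univ i)
      _ ≤ 1 := hM j
  | succ s' =>
    have hne0 : n ≠ fun _ => 0 := by
      intro h
      rw [h] at hn
      simp at hn
    rw [hθ3 i j n t hne0]
    set S := Finset.univ.filter (fun k' => 1 ≤ n k') with hSdef
    have hsum' : ∀ k' ∈ S, ∑ l, (n l - if l = k' then 1 else 0) = s' := by
      intro k' hk'
      have hk1 : 1 ≤ n k' := (Finset.mem_filter.mp hk').2
      have key : ∑ l, n l = (∑ l, (n l - if l = k' then 1 else 0)) + 1 := by
        have h1 : ∀ l ∈ Finset.univ, n l =
            (n l - if l = k' then 1 else 0) + (if l = k' then 1 else 0) := by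
          intro l _
          by_cases h : l = k' <;> simp [h] <;> omega
        rw [Finset.sum_congr rfl h1, Finset.sum_add_distrib,
          Finset.sum_ite_eq' Finset.univ k' (fun _ => 1)]
        simp
      omega
    have hIH : ∀ k' ∈ S, |θ i k' (fun l => n l - if l = k' then 1 else 0) 0 t| ≤
        ((s'.choose (n k - if k = k' then 1 else 0)) : ℝ) * (1 - δ) ^ s' := by
      intro k' hk'
      simpa using IH s' (Nat.lt_succ_self s') _ (hsum' k' hk') i k' k 0 t
        ⟨le_refl 0, (hL k').le⟩
    have hstep : |∑ k' ∈ S, m k' j * θ i k' (fun l => n l - if l = k' then 1 else 0) 0 t| ≤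
        ∑ k' ∈ S, |m k' j| *
          (((s'.choose (n k - if k = k' then 1 else 0)) : ℝ) * (1 - δ) ^ s') := by
      refine (Finset.abs_sum_le_sum_abs _ _).trans (Finset.sum_le_sum ?_)
      intro k' hk'
      rw [abs_mul]
      exact mul_le_mul_of_nonneg_left (hIH k' hk') (abs_nonneg _)
    refine hstep.trans ?_
    have hkey : ∑ k' ∈ S, |m k' j| * ((s'.choose (n k - if k = k' then 1 else 0)) : ℝ) ≤
        (((s'+1).choose (n k)) : ℝ) * (1 - δ) := by
      by_cases hkS : k ∈ S
      · have hk1 : 1 ≤ n k := (Finset.mem_filter.mp hkS).2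
        rw [← Finset.add_sum_erase S _ hkS]
        have herase : ∀ k' ∈ S.erase k,
            |m k' j| * ((s'.choose (n k - if k = k' then 1 else 0)) : ℝ) =
            |m k' j| * (s'.choose (n k) : ℝ) := by
          intro k' hk'
          have hne : k ≠ k' := fun h => (Finset.ne_of_mem_erase hk') h.symm
          simp [hne]
        rw [Finset.sum_congr rfl herase, ← Finset.sum_mul]
        have hw : ∑ k' ∈ S.erase k, |m k' j| ≤ 1 - |m k j| := by
          have hsub : S.erase k ⊆ Finset.univ.erase k :=
            Finset.erase_subset_erase k (Finset.subset_univ S)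
          have h1 : ∑ k' ∈ S.erase k, |m k' j| ≤ ∑ k' ∈ Finset.univ.erase k, |m k' j| :=
            Finset.sum_le_sum_of_subset_of_nonneg hsub (fun _ _ _ => abs_nonneg _)
          have h2 : ∑ k' ∈ Finset.univ.erase k, |m k' j| = (∑ k', |m k' j|) - |m k j| :=
            Finset.sum_erase_eq_sub (Finset.mem_univ k)
          have h3 := hM j
          linarith
        have hw0 : (0:ℝ) ≤ ∑ k' ∈ S.erase k, |m k' j| :=
          Finset.sum_nonneg (fun _ _ => abs_nonneg _)
        obtain ⟨mm, hmm⟩ : ∃ mm, n k = mm + 1 := ⟨n k - 1, by omega⟩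
        have hpascal : (((s'+1).choose (n k)) : ℝ) =
            (s'.choose mm : ℝ) + (s'.choose (mm+1) : ℝ) := by
          rw [hmm]
          exact_mod_cast congrArg Nat.cast (Nat.choose_succ_succ s' mm)
        have hA0 : (0:ℝ) ≤ (s'.choose mm : ℝ) := Nat.cast_nonneg _
        have hB0 : (0:ℝ) ≤ (s'.choose (mm+1) : ℝ) := Nat.cast_nonneg _
        have hu1 : δ ≤ |m k j| := hδ_le k j
        have hu2 : |m k j| ≤ 1 - δ := hmle k j
        have hite : (if k = k then 1 else 0) = 1 := if_pos rfl
        rw [hite, hpascal, hmm, Nat.add_sub_cancel]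
        nlinarith [mul_le_mul_of_nonneg_right hu2 hA0,
          mul_le_mul_of_nonneg_right hu1 hB0,
          mul_le_mul_of_nonneg_right hw hB0]
      · have hk0 : n k = 0 := by
          by_contra h
          exact hkS (Finset.mem_filter.mpr ⟨Finset.mem_univ k, by omega⟩)
        have hterm : ∀ k' ∈ S,
            |m k' j| * ((s'.choose (n k - if k = k' then 1 else 0)) : ℝ) = |m k' j| := by
          intro k' hk'
          have hne : k ≠ k' := by rintro rfl; exact hkS hk'
          simp [hne, hk0]
        rw [Finset.sum_congr rfl hterm, hk0]
        simp only [Nat.choose_zero_right, Nat.cast_one, one_mul]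
        have hsub : S ⊆ Finset.univ.erase k := by
          intro k' hk'
          refine Finset.mem_erase.mpr ⟨?_, Finset.mem_univ _⟩
          rintro rfl; exact hkS hk'
        have h1 : ∑ k' ∈ S, |m k' j| ≤ ∑ k' ∈ Finset.univ.erase k, |m k' j| :=
          Finset.sum_le_sum_of_subset_of_nonneg hsub (fun _ _ _ => abs_nonneg _)
        have h2 : ∑ k' ∈ Finset.univ.erase k, |m k' j| = (∑ k', |m k' j|) - |m k j| :=
          Finset.sum_erase_eq_sub (Finset.mem_univ k)
        have h3 := hδ_le k j
        have h4 := hM j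
        linarith
    calc ∑ k' ∈ S, |m k' j| *
          (((s'.choose (n k - if k = k' then 1 else 0)) : ℝ) * (1 - δ) ^ s')
        = (∑ k' ∈ S, |m k' j| *
            ((s'.choose (n k - if k = k' then 1 else 0)) : ℝ)) * (1 - δ) ^ s' := by
          rw [Finset.sum_mul]
          exact Finset.sum_congr rfl (fun k' _ => (mul_assoc _ _ _).symm)
      _ ≤ ((((s'+1).choose (n k)) : ℝ) * (1 - δ)) * (1 - δ) ^ s' :=
          mul_le_mul_of_nonneg_right hkey (pow_nonneg (by linarith) s')
      _ = (((s'+1).choose (n k)) : ℝ) * (1 - δ) ^ (s'+1) := by ring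
end

section
/- Suppose |M|_{ℓ¹} ≤ 1 and m_{ij} ≠ 0 for every i, j ∈ {1,…,N}. Set μ_N = max_{j ∈ {1,…,N}} ∑_{i=1}^{N−1} |m_{ij}| and ν_N = max_{j ∈ {1,…,N}} |m_{Nj}|; then μ_N, ν_N ∈ (0,1), and for every i, j ∈ {1,…,N}, every 𝔫 ∈ 𝔑, every x ∈ [0, L_j], every t ∈ ℝ, and every choice of measurable signals α_r : ℝ → [0,1] (r ∈ {1,…,N_d}), one has |θ^{(i)}_{j,𝔫,x,t}| ≤ C(|𝔫|_{ℓ¹}, n_N) · μ_N^{|𝔫|_{ℓ¹} − n_N} · ν_N^{n_N}, where C(n, m) denotes the binomial coefficient n choose m. -/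
open MeasureTheory Finset

/-
Induction on `|𝔫|`. Since `0 < ε ≤ 1`, `|θ|` at `x` is at most its value at `x = L_j`, which is a
combination of `θ`'s with `|𝔫|` one smaller, weighted by the `j`-th column of `M`. The first `N - 1`
entries of that column have total mass at most `μ_N` and keep `n_N` fixed, while the last entry is at
most `ν_N` and lowers `n_N` by one, so the bound `C(S, r) μ_N^(S - r) ν_N^r` propagates by Pascal's
rule.
-/

def binomTerm (μ ν : ℝ) (S r : ℕ) : ℝ :=
  S.choose r * μ ^ (S - r) * ν ^ r

section binomTerm

variable {μ ν : ℝ}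

theorem binomTerm_nonneg (hμ : 0 ≤ μ) (hν : 0 ≤ ν) (S r : ℕ) : 0 ≤ binomTerm μ ν S r := by
  unfold binomTerm; positivity

theorem binomTerm_zero_zero : binomTerm μ ν 0 0 = 1 := by
  simp [binomTerm]

theorem binomTerm_succ_zero (S : ℕ) : binomTerm μ ν (S + 1) 0 = μ * binomTerm μ ν S 0 := by
  simp [binomTerm, pow_succ']

/-- Pascal's rule; for `r ≥ S` the truncated subtraction `S - r` is harmless because
`S.choose (r + 1) = 0`. -/
theorem binomTerm_succ_succ (S r : ℕ) :
    binomTerm μ ν (S + 1) (r + 1) = μ * binomTerm μ ν S (r + 1) + ν * binomTerm μ ν S r := by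
  unfold binomTerm
  rw [Nat.choose_succ_succ', Nat.add_sub_add_right]
  rcases lt_or_ge r S with hrS | hSr
  · obtain ⟨d, rfl⟩ := Nat.exists_eq_add_of_lt hrS
    rw [show r + d + 1 - r = d + 1 by omega, show r + d + 1 - (r + 1) = d by omega]
    push_cast
    ring
  · rw [Nat.choose_eq_zero_of_lt (by omega : S < r + 1)]
    push_cast
    ring

theorem sum_mul_binomTerm_le {ι : Type*} [Fintype ι] [DecidableEq ι] {w : ι → ℝ} {F : Finset ι}
    {p : ι} (hμ0 : 0 ≤ μ) (hw : ∀ k, 0 ≤ w k) (hμ : ∑ k ∈ univ.erase p, w k ≤ μ) (hν : w p ≤ ν)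
    {S r : ℕ} (hpF : p ∈ F → 0 < r) :
    ∑ k ∈ F, w k * binomTerm μ ν S (if k = p then r - 1 else r) ≤ binomTerm μ ν (S + 1) r := by
  have hν0 : 0 ≤ ν := (hw p).trans hν
  have hB := binomTerm_nonneg hμ0 hν0
  cases r with
  | zero =>
    have hFp : F ⊆ univ.erase p := fun k hk =>
      mem_erase.mpr ⟨fun hkp => by simpa using hpF (hkp ▸ hk), mem_univ k⟩
    simp only [Nat.zero_sub, ite_self, ← sum_mul, binomTerm_succ_zero]
    exact mul_le_mul_of_nonneg_right
      ((sum_le_sum_of_subset_of_nonneg hFp fun k _ _ => hw k).trans hμ) (hB _ _)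
  | succ r =>
    calc ∑ k ∈ F, w k * binomTerm μ ν S (if k = p then r + 1 - 1 else r + 1)
        ≤ ∑ k, w k * binomTerm μ ν S (if k = p then r else r + 1) := by
          simp only [Nat.add_sub_cancel]
          exact sum_le_sum_of_subset_of_nonneg (subset_univ F)
            fun k _ _ => mul_nonneg (hw k) (hB _ _)
      _ = w p * binomTerm μ ν S r + (∑ k ∈ univ.erase p, w k) * binomTerm μ ν S (r + 1) := by
          rw [← add_sum_erase _ _ (mem_univ p), if_pos rfl, sum_mul]
          congr 1
          exact sum_congr rfl fun k hk => by rw [if_neg (ne_of_mem_erase hk)]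
      _ ≤ ν * binomTerm μ ν S r + μ * binomTerm μ ν S (r + 1) := by
          gcongr <;> exact hB _ _
      _ = binomTerm μ ν (S + 1) (r + 1) := by rw [binomTerm_succ_succ]; ring

end binomTerm

theorem sum_sub_single_one_add_one {ι : Type*} [Fintype ι] [DecidableEq ι] {n : ι → ℕ} {k : ι}
    (hk : 1 ≤ n k) : ∑ l, (n - Pi.single k 1 : ι → ℕ) l + 1 = ∑ l, n l := by
  have hle : Pi.single k 1 ≤ n := fun l => by
    rcases eq_or_ne l k with rfl | hlk
    · simpa using hk
    · simp [hlk]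
  calc ∑ l, (n - Pi.single k 1 : ι → ℕ) l + 1
      = ∑ l, ((n - Pi.single k 1) + Pi.single k 1 : ι → ℕ) l := by simp [sum_add_distrib]
    _ = ∑ l, n l := by rw [tsub_add_cancel_of_le hle]

section IsTheta

variable {N : ℕ} {L a b : Fin N → ℝ} {m : Fin N → Fin N → ℝ} {α : Fin N → ℝ → ℝ}
  {θ : Fin N → Fin N → (Fin N → ℕ) → ℝ → ℝ → ℝ}

theorem IsTheta.abs_le_abs_at_length (hθ : IsTheta L a b m α θ) (hα : ∀ j s, 0 ≤ α j s)
    (i j : Fin N) (n : Fin N → ℕ) (x t : ℝ) : |θ i j n x t| ≤ |θ i j n (L j) t| := by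
  rw [hθ.1, abs_mul, abs_of_pos (eps_pos j n x t)]
  exact mul_le_of_le_one_left (abs_nonneg _) (eps_le_one (hα j) n x t)

theorem IsTheta.abs_at_length_le (hθ : IsTheta L a b m α θ) {n : Fin N → ℕ} (hn : n ≠ 0)
    (i j : Fin N) (t : ℝ) :
    |θ i j n (L j) t| ≤
      ∑ k ∈ univ.filter (fun k => 1 ≤ n k), |m k j| * |θ i k (n - Pi.single k 1) 0 t| := by
  rw [hθ.2.2 i j n t hn]
  refine (abs_sum_le_sum_abs _ _).trans_eq (sum_congr rfl fun k _ => ?_)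
  rw [abs_mul]
  congr 3
  ext l
  simp [Pi.single_apply]

theorem IsTheta.abs_le_binomTerm (hθ : IsTheta L a b m α θ) (hα : ∀ j s, 0 ≤ α j s) (p : Fin N)
    {μ ν : ℝ} (hμ0 : 0 ≤ μ) (hm : ∀ i j, |m i j| ≤ 1)
    (hμ : ∀ j, ∑ i ∈ univ.erase p, |m i j| ≤ μ) (hν : ∀ j, |m p j| ≤ ν)
    (i j : Fin N) (n : Fin N → ℕ) (x t : ℝ) :
    |θ i j n x t| ≤ binomTerm μ ν (∑ l, n l) (n p) := by
  suffices ∀ S n, ∑ l, n l = S → ∀ i j x t, |θ i j n x t| ≤ binomTerm μ ν S (n p) from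
    this _ n rfl i j x t
  intro S
  induction S with
  | zero =>
    intro n hS i j x t
    obtain rfl : n = fun _ => 0 := funext fun l => sum_eq_zero_iff.mp hS l (mem_univ l)
    calc |θ i j (fun _ => 0) x t| ≤ |θ i j (fun _ => 0) (L j) t| :=
          hθ.abs_le_abs_at_length hα i j _ x t
      _ = |m i j| := by rw [hθ.2.1]
      _ ≤ binomTerm μ ν 0 0 := (hm i j).trans_eq binomTerm_zero_zero.symm
  | succ S ih =>
    intro n hS i j x t
    have hn : n ≠ 0 := by rintro rfl; simp at hS
    calc |θ i j n x t| ≤ |θ i j n (L j) t| := hθ.abs_le_abs_at_length hα i j n x t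
      _ ≤ ∑ k ∈ univ.filter (fun k => 1 ≤ n k), |m k j| * |θ i k (n - Pi.single k 1) 0 t| :=
          hθ.abs_at_length_le hn i j t
      _ ≤ ∑ k ∈ univ.filter (fun k => 1 ≤ n k),
            |m k j| * binomTerm μ ν S (if k = p then n p - 1 else n p) := by
          gcongr with k hk
          have hk : 1 ≤ n k := (mem_filter.mp hk).2
          have hsum : ∑ l, (n - Pi.single k 1 : Fin N → ℕ) l = S := by
            have := sum_sub_single_one_add_one hk; omega
          have hp : (n - Pi.single k 1 : Fin N → ℕ) p = if k = p then n p - 1 else n p := by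
            rw [Pi.sub_apply, Pi.single_apply]
            by_cases hkp : k = p
            · simp [hkp]
            · simp [hkp, Ne.symm hkp]
          exact hp ▸ ih _ hsum i k 0 t
      _ ≤ binomTerm μ ν (S + 1) (n p) :=
          sum_mul_binomTerm_le hμ0 (fun k => abs_nonneg _) (hμ j) (hν j)
            fun hp => (mem_filter.mp hp).2

end IsTheta

theorem ciSup_mem_of_forall_mem {ι α : Type*} [ConditionallyCompleteLinearOrder α] [Nonempty ι]
    [Finite ι] {f : ι → α} {s : Set α} (h : ∀ i, f i ∈ s) : ⨆ i, f i ∈ s := by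
  obtain ⟨i, hi⟩ := exists_eq_ciSup_of_finite (f := f)
  exact hi ▸ h i

theorem sum_erase_abs_mem_Ioo_and_abs_mem_Ioo {ι : Type*} [Fintype ι] [DecidableEq ι]
    {v : ι → ℝ} (hv : ∑ i, |v i| ≤ 1) (hne : ∀ i, v i ≠ 0) {p q : ι} (hqp : q ≠ p) :
    ∑ i ∈ univ.erase p, |v i| ∈ Set.Ioo 0 1 ∧ |v p| ∈ Set.Ioo 0 1 := by
  have hsplit := add_sum_erase univ (fun i => |v i|) (mem_univ p)
  have hq : 0 < ∑ i ∈ univ.erase p, |v i| := (abs_pos.2 (hne q)).trans_le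
    (single_le_sum (fun i _ => abs_nonneg (v i)) (mem_erase.2 ⟨hqp, mem_univ q⟩))
  have hp : 0 < |v p| := abs_pos.2 (hne p)
  exact ⟨⟨hq, by linarith⟩, hp, by linarith⟩

theorem Fin.filter_val_lt_sub_one_eq_erase {N : ℕ} (hN : 0 < N) :
    univ.filter (fun i : Fin N => (i : ℕ) < N - 1) = univ.erase ⟨N - 1, by omega⟩ := by
  ext i
  simp only [mem_filter, mem_univ, true_and, mem_erase, ne_eq, and_true, Fin.ext_iff]
  have := i.isLt
  omega

/-- Refined binomial estimate `|θ| ≤ C(|𝔫|, n_N) μ_N^{|𝔫|-n_N} ν_N^{n_N}`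
(proof of Lemma `CoroBinBound`). -/
theorem stmt11 {N Nd : ℕ} (hN : 2 ≤ N)
    (L a b : Fin N → ℝ) (m : Fin N → Fin N → ℝ)
    (hM : ∀ j, ∑ i, |m i j| ≤ 1)
    (hMne : ∀ i j, m i j ≠ 0) :
    (0 < ⨆ j, ∑ i ∈ Finset.univ.filter (fun i : Fin N => (i : ℕ) < N - 1), |m i j|) ∧
    (⨆ j, ∑ i ∈ Finset.univ.filter (fun i : Fin N => (i : ℕ) < N - 1), |m i j|) < 1 ∧
    (0 < ⨆ j, |m ⟨N - 1, by omega⟩ j|) ∧ (⨆ j, |m ⟨N - 1, by omega⟩ j|) < 1 ∧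
    ∀ α : Fin N → ℝ → ℝ,
      (∀ j, Measurable (α j)) → (∀ j s, α j s ∈ Set.Icc (0:ℝ) 1) →
      (∀ j : Fin N, Nd ≤ (j : ℕ) → ∀ s, α j s = 1) →
      ∀ θ : Fin N → Fin N → (Fin N → ℕ) → ℝ → ℝ → ℝ, IsTheta L a b m α θ →
      ∀ (i j : Fin N) (n : Fin N → ℕ) (x t : ℝ), x ∈ Set.Icc 0 (L j) →
        |θ i j n x t| ≤ ((∑ i', n i').choose (n ⟨N - 1, by omega⟩) : ℝ) *
          (⨆ j', ∑ i' ∈ Finset.univ.filter (fun i' : Fin N => (i' : ℕ) < N - 1), |m i' j'|)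
            ^ ((∑ i', n i') - n ⟨N - 1, by omega⟩) *
          (⨆ j', |m ⟨N - 1, by omega⟩ j'|) ^ (n ⟨N - 1, by omega⟩) := by
  set p : Fin N := ⟨N - 1, by omega⟩
  have : Nonempty (Fin N) := ⟨p⟩
  simp only [Fin.filter_val_lt_sub_one_eq_erase (by omega : 0 < N)]
  have hcol j := sum_erase_abs_mem_Ioo_and_abs_mem_Ioo (hM j) (hMne · j)
    (q := ⟨0, by omega⟩) (p := p) (by simp [p, Fin.ext_iff]; omega)
  obtain ⟨hμ0, hμ1⟩ := ciSup_mem_of_forall_mem fun j => (hcol j).1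
  obtain ⟨hν0, hν1⟩ := ciSup_mem_of_forall_mem fun j => (hcol j).2
  refine ⟨hμ0, hμ1, hν0, hν1, fun α _ hα _ θ hθ i j n x t _ => ?_⟩
  have hm i j : |m i j| ≤ 1 := (single_le_sum (fun i _ => abs_nonneg (m i j)) (mem_univ i)).trans (hM j)
  exact hθ.abs_le_binomTerm (fun j s => (hα j s).1) p hμ0.le hm
    (le_ciSup (Finite.bddAbove_range _)) (le_ciSup (Finite.bddAbove_range _)) i j n x t
end

section
/- Let T ≥ μ > 0 and let a < b be real numbers. Then there exist ρ > 0 and ℓ > 0, depending only on μ, T, and b − a (one may take ρ = μ(b−a)/(2T) and ℓ = min(ρ, T)), such that for every t ∈ ℝ and every α ∈ G(T,μ), the set I = { τ ∈ ℝ : ∫_{τ+a}^{τ+b} α(s) ds ≥ ρ } intersected with [t, t+T] contains an interval of length ℓ. -/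
open MeasureTheory

private lemma aux_integrable {α : ℝ → ℝ} (hm : Measurable α)
    (hb : ∀ s, α s ∈ Set.Icc (0:ℝ) 1) (u v : ℝ) : IntervalIntegrable α volume u v := by
  apply IntervalIntegrable.mono_fun' (g := fun _ => (1:ℝ)) intervalIntegrable_const
    hm.aestronglyMeasurable.restrict
  filter_upwards with s
  rw [Real.norm_eq_abs, abs_of_nonneg (hb s).1]; exact (hb s).2

private lemma aux_le {α : ℝ → ℝ} (hm : Measurable α)
    (hb : ∀ s, α s ∈ Set.Icc (0:ℝ) 1) {u v : ℝ} (h : u ≤ v) :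
    ∫ s in u..v, α s ≤ v - u := by
  calc ∫ s in u..v, α s ≤ ∫ _ in u..v, (1:ℝ) :=
        intervalIntegral.integral_mono_on h (aux_integrable hm hb u v)
          intervalIntegrable_const (fun s _ => (hb s).2)
    _ = v - u := by simp

private lemma aux_mono {α : ℝ → ℝ} (hm : Measurable α)
    (hb : ∀ s, α s ∈ Set.Icc (0:ℝ) 1) {u v u' v' : ℝ} (h1 : u' ≤ u) (h2 : u ≤ v) (h3 : v ≤ v') :
    ∫ s in u..v, α s ≤ ∫ s in u'..v', α s :=
  intervalIntegral.integral_mono_interval h1 h2 h3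
    (Filter.Eventually.of_forall fun s => (hb s).1) (aux_integrable hm hb u' v')

set_option maxHeartbeats 1000000 in
private lemma aux_main (T μ a b r ρ ℓ : ℝ) (hμ : 0 < μ) (hT : 0 < T) (hTμ : μ ≤ T)
    (hrdef : r = b - a) (hr0 : 0 < r) (hρdef : ρ * (2 * T) = μ * r) (hρ0 : 0 ≤ ρ)
    (hℓρ : ℓ ≤ ρ) (hℓT : ℓ ≤ T)
    (t : ℝ) (α : ℝ → ℝ) (hm : Measurable α) (hb : ∀ s, α s ∈ Set.Icc (0:ℝ) 1)
    (hPE : ∀ t : ℝ, μ ≤ ∫ s in t..(t + T), α s) :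
    ∃ c : ℝ, Set.Icc c (c + ℓ) ⊆
      {τ : ℝ | ρ ≤ ∫ s in (τ + a)..(τ + b), α s} ∩ Set.Icc t (t + T) := by
  by_cases hcase : r ≤ T
  · -- main case : b - a ≤ T
    obtain ⟨n, hndef⟩ : ∃ n : ℕ, n = ⌈T / r⌉₊ := ⟨_, rfl⟩
    have hn0 : 0 < n := hndef ▸ Nat.ceil_pos.mpr (div_pos hT hr0)
    have hN : (0:ℝ) < n := by exact_mod_cast hn0
    have hP1 : T ≤ (n:ℝ) * r := by
      rw [hndef]
      have h1 := Nat.le_ceil (T / r)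
      rw [div_le_iff₀ hr0] at h1
      linarith
    have hP2 : (n:ℝ) * r ≤ T + r := by
      rw [hndef]
      have h1 := Nat.ceil_lt_add_one (le_of_lt (div_pos hT hr0))
      have h2 : (↑⌈T / r⌉₊ : ℝ) * r < (T / r + 1) * r := mul_lt_mul_of_pos_right h1 hr0
      have h3 : (T / r + 1) * r = T + r := by field_simp
      linarith
    obtain ⟨L, hLdef⟩ : ∃ L : ℝ, L = T / (n:ℝ) := ⟨_, rfl⟩
    obtain ⟨δ, hδdef⟩ : ∃ δ : ℝ, δ = μ / (n:ℝ) - ρ := ⟨_, rfl⟩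
    have hL0 : 0 < L := hLdef ▸ div_pos hT hN
    have hLn : L * (n:ℝ) = T := by rw [hLdef]; field_simp
    have hδn : δ * (n:ℝ) + ρ * (n:ℝ) = μ := by rw [hδdef]; field_simp; ring
    have hδ0 : 0 ≤ δ := by
      have h1 : ρ * (n:ℝ) * (2 * T) ≤ μ * (2 * T) := by
        calc ρ * (n:ℝ) * (2 * T) = ρ * (2 * T) * (n:ℝ) := by ring
          _ = μ * r * (n:ℝ) := by rw [hρdef]
          _ = μ * ((n:ℝ) * r) := by ring
          _ ≤ μ * (T + r) := by nlinarith
          _ ≤ μ * (2 * T) := by nlinarith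
      have h2 : ρ * (n:ℝ) ≤ μ := le_of_mul_le_mul_right h1 (by linarith)
      have h3 : ρ ≤ μ / (n:ℝ) := by rw [le_div_iff₀ hN]; linarith
      rw [hδdef]; linarith
    have hρL : ρ ≤ L := by
      have h4 : ρ * (n:ℝ) * (2 * T) ≤ T * (2 * T) := by
        calc ρ * (n:ℝ) * (2 * T) = ρ * (2 * T) * (n:ℝ) := by ring
        _ = μ * r * (n:ℝ) := by rw [hρdef]
        _ = μ * ((n:ℝ) * r) := by ring
        _ ≤ μ * (T + r) := by nlinarith
        _ ≤ T * (2 * T) := by nlinarith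
      have h5 : ρ * (n:ℝ) ≤ T := le_of_mul_le_mul_right h4 (by linarith)
      have h6 : ρ * (n:ℝ) ≤ L * (n:ℝ) := by rw [hLn]; exact h5
      exact le_of_mul_le_mul_right h6 hN
    have hδL : δ ≤ L := by
      have h1 : μ / (n:ℝ) ≤ T / (n:ℝ) := by gcongr
      rw [hδdef, hLdef]; linarith
    have hLr : L ≤ r := by
      have h4 : L * (n:ℝ) ≤ r * (n:ℝ) := by rw [hLn]; linarith
      exact le_of_mul_le_mul_right h4 hN
    have hstar : ℓ ≤ r - L + 2 * δ := by
      have h2T : (0:ℝ) < 2 * T := by linarith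
      have key : 3 * μ * r * (n:ℝ) + 2 * T ^ 2 ≤ 2 * T * ((n:ℝ) * r) + 4 * T * μ := by
        nlinarith [mul_nonneg (sub_nonneg.mpr hTμ) (sub_nonneg.mpr hP1),
          mul_nonneg (sub_nonneg.mpr hTμ) (sub_nonneg.mpr hP2),
          mul_nonneg (sub_nonneg.mpr hcase) hμ.le,
          mul_nonneg (sub_nonneg.mpr hP1) hμ.le]
      have h3 : 3 * ρ * (n:ℝ) ≤ r * (n:ℝ) - T + 2 * μ := by
        have h4 : 3 * ρ * (n:ℝ) * (2 * T) ≤ (r * (n:ℝ) - T + 2 * μ) * (2 * T) := by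
          have expand : 3 * ρ * (n:ℝ) * (2 * T) = 3 * (ρ * (2 * T)) * (n:ℝ) := by ring
          rw [expand, hρdef]
          nlinarith [key]
        exact le_of_mul_le_mul_right h4 h2T
      have hρn : ρ ≤ r - L + 2 * δ := by
        have h4 : ρ * (n:ℝ) ≤ (r - L + 2 * δ) * (n:ℝ) := by nlinarith [hLn, hδn, h3]
        exact le_of_mul_le_mul_right h4 hN
      linarith
    -- pigeonhole on the window starting at s0
    obtain ⟨s0, hs0def⟩ : ∃ s0 : ℝ, s0 = t + a + ℓ - δ := ⟨_, rfl⟩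
    have hμn : (n:ℝ) * (ρ + δ) = μ := by linarith [hδn]
    have hpig : ∃ i : ℕ, i < n ∧ ρ + δ ≤ ∫ s in (s0 + (i:ℝ) * L)..(s0 + ((i:ℝ) + 1) * L), α s := by
      by_contra hcon
      push_neg at hcon
      have hadj := intervalIntegral.sum_integral_adjacent_intervals (f := α) (μ := volume)
        (a := fun i : ℕ => s0 + (i:ℝ) * L) (n := n) (fun i _ => aux_integrable hm hb _ _)
      simp only [Nat.cast_zero, zero_mul, add_zero, Nat.cast_add, Nat.cast_one] at hadj
      have hnL : s0 + (n:ℝ) * L = s0 + T := by rw [mul_comm, hLn]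
      rw [hnL] at hadj
      have hlt : ∑ i ∈ Finset.range n,
          (∫ s in (s0 + (i:ℝ) * L)..(s0 + ((i:ℝ) + 1) * L), α s) < ∑ _i ∈ Finset.range n, (ρ + δ) :=
        Finset.sum_lt_sum_of_nonempty (Finset.nonempty_range_iff.mpr hn0.ne')
          (fun i hi => hcon i (Finset.mem_range.mp hi))
      rw [Finset.sum_const, Finset.card_range, nsmul_eq_mul, hμn, hadj] at hlt
      exact absurd (hPE s0) (not_le.mpr hlt)
    obtain ⟨i, hi, hx⟩ := hpig
    obtain ⟨x, hxdef⟩ : ∃ x : ℝ, x = s0 + (i:ℝ) * L := ⟨_, rfl⟩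
    rw [← hxdef] at hx
    have hxl : s0 ≤ x := by
      rw [hxdef]
      nlinarith [hL0.le, Nat.cast_nonneg (α := ℝ) i]
    have hxu : x ≤ s0 + T - L := by
      have hi' : (i:ℝ) ≤ (n:ℝ) - 1 := by
        have : (i:ℝ) + 1 ≤ (n:ℝ) := by exact_mod_cast Nat.succ_le_of_lt hi
        linarith
      have h2 : (i:ℝ) * L ≤ ((n:ℝ) - 1) * L := mul_le_mul_of_nonneg_right hi' hL0.le
      have h3 : ((n:ℝ) - 1) * L = T - L := by rw [sub_mul, one_mul, mul_comm, hLn]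
      rw [hxdef]; linarith
    have hxL : s0 + ((i:ℝ) + 1) * L = x + L := by rw [hxdef]; ring
    rw [hxL] at hx
    have h2l : 2 * ℓ ≤ r + 2 * δ := by linarith
    refine ⟨max (x + L - b - δ) t, ?_⟩
    rintro τ ⟨hτ1, hτ2⟩
    have hct : t ≤ max (x + L - b - δ) t := le_max_right _ _
    have hcx : x + L - b - δ ≤ max (x + L - b - δ) t := le_max_left _ _
    have hcT : max (x + L - b - δ) t + ℓ ≤ t + T := by
      apply add_le_of_le_sub_right
      apply max_le
      · rw [hs0def] at hxu; rw [hrdef] at h2l; linarith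
      · linarith
    have hcu : max (x + L - b - δ) t + ℓ ≤ x - a + δ := by
      apply add_le_of_le_sub_right
      apply max_le
      · rw [hrdef] at hstar; linarith
      · rw [hs0def] at hxl; linarith
    have hτl : x + L - b - δ ≤ τ := le_trans hcx hτ1
    have hτu : τ ≤ x - a + δ := le_trans hτ2 hcu
    constructor
    · show ρ ≤ ∫ s in (τ + a)..(τ + b), α s
      have hab' : a < b := by rw [hrdef] at hr0; linarith
      have hxu' : x ≤ max (τ + a) x := le_max_right _ _
      have hvx : min (τ + b) (x + L) ≤ x + L := min_le_right _ _
      have huv : max (τ + a) x ≤ min (τ + b) (x + L) := by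
        apply max_le
        · apply le_min (by linarith)
          rw [hrdef] at hstar; linarith
        · apply le_min
          · rw [hrdef] at hLr; linarith
          · linarith
      have hau : τ + a ≤ max (τ + a) x := le_max_left _ _
      have hvb : min (τ + b) (x + L) ≤ τ + b := min_le_left _ _
      have hvu : L - δ ≤ min (τ + b) (x + L) - max (τ + a) x := by
        rcases max_cases (τ + a) x with ⟨h1, h2⟩ | ⟨h1, h2⟩ <;>
          rcases min_cases (τ + b) (x + L) with ⟨h3, h4⟩ | ⟨h3, h4⟩ <;>
          rw [h1, h3] <;> rw [hrdef] at hLr <;> linarith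
      have hsplit : (∫ s in x..(max (τ + a) x), α s)
            + (∫ s in (max (τ + a) x)..(min (τ + b) (x + L)), α s)
            + (∫ s in (min (τ + b) (x + L))..(x + L), α s)
          = ∫ s in x..(x + L), α s := by
        rw [intervalIntegral.integral_add_adjacent_intervals (aux_integrable hm hb _ _)
          (aux_integrable hm hb _ _),
          intervalIntegral.integral_add_adjacent_intervals (aux_integrable hm hb _ _)
          (aux_integrable hm hb _ _)]
      have h1 : (∫ s in x..(max (τ + a) x), α s) ≤ max (τ + a) x - x := aux_le hm hb hxu'
      have h2 : (∫ s in (min (τ + b) (x + L))..(x + L), α s) ≤ x + L - min (τ + b) (x + L) :=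
        aux_le hm hb hvx
      have h3 : (∫ s in (max (τ + a) x)..(min (τ + b) (x + L)), α s)
          ≤ ∫ s in (τ + a)..(τ + b), α s := aux_mono hm hb hau huv hvb
      linarith
    · exact ⟨le_trans hct hτ1, by linarith⟩
  · -- easy case : T < b - a
    push_neg at hcase
    refine ⟨t, ?_⟩
    rintro τ ⟨hτ1, hτ2⟩
    constructor
    · show ρ ≤ ∫ s in (τ + a)..(τ + b), α s
      obtain ⟨k, hkdef⟩ : ∃ k : ℕ, k = ⌊r / T⌋₊ := ⟨_, rfl⟩
      have hk1 : (1:ℝ) ≤ (k:ℝ) := by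
        have h1 : (1:ℕ) ≤ k := hkdef ▸ Nat.le_floor (by rw [Nat.cast_one, le_div_iff₀ hT]; linarith)
        exact_mod_cast h1
      have hkT : (k:ℝ) * T ≤ r := by
        have h1 := Nat.floor_le (le_of_lt (div_pos (lt_trans hT hcase) hT))
        rw [← le_div_iff₀ hT, hkdef]
        exact h1
      have hk2 : r / T < (k:ℝ) + 1 := hkdef ▸ Nat.lt_floor_add_one _
      have hr2k : r ≤ 2 * (k:ℝ) * T := by
        rw [div_lt_iff₀ hT] at hk2
        nlinarith
      have hρk : ρ ≤ (k:ℝ) * μ := by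
        have h4 : ρ * (2 * T) ≤ (k:ℝ) * μ * (2 * T) := by
          rw [hρdef]
          nlinarith [mul_le_mul_of_nonneg_left hr2k hμ.le]
        exact le_of_mul_le_mul_right h4 (by linarith)
      have hterm : ∀ j : ℕ, μ ≤ ∫ s in (τ + a + (j:ℝ) * T)..(τ + a + ((j:ℝ) + 1) * T), α s := by
        intro j
        have h := hPE (τ + a + (j:ℝ) * T)
        have he : τ + a + (j:ℝ) * T + T = τ + a + ((j:ℝ) + 1) * T := by ring
        rwa [he] at h
      have hadj := intervalIntegral.sum_integral_adjacent_intervals (f := α) (μ := volume)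
        (a := fun j : ℕ => τ + a + (j:ℝ) * T) (n := k) (fun j _ => aux_integrable hm hb _ _)
      simp only [Nat.cast_zero, zero_mul, add_zero, Nat.cast_add, Nat.cast_one] at hadj
      have hlow : (k:ℝ) * μ ≤ ∑ j ∈ Finset.range k,
          ∫ s in (τ + a + (j:ℝ) * T)..(τ + a + ((j:ℝ) + 1) * T), α s := by
        calc (k:ℝ) * μ = ∑ _j ∈ Finset.range k, μ := by
              rw [Finset.sum_const, Finset.card_range, nsmul_eq_mul]
          _ ≤ _ := Finset.sum_le_sum (fun j _ => hterm j)
      rw [hadj] at hlow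
      have hmono : (∫ s in (τ + a)..(τ + a + (k:ℝ) * T), α s) ≤ ∫ s in (τ + a)..(τ + b), α s :=
        aux_mono hm hb le_rfl (by nlinarith) (by rw [hrdef] at hkT; linarith)
      linarith
    · exact ⟨hτ1, by linarith⟩

/-- Lemma `LemmIPE`: for a persistently exciting signal, the set of times `τ` where
`∫_{τ+a}^{τ+b} α ≥ ρ` contains an interval of length `ℓ` in every window `[t, t+T]`,
with `ρ = μ(b-a)/(2T)` and `ℓ = min ρ T` depending only on `μ`, `T` and `b - a`. -/
theorem stmt12 (T μ : ℝ) (hμ : 0 < μ) (hTμ : μ ≤ T) (a b : ℝ) (hab : a < b) :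
    ∃ ρ ℓ : ℝ, 0 < ρ ∧ 0 < ℓ ∧ ρ = μ * (b - a) / (2 * T) ∧ ℓ = min ρ T ∧
      ∀ (t : ℝ) (α : ℝ → ℝ), PEsignal T μ α →
        ∃ c : ℝ, Set.Icc c (c + ℓ) ⊆
          {τ : ℝ | ρ ≤ ∫ s in (τ + a)..(τ + b), α s} ∩ Set.Icc t (t + T) := by
  have hT : 0 < T := lt_of_lt_of_le hμ hTμ
  have hr0 : 0 < b - a := sub_pos.mpr hab
  refine ⟨μ * (b - a) / (2 * T), min (μ * (b - a) / (2 * T)) T, by positivity,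
    lt_min (by positivity) hT, rfl, rfl, ?_⟩
  rintro t α ⟨hm, hb, hPE⟩
  exact aux_main T μ a b (b - a) (μ * (b - a) / (2 * T)) (min (μ * (b - a) / (2 * T)) T)
    hμ hT hTμ rfl hr0 (by field_simp) (by positivity) (min_le_left _ _) (min_le_right _ _)
    t α hm hb hPE
end

section
/- Let T > 0, ℓ ∈ (0, T], and L₁, L₂ > 0 with L₁/L₂ irrational. Then there exists K ∈ ℕ, depending only on T, ℓ, L₁, L₂, such that: for every set I ⊆ ℝ having the property that for all t ∈ ℝ the intersection I ∩ [t, t+T] contains a closed interval of length ℓ, for every t ∈ ℝ, and for every m₁, m₂ ∈ ℕ, there exist r₁, r₂ ∈ ℕ with m₁ ≤ r₁ ≤ m₁ + K and m₂ ≤ r₂ ≤ m₂ + K such that t − r₁ L₁ − r₂ L₂ ∈ I. -/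
/-! Irrationality of `L₁ / L₂` makes `ℤ L₁ + ℤ L₂` dense, so it contains some `d = a₀ L₁ + b₀ L₂`
with `a₀ ∈ ℕ` and `0 < |d| < ℓ / 2`. Starting from a multiple of `L₂` at distance at most `L₂` from
a target `x` and stepping by `d` at most `⌈L₂ / |d|⌉` times reaches `x` up to `ℓ / 2`, with a
coefficient of `L₁` bounded by `N = ⌈L₂ / |d|⌉ a₀`. Aiming at the midpoint of an interval of `I`
lying in the window `[s - N L₁ - T, s - N L₁]`, where `s = t - m₁ L₁ - m₂ L₂`, forces the
coefficient of `L₂` to lie between `0` and `(N L₁ + T) / L₂`. -/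

theorem exists_nat_int_abs_mul_add_mul_sub_lt {p d : ℝ} (hp₀ : p ≠ 0) (hd₀ : d ≠ 0) (x : ℝ) :
    ∃ k : ℕ, k ≤ ⌈|p| / |d|⌉₊ ∧ ∃ n : ℤ, |n * p + k * d - x| < |d| := by
  wlog hp : 0 < p generalizing p
  · obtain ⟨k, hk, n, hn⟩ := this (neg_ne_zero.2 hp₀) (neg_pos.2 <| (not_lt.1 hp).lt_of_ne hp₀)
    exact ⟨k, by simpa using hk, -n, by simpa using hn⟩
  wlog hd : 0 < d generalizing d x
  · obtain ⟨k, hk, n, hn⟩ :=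
      this (neg_ne_zero.2 hd₀) (-x) (neg_pos.2 <| (not_lt.1 hd).lt_of_ne hd₀)
    refine ⟨k, by simpa using hk, -n, ?_⟩
    rw [← abs_neg, ← abs_neg d]
    convert hn using 2
    push_cast
    ring
  set r := x - ⌊x / p⌋ * p with hr
  have hr₀ : 0 ≤ r := by
    have := Int.floor_le (x / p)
    rw [le_div_iff₀ hp] at this
    linarith
  have hrp : r < p := by
    have := Int.lt_floor_add_one (x / p)
    rw [div_lt_iff₀ hp] at this
    linarith
  refine ⟨⌈r / d⌉₊, ?_, ⌊x / p⌋, ?_⟩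
  · rw [abs_of_pos hp, abs_of_pos hd]
    exact Nat.ceil_mono (by gcongr)
  · have hle : r / d ≤ ⌈r / d⌉₊ := Nat.le_ceil _
    have hlt : (⌈r / d⌉₊ : ℝ) < r / d + 1 := Nat.ceil_lt_add_one (by positivity)
    rw [div_le_iff₀ hd] at hle
    rw [← sub_lt_iff_lt_add, lt_div_iff₀ hd] at hlt
    rw [abs_of_pos hd, abs_lt]
    constructor <;> nlinarith

theorem exists_nat_int_mul_add_mul_ne_zero_abs_lt_of_irrational {L₁ L₂ ε : ℝ}
    (hirr : Irrational (L₁ / L₂)) (hε : 0 < ε) :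
    ∃ (a : ℕ) (b : ℤ), a * L₁ + b * L₂ ≠ 0 ∧ |a * L₁ + b * L₂| < ε := by
  obtain ⟨g, hg, hg₀, hgε⟩ := (dense_addSubgroupClosure_pair_iff.2 hirr).exists_between hε
  obtain ⟨p, q, rfl⟩ := AddSubgroup.mem_closure_pair.1 hg
  replace hgε : |p • L₁ + q • L₂| < ε := by rwa [abs_of_pos hg₀]
  obtain ⟨a, rfl | rfl⟩ := Int.eq_nat_or_neg p
  · exact ⟨a, q, by simpa using hg₀.ne', by simpa using hgε⟩
  · have hg' : (-(a : ℤ)) • L₁ + q • L₂ = -(a * L₁ + ((-q : ℤ) : ℝ) * L₂) := by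
      push_cast [zsmul_eq_mul]
      ring
    rw [hg'] at hg₀ hgε
    exact ⟨a, -q, neg_ne_zero.1 hg₀.ne', by rwa [abs_neg] at hgε⟩

theorem exists_bounded_nat_int_abs_mul_add_mul_sub_lt_of_irrational {L₁ L₂ ε : ℝ}
    (hirr : Irrational (L₁ / L₂)) (hε : 0 < ε) :
    ∃ N : ℕ, ∀ x : ℝ, ∃ a : ℕ, a ≤ N ∧ ∃ b : ℤ, |a * L₁ + b * L₂ - x| < ε := by
  have hL₂ : L₂ ≠ 0 := (div_ne_zero_iff.1 hirr.ne_zero).2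
  obtain ⟨a₀, b₀, hd₀, hdε⟩ := exists_nat_int_mul_add_mul_ne_zero_abs_lt_of_irrational hirr hε
  refine ⟨⌈|L₂| / |a₀ * L₁ + b₀ * L₂|⌉₊ * a₀, fun x => ?_⟩
  obtain ⟨k, hk, n, hn⟩ := exists_nat_int_abs_mul_add_mul_sub_lt hL₂ hd₀ x
  refine ⟨k * a₀, Nat.mul_le_mul_right a₀ hk, n + k * b₀, ?_⟩
  calc |((k * a₀ : ℕ) : ℝ) * L₁ + ((n + k * b₀ : ℤ) : ℝ) * L₂ - x|
      = |n * L₂ + k * (a₀ * L₁ + b₀ * L₂) - x| := by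
        congr 1
        push_cast
        ring
    _ < ε := hn.trans hdε

theorem stmt13_general (T ℓ L₁ L₂ : ℝ) (hℓ : 0 < ℓ)
    (hL₁ : 0 < L₁) (hL₂ : 0 < L₂) (hirr : Irrational (L₁ / L₂)) :
    ∃ K : ℕ, ∀ I : Set ℝ,
      (∀ t : ℝ, ∃ c : ℝ, Set.Icc c (c + ℓ) ⊆ I ∩ Set.Icc t (t + T)) →
      ∀ (t : ℝ) (m₁ m₂ : ℕ), ∃ r₁ r₂ : ℕ,
        m₁ ≤ r₁ ∧ r₁ ≤ m₁ + K ∧ m₂ ≤ r₂ ∧ r₂ ≤ m₂ + K ∧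
        t - r₁ * L₁ - r₂ * L₂ ∈ I := by
  obtain ⟨N, hN⟩ := exists_bounded_nat_int_abs_mul_add_mul_sub_lt_of_irrational hirr (half_pos hℓ)
  refine ⟨max N ⌈(N * L₁ + T) / L₂⌉₊, fun I hI t m₁ m₂ => ?_⟩
  set s := t - m₁ * L₁ - m₂ * L₂
  obtain ⟨c, hc⟩ := hI (s - N * L₁ - T)
  have hc_left : s - N * L₁ - T ≤ c := (hc ⟨le_rfl, by linarith⟩).2.1
  have hc_right : c + ℓ ≤ s - N * L₁ := by linarith [(hc ⟨by linarith, le_rfl⟩).2.2]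
  obtain ⟨a, haN, b, hb⟩ := hN (s - c - ℓ / 2)
  rw [abs_lt] at hb
  have haL₁ : a * L₁ ≤ N * L₁ := by gcongr
  have hb₀ : (0 : ℤ) < b := by
    have : (0 : ℝ) < b * L₂ := by linarith
    exact_mod_cast pos_of_mul_pos_left this hL₂.le
  lift b to ℕ using hb₀.le
  have hbK : b ≤ ⌈(N * L₁ + T) / L₂⌉₊ := by
    have : (b : ℝ) ≤ (N * L₁ + T) / L₂ := by
      rw [le_div_iff₀ hL₂]
      push_cast at hb
      linarith [mul_nonneg (Nat.cast_nonneg a) hL₁.le]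
    simpa using Nat.ceil_mono this
  refine ⟨m₁ + a, m₂ + b, by omega, by omega, by omega, by omega, (hc ⟨?_, ?_⟩).1⟩ <;>
    push_cast at hb ⊢ <;> linarith

/-- Lemma `LemmTimeIRhoAlpha` (abstract form): if `L₁/L₂` is irrational and `I ⊆ ℝ`
contains a closed interval of length `ℓ` in every window `[t, t+T]`, then any point
`t` can be brought into `I` by subtracting `r₁ L₁ + r₂ L₂` with `rᵢ` natural numbers
exceeding prescribed values `mᵢ` by at most a uniform constant `K`. -/
theorem stmt13 (T ℓ L₁ L₂ : ℝ) (hT : 0 < T) (hℓ : 0 < ℓ) (hℓT : ℓ ≤ T)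
    (hL₁ : 0 < L₁) (hL₂ : 0 < L₂) (hirr : Irrational (L₁ / L₂)) :
    ∃ K : ℕ, ∀ I : Set ℝ,
      (∀ t : ℝ, ∃ c : ℝ, Set.Icc c (c + ℓ) ⊆ I ∩ Set.Icc t (t + T)) →
      ∀ (t : ℝ) (m₁ m₂ : ℕ), ∃ r₁ r₂ : ℕ,
        m₁ ≤ r₁ ∧ r₁ ≤ m₁ + K ∧ m₂ ≤ r₂ ∧ r₂ ≤ m₂ + K ∧
        t - r₁ * L₁ - r₂ * L₂ ∈ I :=
  stmt13_general T ℓ L₁ L₂ hℓ hL₁ hL₂ hirr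
end

section
/- Let T ≥ μ > 0. Then there exist η ∈ (0,1) and K ∈ ℕ such that for every k₁ ∈ {1,…,N}, every k₂ ∈ {1,…,N_d} with L_{k₁}/L_{k₂} irrational, every t ∈ ℝ, every 𝔫 ∈ 𝔑, and every α_{k₂} ∈ G(T,μ), there exists 𝔯 ∈ 𝔑 with n_j ≤ r_j ≤ K + n_j for j ∈ {k₁, k₂} and r_j = n_j for j ∈ {1,…,N} \ {k₁, k₂}, such that exp( − ∫_{t − L(𝔯) − L_{k₂} + a_{k₂}}^{t − L(𝔯) − L_{k₂} + b_{k₂}} α_{k₂}(s) ds ) ≤ η. -/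
open MeasureTheory

lemma stmt14_integrable {T μ : ℝ} {α : ℝ → ℝ} (h : PEsignal T μ α) (u v : ℝ) :
    IntervalIntegrable α volume u v := by
  obtain ⟨hm, hb, -⟩ := h
  apply IntervalIntegrable.mono_fun' (g := fun _ => (1:ℝ)) intervalIntegrable_const
    hm.aestronglyMeasurable
  filter_upwards with s
  rw [Real.norm_eq_abs, abs_le]
  exact ⟨by linarith [(hb s).1], (hb s).2⟩

lemma stmt14_step {θ : ℝ} (hθ : 0 < θ) (hirr : Irrational θ) {ε : ℝ} (hε : 0 < ε) (hε1 : ε < 1) :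
    ∃ (p m : ℕ), 0 < p ∧ (p : ℝ) * θ - m ≠ 0 ∧ |(p : ℝ) * θ - m| < ε := by
  obtain ⟨n, hn⟩ := exists_nat_gt (1 / ε)
  have hn0 : 0 < n := by
    by_contra h
    push_neg at h
    interval_cases n <;> simp at hn <;> nlinarith [one_div_pos.2 hε]
  obtain ⟨j, k, hk0, hkn, hjk⟩ := Real.exists_int_int_abs_mul_sub_le θ hn0
  have hlt : |(k : ℝ) * θ - j| < ε := by
    refine hjk.trans_lt ?_
    rw [div_lt_iff₀ (by positivity)]
    rw [div_lt_iff₀ hε] at hn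
    nlinarith [hε.le]
  have hkR : (0:ℝ) < k := by exact_mod_cast hk0
  have hj0 : 0 ≤ j := by
    by_contra h
    push_neg at h
    have hj1 : j ≤ -1 := by omega
    have hj1' : (j:ℝ) ≤ -1 := by exact_mod_cast hj1
    have := abs_lt.1 hlt
    nlinarith
  have hne : (k : ℝ) * θ - j ≠ 0 := by
    intro h
    have hk0' : (k:ℝ) ≠ 0 := ne_of_gt hkR
    apply hirr
    exact ⟨(j : ℚ) / (k : ℚ), by push_cast; field_simp at h ⊢; linarith⟩
  have hk' : ((k.toNat : ℕ) : ℝ) = (k : ℝ) := by exact_mod_cast Int.toNat_of_nonneg hk0.le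
  have hj' : ((j.toNat : ℕ) : ℝ) = (j : ℝ) := by exact_mod_cast Int.toNat_of_nonneg hj0
  refine ⟨k.toNat, j.toNat, by omega, ?_, ?_⟩
  · rw [hk', hj']; exact hne
  · rw [hk', hj']; exact hlt

lemma stmt14_approx {θ : ℝ} (hθ : 0 < θ) (hirr : Irrational θ) {ε : ℝ} (hε : 0 < ε)
    (hε1 : ε < 1) :
    ∃ P : ℕ, ∀ y : ℝ, (P : ℝ) * θ + 2 ≤ y →
      ∃ p q : ℕ, p ≤ P ∧ |(p : ℝ) * θ + (q : ℝ) - y| ≤ ε := by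
  obtain ⟨p₁, m, hp₁, hne, hlt⟩ := stmt14_step hθ hirr hε hε1
  set d : ℝ := (p₁ : ℝ) * θ - m with hd
  rcases hne.lt_or_gt with hneg | hpos
  · -- d < 0 : let e := -d
    set e : ℝ := -d with he
    have he0 : 0 < e := by simp only [he]; linarith
    have heε : e < ε := by
      have := abs_lt.1 hlt
      simp only [he]; linarith
    refine ⟨⌈1 / e⌉₊ * p₁, fun y hy => ?_⟩
    set P : ℕ := ⌈1 / e⌉₊ * p₁ with hP
    set f : ℝ := Int.fract y with hf
    have hf0 : 0 ≤ f := Int.fract_nonneg y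
    have hf1 : f < 1 := Int.fract_lt_one y
    have hyf : (⌊y⌋ : ℝ) = y - f := by rw [hf, Int.self_sub_fract]
    set j : ℕ := ⌈(1 - f) / e⌉₊ with hj
    have hj1 : (1 - f) ≤ (j : ℝ) * e := by
      have h1 := Nat.le_ceil ((1 - f) / e)
      rw [← hj, div_le_iff₀ he0] at h1
      linarith
    have hj2 : (j : ℝ) * e < 1 - f + e := by
      have h1 := Nat.ceil_lt_add_one (div_nonneg (by linarith) he0.le : (0:ℝ) ≤ (1 - f) / e)
      rw [← hj] at h1
      have h2 := mul_lt_mul_of_pos_right h1 he0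
      rw [add_mul, div_mul_cancel₀ _ he0.ne'] at h2
      linarith
    have hjP : j ≤ ⌈1 / e⌉₊ := by
      apply Nat.ceil_le_ceil
      gcongr
      linarith
    have hpP : j * p₁ ≤ P := by rw [hP]; exact Nat.mul_le_mul_right _ hjP
    have hjpθ : (j : ℝ) * (p₁ : ℝ) * θ ≤ (P : ℝ) * θ := by
      apply mul_le_mul_of_nonneg_right _ hθ.le
      exact_mod_cast hpP
    have hjm : (j : ℝ) * m = (j : ℝ) * (p₁:ℝ) * θ + (j : ℝ) * e := by
      simp only [he, hd]; ring
    have hjmy : (j : ℝ) * m ≤ y := by nlinarith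
    have hint : (j : ℤ) * m ≤ ⌊y⌋ := by
      rw [Int.le_floor]; push_cast; linarith
    set q : ℕ := ((⌊y⌋ + 1) - (j : ℤ) * m).toNat with hq
    have h3 : ((q : ℕ) : ℤ) = ⌊y⌋ + 1 - (j : ℤ) * m :=
      Int.toNat_of_nonneg (by omega)
    have hq' : (q : ℝ) = (⌊y⌋ : ℝ) + 1 - (j : ℝ) * m := by exact_mod_cast h3
    refine ⟨j * p₁, q, hpP, ?_⟩
    have hval : ((j * p₁ : ℕ) : ℝ) * θ + (q : ℝ) - y = 1 - (j : ℝ) * e - f := by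
      rw [hq', hyf]
      push_cast
      linear_combination -hjm
    rw [hval, abs_le]
    constructor <;> linarith
  · -- d > 0
    have hdε : d < ε := by have := abs_lt.1 hlt; linarith
    refine ⟨⌈1 / d⌉₊ * p₁, fun y hy => ?_⟩
    set P : ℕ := ⌈1 / d⌉₊ * p₁ with hP
    set f : ℝ := Int.fract y with hf
    have hf0 : 0 ≤ f := Int.fract_nonneg y
    have hf1 : f < 1 := Int.fract_lt_one y
    have hyf : (⌊y⌋ : ℝ) = y - f := by rw [hf, Int.self_sub_fract]
    set j : ℕ := ⌊f / d⌋₊ with hj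
    have hj1 : (j : ℝ) * d ≤ f := by
      have h1 := Nat.floor_le (by positivity : (0:ℝ) ≤ f / d)
      rw [← hj, le_div_iff₀ hpos] at h1
      linarith
    have hj2 : f < ((j : ℝ) + 1) * d := by
      have h1 := Nat.lt_floor_add_one (f / d)
      rw [← hj, div_lt_iff₀ hpos] at h1
      linarith
    have hjP : j ≤ ⌈1 / d⌉₊ := by
      refine (Nat.floor_mono ?_).trans (Nat.floor_le_ceil _)
      gcongr
    have hpP : j * p₁ ≤ P := by rw [hP]; exact Nat.mul_le_mul_right _ hjP
    have hjpθ : (j : ℝ) * (p₁ : ℝ) * θ ≤ (P : ℝ) * θ := by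
      apply mul_le_mul_of_nonneg_right _ hθ.le
      exact_mod_cast hpP
    have hjm : (j : ℝ) * m = (j : ℝ) * (p₁:ℝ) * θ - (j : ℝ) * d := by
      simp only [hd]; ring
    have hjd0 : 0 ≤ (j : ℝ) * d := by positivity
    have hjmy : (j : ℝ) * m ≤ y := by nlinarith
    have hint : (j : ℤ) * m ≤ ⌊y⌋ := by
      rw [Int.le_floor]; push_cast; linarith
    set q : ℕ := (⌊y⌋ - (j : ℤ) * m).toNat with hq
    have h3 : ((q : ℕ) : ℤ) = ⌊y⌋ - (j : ℤ) * m := Int.toNat_of_nonneg (by omega)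
    have hq' : (q : ℝ) = (⌊y⌋ : ℝ) - (j : ℝ) * m := by exact_mod_cast h3
    refine ⟨j * p₁, q, hpP, ?_⟩
    have hval : ((j * p₁ : ℕ) : ℝ) * θ + (q : ℝ) - y = (j : ℝ) * d - f := by
      rw [hq', hyf]
      push_cast
      linear_combination -hjm
    rw [hval, abs_le]
    constructor <;> linarith

lemma stmt14_pair {N : ℕ} (L : Fin N → ℝ) (hL : ∀ i, 0 < L i) (T μ : ℝ) (hμ : 0 < μ)
    (hTμ : μ ≤ T) (M : ℕ) (hM : 0 < M)
    (k₁ k₂ : Fin N) (hirr : Irrational (L k₁ / L k₂)) (ak bk : ℝ)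
    (hab : ak < bk) (hMT : T / M ≤ (bk - ak) / 2) :
    ∃ K : ℕ, ∀ (t : ℝ) (n : Fin N → ℕ) (α : ℝ → ℝ), PEsignal T μ α →
      ∃ p q : ℕ, p ≤ K ∧ q ≤ K ∧
        μ / M ≤ ∫ s in (t - (Lsum L n + p * L k₁ + q * L k₂) - L k₂ + ak)..(t -
          (Lsum L n + p * L k₁ + q * L k₂) - L k₂ + bk), α s := by
  have hL1 := hL k₁
  have hL2 := hL k₂
  have hT : 0 < T := lt_of_lt_of_le hμ hTμ
  set ℓ : ℝ := bk - ak with hℓdef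
  have hℓ : 0 < ℓ := by simp only [hℓdef]; linarith
  have hθ : 0 < L k₁ / L k₂ := div_pos hL1 hL2
  set ε : ℝ := min (ℓ / (4 * L k₂)) (1/2) with hεdef
  have hε : 0 < ε := lt_min (by positivity) (by norm_num)
  have hε1 : ε < 1 := lt_of_le_of_lt (min_le_right _ _) (by norm_num)
  have hεL : ε * L k₂ ≤ ℓ / 4 := by
    have h1 := min_le_left (ℓ / (4 * L k₂)) (1/2)
    rw [← hεdef] at h1
    have h2 : ε * L k₂ ≤ (ℓ / (4 * L k₂)) * L k₂ := by nlinarith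
    calc ε * L k₂ ≤ (ℓ / (4 * L k₂)) * L k₂ := h2
    _ = ℓ / 4 := by field_simp
  obtain ⟨P, hP⟩ := stmt14_approx hθ hirr hε hε1
  refine ⟨max P (⌈((P:ℝ) * L k₁ + 2 * L k₂ + T + ℓ) / L k₂⌉₊), fun t n α hα => ?_⟩
  set c₀ : ℝ := t - Lsum L n - L k₂ + ak with hc₀
  set w : ℝ := c₀ - ((P:ℝ) * L k₁ + 2 * L k₂ + T) with hw
  set ℓ' : ℝ := T / M with hℓ'
  have hM0 : (0:ℝ) < M := by exact_mod_cast hM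
  have hℓ'0 : 0 < ℓ' := by positivity
  have hℓ'2 : ℓ' ≤ ℓ / 2 := hMT
  set g : ℕ → ℝ := fun i => w + i * ℓ' with hg
  have hpart : ∑ i ∈ Finset.range M, ∫ s in (g i)..(g (i+1)), α s
      = ∫ s in (g 0)..(g M), α s :=
    intervalIntegral.sum_integral_adjacent_intervals fun k _ => stmt14_integrable hα _ _
  have hg0 : g 0 = w := by simp [hg]
  have hgM : g M = w + T := by
    simp only [hg, hℓ']
    field_simp
  have hμw : μ ≤ ∑ i ∈ Finset.range M, ∫ s in (g i)..(g (i+1)), α s := by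
    rw [hpart, hg0, hgM]; exact hα.2.2 w
  have hex : ∃ i ∈ Finset.range M, μ / M ≤ ∫ s in (g i)..(g (i+1)), α s := by
    by_contra hcon
    push_neg at hcon
    have hlt : ∑ i ∈ Finset.range M, (∫ s in (g i)..(g (i+1)), α s)
        < ∑ _i ∈ Finset.range M, μ / M :=
      Finset.sum_lt_sum_of_nonempty (by simp [hM.ne']) hcon
    rw [Finset.sum_const, Finset.card_range, nsmul_eq_mul] at hlt
    rw [mul_div_cancel₀ _ hM0.ne'] at hlt
    linarith
  obtain ⟨i, hiM, hi⟩ := hex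
  rw [Finset.mem_range] at hiM
  set x : ℝ := g i with hx
  have hxw : w ≤ x := by
    simp only [hx, hg, le_add_iff_nonneg_right]
    positivity
  have hxT : x ≤ w + T := by
    have hiR : (i:ℝ) ≤ M := by exact_mod_cast hiM.le
    have : (i:ℝ) * ℓ' ≤ M * ℓ' := by nlinarith
    simp only [hx, hg]
    rw [hℓ'] at this ⊢
    rw [mul_div_cancel₀ _ hM0.ne'] at this
    linarith
  set y : ℝ := c₀ - x + ℓ / 4 with hy
  clear_value ℓ ε c₀ w ℓ' g x y
  have hY : (P:ℝ) * (L k₁ / L k₂) + 2 ≤ y / L k₂ := by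
    have h1 : (P:ℝ) * L k₁ + 2 * L k₂ ≤ y := by
      simp only [hy, hw] at hxT ⊢
      linarith
    rw [le_div_iff₀ hL2]
    calc ((P:ℝ) * (L k₁ / L k₂) + 2) * L k₂ = (P:ℝ) * L k₁ + 2 * L k₂ := by
          field_simp
    _ ≤ y := h1
  obtain ⟨p, q, hpP, happ⟩ := hP (y / L k₂) hY
  have hs : |(p:ℝ) * L k₁ + (q:ℝ) * L k₂ - y| ≤ ε * L k₂ := by
    have h1 : ((p:ℝ) * (L k₁ / L k₂) + q - y / L k₂) * L k₂
        = (p:ℝ) * L k₁ + (q:ℝ) * L k₂ - y := by field_simp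
    calc |(p:ℝ) * L k₁ + (q:ℝ) * L k₂ - y| = |((p:ℝ) * (L k₁ / L k₂) + q - y / L k₂)| * |L k₂| := by
          rw [← abs_mul, h1]
    _ ≤ ε * L k₂ := by
        rw [abs_of_pos hL2]
        exact mul_le_mul_of_nonneg_right happ hL2.le
  have habs' := abs_le.1 hs
  have habs : y - ℓ / 4 ≤ (p:ℝ) * L k₁ + (q:ℝ) * L k₂ ∧
      (p:ℝ) * L k₁ + (q:ℝ) * L k₂ ≤ y + ℓ / 4 :=
    ⟨by linarith [habs'.1], by linarith [habs'.2]⟩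
  have h1 : c₀ - ((p:ℝ) * L k₁ + (q:ℝ) * L k₂) ≤ x := by
    have := habs.1
    rw [hy] at this
    linarith
  have h2 : x + ℓ' ≤ c₀ - ((p:ℝ) * L k₁ + (q:ℝ) * L k₂) + ℓ := by
    have := habs.2
    rw [hy] at this
    linarith
  refine ⟨p, q, le_max_left _ _ |>.trans' hpP, ?_, ?_⟩
  · -- q bound
    have hqB : (q:ℝ) ≤ ((P:ℝ) * L k₁ + 2 * L k₂ + T + ℓ) / L k₂ := by
      rw [le_div_iff₀ hL2]
      have hy_le : y ≤ (P:ℝ) * L k₁ + 2 * L k₂ + T + ℓ / 4 := by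
        rw [hy]; rw [hw] at hxw; linarith
      have hpL : 0 ≤ (p:ℝ) * L k₁ := by positivity
      linarith [habs.2, hy_le, hpL, hℓ.le]
    calc q = ⌈((q:ℕ):ℝ)⌉₊ := (Nat.ceil_natCast q).symm
    _ ≤ ⌈((P:ℝ) * L k₁ + 2 * L k₂ + T + ℓ) / L k₂⌉₊ := Nat.ceil_mono hqB
    _ ≤ _ := le_max_right _ _
  · -- the integral bound
    have hA : t - (Lsum L n + (p:ℝ) * L k₁ + (q:ℝ) * L k₂) - L k₂ + ak
        = c₀ - ((p:ℝ) * L k₁ + (q:ℝ) * L k₂) := by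
      rw [hc₀]; ring
    have hB : t - (Lsum L n + (p:ℝ) * L k₁ + (q:ℝ) * L k₂) - L k₂ + bk
        = c₀ - ((p:ℝ) * L k₁ + (q:ℝ) * L k₂) + ℓ := by
      rw [hc₀, hℓdef]; ring
    rw [hA, hB]
    refine hi.trans ?_
    have hgi1 : g (i+1) = x + ℓ' := by
      rw [hx, hg]
      push_cast
      ring
    rw [hgi1]
    apply intervalIntegral.integral_mono_interval h1 (by linarith) h2
    · exact Filter.Eventually.of_forall fun s => (hα.2.1 s).1
    · exact stmt14_integrable hα _ _

/-- Lemma `LemmPEEta`: the damping factor `ε_{k₂,𝔯,0,t}` can be made uniformly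
smaller than some `η < 1` by increasing the `k₁` and `k₂` components of `𝔫` by at
most `K`, whenever `L_{k₁}/L_{k₂}` is irrational. -/
theorem stmt14 {N Nd : ℕ} (hN : 2 ≤ N) (hNd1 : 1 ≤ Nd) (hNdN : Nd ≤ N)
    (L a b : Fin N → ℝ) (hL : ∀ i, 0 < L i)
    (hab : ∀ j : Fin N, (j : ℕ) < Nd → 0 ≤ a j ∧ a j < b j ∧ b j ≤ L j)
    (T μ : ℝ) (hμ : 0 < μ) (hTμ : μ ≤ T) :
    ∃ (η : ℝ) (K : ℕ), η ∈ Set.Ioo (0:ℝ) 1 ∧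
      ∀ k₁ k₂ : Fin N, (k₂ : ℕ) < Nd → Irrational (L k₁ / L k₂) →
      ∀ (t : ℝ) (n : Fin N → ℕ) (α : ℝ → ℝ), PEsignal T μ α →
        ∃ r : Fin N → ℕ,
          (n k₁ ≤ r k₁ ∧ r k₁ ≤ K + n k₁) ∧ (n k₂ ≤ r k₂ ∧ r k₂ ≤ K + n k₂) ∧
          (∀ j, j ≠ k₁ → j ≠ k₂ → r j = n j) ∧
          Real.exp (-(∫ s in (t - Lsum L r - L k₂ + a k₂)..(t - Lsum L r - L k₂ + b k₂), α s))
            ≤ η := by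
  classical
  have hT : 0 < T := lt_of_lt_of_le hμ hTμ
  set M : ℕ := (Finset.univ.sup fun j : Fin N =>
    if (j:ℕ) < Nd then ⌈2 * T / (b j - a j)⌉₊ else 0) + 1 with hM
  have hM0 : 0 < M := Nat.succ_pos _
  have hMR : (0:ℝ) < M := by exact_mod_cast hM0
  have hMT : ∀ k₂ : Fin N, (k₂:ℕ) < Nd → T / M ≤ (b k₂ - a k₂) / 2 := by
    intro k₂ hk₂
    obtain ⟨ha0, hab', hbL⟩ := hab k₂ hk₂
    have hℓ : 0 < b k₂ - a k₂ := by linarith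
    have h2 : ⌈2 * T / (b k₂ - a k₂)⌉₊ < M := by
      rw [hM]
      have h3 := Finset.le_sup (f := fun j : Fin N =>
        if (j:ℕ) < Nd then ⌈2 * T / (b j - a j)⌉₊ else 0) (Finset.mem_univ k₂)
      simp only [hk₂, if_true] at h3
      omega
    have h1 : 2 * T / (b k₂ - a k₂) ≤ (M:ℝ) := by
      calc 2 * T / (b k₂ - a k₂) ≤ (⌈2 * T / (b k₂ - a k₂)⌉₊ : ℝ) := Nat.le_ceil _
      _ ≤ (M:ℝ) := by exact_mod_cast h2.le
    rw [div_le_iff₀ hℓ] at h1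
    rw [div_le_div_iff₀ hMR two_pos]
    nlinarith
  have hKex : ∀ k₁ k₂ : Fin N, ∃ K : ℕ, ((k₂:ℕ) < Nd ∧ Irrational (L k₁ / L k₂)) →
      ∀ (t : ℝ) (n : Fin N → ℕ) (α : ℝ → ℝ), PEsignal T μ α →
      ∃ p q : ℕ, p ≤ K ∧ q ≤ K ∧
        μ / M ≤ ∫ s in (t - (Lsum L n + p * L k₁ + q * L k₂) - L k₂ + a k₂)..(t -
          (Lsum L n + p * L k₁ + q * L k₂) - L k₂ + b k₂), α s := by
    intro k₁ k₂
    by_cases h : (k₂:ℕ) < Nd ∧ Irrational (L k₁ / L k₂)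
    · obtain ⟨K, hK⟩ := stmt14_pair L hL T μ hμ hTμ M hM0 k₁ k₂ h.2 (a k₂) (b k₂)
        (hab k₂ h.1).2.1 (hMT k₂ h.1)
      exact ⟨K, fun _ => hK⟩
    · exact ⟨0, fun hc => absurd hc h⟩
  choose Kf hKf using hKex
  refine ⟨Real.exp (-(μ / M)), Finset.univ.sup (fun pr : Fin N × Fin N => Kf pr.1 pr.2),
    ⟨Real.exp_pos _, Real.exp_lt_one_iff.2 (neg_lt_zero.2 (by positivity))⟩, ?_⟩
  intro k₁ k₂ hk₂ hirr t n α hα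
  have hne : k₁ ≠ k₂ := by
    rintro rfl
    rw [div_self (hL k₁).ne'] at hirr
    exact hirr ⟨1, by norm_num⟩
  obtain ⟨p, q, hp, hq, hint⟩ := hKf k₁ k₂ ⟨hk₂, hirr⟩ t n α hα
  have hK' : Kf k₁ k₂ ≤ Finset.univ.sup (fun pr : Fin N × Fin N => Kf pr.1 pr.2) :=
    Finset.le_sup (f := fun pr : Fin N × Fin N => Kf pr.1 pr.2) (Finset.mem_univ (k₁, k₂))
  set r : Fin N → ℕ := fun j => if j = k₁ then n k₁ + p else if j = k₂ then n k₂ + q else n j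
    with hr
  have hrk₁ : r k₁ = n k₁ + p := by rw [hr]; simp
  have hrk₂ : r k₂ = n k₂ + q := by rw [hr]; simp [Ne.symm hne]
  have hLr : Lsum L r = Lsum L n + p * L k₁ + q * L k₂ := by
    unfold Lsum
    have hsplit : ∀ j : Fin N, ((r j : ℕ) : ℝ) * L j = (n j : ℝ) * L j +
        ((if j = k₁ then (p:ℝ) * L k₁ else 0) + (if j = k₂ then (q:ℝ) * L k₂ else 0)) := by
      intro j
      by_cases h1 : j = k₁
      · subst h1
        rw [hrk₁, if_pos rfl, if_neg hne]
        push_cast; ring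
      · by_cases h2 : j = k₂
        · subst h2
          rw [hrk₂, if_neg h1, if_pos rfl]
          push_cast; ring
        · rw [hr]
          simp only [if_neg h1, if_neg h2]
          ring
    rw [Finset.sum_congr rfl (fun j _ => hsplit j), Finset.sum_add_distrib,
      Finset.sum_add_distrib, Finset.sum_ite_eq' Finset.univ, Finset.sum_ite_eq' Finset.univ]
    simp only [Finset.mem_univ, if_true]
    ring
  refine ⟨r, ⟨by rw [hrk₁]; omega, by rw [hrk₁]; omega⟩, ⟨by rw [hrk₂]; omega, by rw [hrk₂]; omega⟩,
    fun j hj1 hj2 => by rw [hr]; simp [hj1, hj2], ?_⟩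
  rw [hLr]
  calc Real.exp (-(∫ s in (t - (Lsum L n + p * L k₁ + q * L k₂) - L k₂ + a k₂)..(t -
        (Lsum L n + p * L k₁ + q * L k₂) - L k₂ + b k₂), α s))
      ≤ Real.exp (-(μ / M)) := Real.exp_le_exp.2 (neg_le_neg hint)
  _ ≤ Real.exp (-(μ / M)) := le_rfl
end

section
/- Let T ≥ μ > 0, let a < b be real numbers, and let α ∈ G(T,μ). Define A : ℝ → ℝ by A(τ) = ∫_{τ+a}^{τ+b} α(s) ds. Then A is 1-Lipschitz continuous, and for every t ∈ ℝ one has ∫_t^{t+T} A(τ) dτ ≥ μ (b − a). -/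
/-!
`A(x) - A(y) = ∫_{x+a}^{y+a} α - ∫_{x+b}^{y+b} α` is a difference of two numbers in `[0, y - x]`,
whence the Lipschitz bound. For the lower bound, substitute `s = τ + r` and swap the two
integrations: `∫_t^{t+T} A = ∫_a^b ∫_{t+r}^{t+r+T} α(s) ds dr`, and every inner integral is at
least `μ` by persistent excitation.
-/

open MeasureTheory

open Set intervalIntegral

theorem intervalIntegral_integral_swap {E : Type*} [NormedAddCommGroup E] [NormedSpace ℝ E]
    {f : ℝ → ℝ → E} {a b c d : ℝ} (hf : IntegrableOn (Function.uncurry f) (uIoc a b ×ˢ uIoc c d)) :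
    ∫ x in a..b, ∫ y in c..d, f x y = ∫ y in c..d, ∫ x in a..b, f x y := by
  rw [IntegrableOn, Measure.volume_eq_prod, ← Measure.prod_restrict] at hf
  simp only [intervalIntegral_eq_integral_uIoc, MeasureTheory.integral_smul,
    integral_integral_swap hf]
  exact smul_comm _ _ _

section BoundedSignal

variable {α : ℝ → ℝ}

theorem integral_mem_Icc_sub_of_mem_Icc {x y : ℝ} (hα : ∀ s, α s ∈ Icc (0 : ℝ) 1)
    (hint : IntervalIntegrable α volume x y) (hxy : x ≤ y) :
    ∫ s in x..y, α s ∈ Icc 0 (y - x) := by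
  refine ⟨integral_nonneg hxy fun s _ => (hα s).1, ?_⟩
  simpa using integral_mono_on hxy hint intervalIntegrable_const fun s _ => (hα s).2

theorem lipschitzWith_one_integral_shift (hα : ∀ s, α s ∈ Icc (0 : ℝ) 1)
    (hint : ∀ x y, IntervalIntegrable α volume x y) (a b : ℝ) :
    LipschitzWith 1 (fun τ => ∫ s in (τ + a)..(τ + b), α s) := by
  refine LipschitzWith.of_dist_le_mul fun x y => ?_
  wlog hxy : x ≤ y generalizing x y
  · rw [dist_comm, dist_comm x]
    exact this y x (le_of_not_ge hxy)
  rw [Real.dist_eq, Real.dist_eq, abs_sub_comm x, abs_of_nonneg (sub_nonneg.2 hxy), NNReal.coe_one,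
    one_mul, integral_interval_sub_interval_comm (hint _ _) (hint _ _) (hint _ _)]
  have ha := integral_mem_Icc_sub_of_mem_Icc hα (hint (x + a) (y + a)) (by linarith)
  have hb := integral_mem_Icc_sub_of_mem_Icc hα (hint (x + b) (y + b)) (by linarith)
  rw [abs_sub_le_iff]
  constructor <;> linarith [ha.1, ha.2, hb.1, hb.2]

theorem norm_le_one_of_mem_Icc (hα : ∀ s, α s ∈ Icc (0 : ℝ) 1) (s : ℝ) : ‖α s‖ ≤ 1 :=
  abs_le.2 ⟨(neg_nonpos.2 zero_le_one).trans (hα s).1, (hα s).2⟩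

theorem intervalIntegrable_of_mem_Icc (hmeas : Measurable α) (hα : ∀ s, α s ∈ Icc (0 : ℝ) 1)
    (x y : ℝ) : IntervalIntegrable α volume x y :=
  intervalIntegrable_iff.2 <| Measure.integrableOn_of_bounded (M := 1) measure_Ioc_lt_top.ne
    hmeas.aestronglyMeasurable (ae_of_all _ (norm_le_one_of_mem_Icc hα))

theorem mul_sub_le_integral_integral_shift {T μ a b : ℝ} (hmeas : Measurable α)
    (hα : ∀ s, α s ∈ Icc (0 : ℝ) 1) (hPE : ∀ t, μ ≤ ∫ s in t..(t + T), α s) (hab : a ≤ b)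
    (t : ℝ) : μ * (b - a) ≤ ∫ τ in t..(t + T), ∫ s in (τ + a)..(τ + b), α s := by
  have hint := intervalIntegrable_of_mem_Icc hmeas hα
  have hnorm := norm_le_one_of_mem_Icc hα
  have hshift_int : IntegrableOn (Function.uncurry fun τ r => α (τ + r))
      (uIoc t (t + T) ×ˢ uIoc a b) :=
    Measure.integrableOn_of_bounded (M := 1)
      (Metric.isBounded_Ioc _ _ |>.prod (Metric.isBounded_Ioc _ _)).measure_lt_top.ne
      (hmeas.comp measurable_add).aestronglyMeasurable (ae_of_all _ fun p => hnorm (p.1 + p.2))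
  have hcont : Continuous fun r => ∫ s in (r + t)..(r + (t + T)), α s :=
    (lipschitzWith_one_integral_shift hα hint t (t + T)).continuous
  calc μ * (b - a) = ∫ _ in a..b, μ := by simp [mul_comm]
    _ ≤ ∫ r in a..b, ∫ s in (r + t)..(r + (t + T)), α s :=
      integral_mono_on hab intervalIntegrable_const (hcont.intervalIntegrable _ _) fun r _ => by
        convert hPE (r + t) using 2
        ring
    _ = ∫ r in a..b, ∫ τ in t..(t + T), α (τ + r) := by
      congr 1 with r
      rw [integral_comp_add_right, add_comm t r, add_comm (t + T) r]
    _ = ∫ τ in t..(t + T), ∫ r in a..b, α (τ + r) := (intervalIntegral_integral_swap hshift_int).symm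
    _ = ∫ τ in t..(t + T), ∫ s in (τ + a)..(τ + b), α s := by
      simp only [integral_comp_add_left]

end BoundedSignal

theorem stmt16_general (T μ : ℝ) (a b : ℝ) (hab : a < b)
    (α : ℝ → ℝ) (hα : PEsignal T μ α) :
    LipschitzWith 1 (fun τ : ℝ => ∫ s in (τ + a)..(τ + b), α s) ∧
    ∀ t : ℝ, μ * (b - a) ≤ ∫ τ in t..(t + T), ∫ s in (τ + a)..(τ + b), α s := by
  obtain ⟨hmeas, hmem, hPE⟩ := hα
  exact ⟨lipschitzWith_one_integral_shift hmem (intervalIntegrable_of_mem_Icc hmeas hmem) a b,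
    mul_sub_le_integral_integral_shift hmeas hmem hPE hab.le⟩

/-- For a persistently exciting signal `α`, the function `A(τ) = ∫_{τ+a}^{τ+b} α`
is `1`-Lipschitz and satisfies `∫_t^{t+T} A(τ) dτ ≥ μ (b - a)` for every `t`. -/
theorem stmt16 (T μ : ℝ) (hμ : 0 < μ) (hTμ : μ ≤ T) (a b : ℝ) (hab : a < b)
    (α : ℝ → ℝ) (hα : PEsignal T μ α) :
    LipschitzWith 1 (fun τ : ℝ => ∫ s in (τ + a)..(τ + b), α s) ∧
    ∀ t : ℝ, μ * (b - a) ≤ ∫ τ in t..(t + T), ∫ s in (τ + a)..(τ + b), α s :=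
  stmt16_general T μ a b hab α hα
end

section
/- Let N ≥ 2 and let M = (m_{ij}) be a real N×N matrix. Let (β^{(i)}_{j,𝔫}), for i, j ∈ {1,…,N} and 𝔫 ∈ 𝔑, be the unique family of real numbers satisfying β^{(i)}_{j,𝟎} = m_{ij} and β^{(i)}_{j,𝔫} = ∑_{k : n_k ≥ 1} m_{kj} β^{(i)}_{k,𝔫−𝟏_k} for 𝔫 ≠ 𝟎. Then for every i, j ∈ {1,…,N} and every 𝔫 ∈ 𝔑 with 𝔫 ≠ 𝟎, one has β^{(i)}_{j,𝔫} = ∑_{k : n_k ≥ 1} m_{ik} β^{(k)}_{j,𝔫−𝟏_k}. -/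
open Finset

/-- Lemma `LemmBetaSecond`: the coefficients `β` of the undamped explicit solution
satisfy the dual recursion `β^{(i)}_{j,𝔫} = ∑_{k : n_k ≥ 1} m_{ik} β^{(k)}_{j,𝔫-𝟏_k}`. -/
theorem stmt17 {N : ℕ} (hN : 2 ≤ N) (m : Fin N → Fin N → ℝ)
    (β : Fin N → Fin N → (Fin N → ℕ) → ℝ)
    (hβ0 : ∀ i j, β i j (fun _ => 0) = m i j)
    (hβrec : ∀ (i j : Fin N) (n : Fin N → ℕ), n ≠ (fun _ => 0) →
      β i j n = ∑ k ∈ Finset.univ.filter (fun k => 1 ≤ n k),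
        m k j * β i k (fun l => n l - if l = k then 1 else 0)) :
    ∀ (i j : Fin N) (n : Fin N → ℕ), n ≠ (fun _ => 0) →
      β i j n = ∑ k ∈ Finset.univ.filter (fun k => 1 ≤ n k),
        m i k * β k j (fun l => n l - if l = k then 1 else 0) := by
  have hsum : ∀ (n : Fin N → ℕ) (k : Fin N), 1 ≤ n k →
      ∑ t, (n t - if t = k then 1 else 0) = (∑ t, n t) - 1 := by
    intro n k hk
    have h1 : ∑ t, ((n t - if t = k then 1 else 0) + if t = k then 1 else 0)
        = ∑ t, n t := by
      refine Finset.sum_congr rfl fun t _ => ?_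
      split_ifs with h
      · subst h; omega
      · omega
    rw [Finset.sum_add_distrib] at h1
    have h2 : ∑ t, (if t = k then (1:ℕ) else 0) = 1 := by
      simp
    omega
  have hne : ∀ (n : Fin N → ℕ), n ≠ (fun _ => 0) → 1 ≤ ∑ t, n t := by
    intro n hn
    by_contra h
    push_neg at h
    apply hn
    funext t
    have := Finset.sum_eq_zero_iff.mp (by omega : ∑ t, n t = 0)
    exact this t (Finset.mem_univ t)
  have hne' : ∀ (n : Fin N → ℕ), 1 ≤ ∑ t, n t → n ≠ (fun _ => 0) := by
    intro n h hn
    rw [hn] at h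
    simp at h
  suffices key : ∀ d (i j : Fin N) (n : Fin N → ℕ), (∑ t, n t) ≤ d →
      n ≠ (fun _ => 0) →
      β i j n = ∑ k ∈ Finset.univ.filter (fun k => 1 ≤ n k),
        m i k * β k j (fun l => n l - if l = k then 1 else 0) by
    intro i j n hn
    exact key (∑ t, n t) i j n le_rfl hn
  intro d
  induction d with
  | zero =>
    intro i j n hle hn
    exact absurd (Nat.le_antisymm hle (Nat.zero_le _)) (by
      intro h; exact absurd (hne n hn) (by omega))
  | succ d ih =>
    intro i j n hle hn
    by_cases h1 : ∑ t, n t = 1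
    · -- n = unit vector at some k
      obtain ⟨k, hk⟩ : ∃ k, 1 ≤ n k := by
        by_contra h; push_neg at h
        exact absurd (hne n hn) (by
          have : ∑ t, n t = 0 := Finset.sum_eq_zero fun t _ => by have := h t; omega
          omega)
      have hnk : n k = 1 := by
        have : n k ≤ ∑ t, n t := Finset.single_le_sum (fun t _ => Nat.zero_le _)
          (Finset.mem_univ k)
        omega
      have hzero : ∀ t, t ≠ k → n t = 0 := by
        intro t ht
        have hsplit := Finset.add_sum_erase Finset.univ n (Finset.mem_univ k)
        have htmem : t ∈ Finset.univ.erase k := Finset.mem_erase.mpr ⟨ht, Finset.mem_univ t⟩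
        have := Finset.single_le_sum (f := n) (fun t _ => Nat.zero_le _) htmem
        omega
      have hfilt : Finset.univ.filter (fun t => 1 ≤ n t) = {k} := by
        ext t
        simp only [Finset.mem_filter, Finset.mem_univ, true_and, Finset.mem_singleton]
        constructor
        · intro h; by_contra ht; have := hzero t ht; omega
        · intro h; subst h; omega
      have hsub : (fun l => n l - if l = k then 1 else 0) = (fun _ => 0) := by
        funext l
        split_ifs with h
        · subst h; omega
        · exact hzero l h
      rw [hβrec i j n hn, hfilt, Finset.sum_singleton, Finset.sum_singleton, hsub,
        hβ0, hβ0, mul_comm]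
    · -- ∑ n ≥ 2
      have h2 : 2 ≤ ∑ t, n t := by have := hne n hn; omega
      have hsubne : ∀ k : Fin N, 1 ≤ n k →
          (fun l => n l - if l = k then 1 else 0) ≠ (fun _ => 0) := by
        intro k hk
        apply hne'
        rw [hsum n k hk]
        omega
      have hsuble : ∀ k : Fin N, 1 ≤ n k →
          (∑ t, (n t - if t = k then 1 else 0)) ≤ d := by
        intro k hk
        rw [hsum n k hk]
        omega
      rw [hβrec i j n hn]
      -- expand inner β on the left via ih, on the right via hβrec
      have hL : ∀ k ∈ Finset.univ.filter (fun k => 1 ≤ n k),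
          m k j * β i k (fun l => n l - if l = k then 1 else 0) =
          ∑ l ∈ Finset.univ.filter (fun l => 1 ≤ (n l - if l = k then 1 else 0)),
            m k j * (m i l * β l k
              (fun t => (n t - if t = k then 1 else 0) - if t = l then 1 else 0)) := by
        intro k hk
        rw [Finset.mem_filter] at hk
        rw [ih i k _ (hsuble k hk.2) (hsubne k hk.2), Finset.mul_sum]
      have hR : ∀ k ∈ Finset.univ.filter (fun k => 1 ≤ n k),
          m i k * β k j (fun l => n l - if l = k then 1 else 0) =
          ∑ l ∈ Finset.univ.filter (fun l => 1 ≤ (n l - if l = k then 1 else 0)),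
            m i k * (m l j * β k l
              (fun t => (n t - if t = k then 1 else 0) - if t = l then 1 else 0)) := by
        intro k hk
        rw [Finset.mem_filter] at hk
        rw [hβrec k j _ (hsubne k hk.2), Finset.mul_sum]
      rw [Finset.sum_congr rfl hL, Finset.sum_congr rfl hR]
      rw [Finset.sum_comm' (s' := fun l => Finset.univ.filter
            (fun k => 1 ≤ (n k - if k = l then 1 else 0)))
          (t' := Finset.univ.filter (fun l => 1 ≤ n l))
          (by
            intro x y
            simp only [Finset.mem_filter, Finset.mem_univ, true_and]
            by_cases hxy : x = y
            · subst hxy; simp only [if_pos rfl]; omega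
            · rw [if_neg hxy, if_neg (Ne.symm hxy)]
              omega)]
      refine Finset.sum_congr rfl fun l hl => Finset.sum_congr rfl fun k hk => ?_
      have harg : (fun t => (n t - if t = k then 1 else 0) - if t = l then 1 else 0)
          = (fun t => (n t - if t = l then 1 else 0) - if t = k then 1 else 0) := by
        funext t
        split_ifs <;> omega
      rw [harg]
      ring
end

section
/- Let L₁, L₂ > 0 with L₁/L₂ = p/q for coprime positive integers p, q, and set ℓ = L₁/p = L₂/q. Let φ : ℝ → ℝ be a smooth, compactly supported function whose support is contained in the open interval (0, ℓ), and define u(t,x) = ∑_{k ∈ ℤ} φ(x − t − kℓ) (for each (t,x) at most one summand is nonzero). Then u is smooth on ℝ × ℝ; for every (t,x) one has ∂_t u(t,x) + ∂_x u(t,x) = 0; for every t one has u(t,0) = u(t,L₁) = u(t,L₂) = (u(t,L₁) + u(t,L₂))/2; and u(t+ℓ, x) = u(t,x) for all (t,x). In particular, if φ is not identically zero, the pair (u₁, u₂) with u₁ = u restricted to ℝ₊ × [0,L₁] and u₂ = u restricted to ℝ₊ × [0,L₂] is a non-zero time-periodic solution of the undamped system of two coupled transport equations ∂_t u_i + ∂_x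 u_i = 0 with transmission condition u₁(t,0) = u₂(t,0) = (u₁(t,L₁) + u₂(t,L₂))/2, and it is non-constant whenever φ is non-constant. -/
/-- Periodic solutions of the undamped system of two coupled transport equations on
circles of rationally dependent lengths (proof of Theorem `TheoAsympTwoCircles`.ii). -/
theorem stmt19 (L₁ L₂ ℓ : ℝ) (hL₁ : 0 < L₁) (hL₂ : 0 < L₂)
    (p q : ℕ) (hp : 0 < p) (hq : 0 < q) (hpq : Nat.Coprime p q)
    (hratio : L₁ / L₂ = (p : ℝ) / q)
    (hℓ₁ : ℓ = L₁ / p) (hℓ₂ : ℓ = L₂ / q)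
    (φ : ℝ → ℝ) (hφ : ContDiff ℝ (⊤ : ℕ∞) φ) (hφc : HasCompactSupport φ)
    (hφsupp : tsupport φ ⊆ Set.Ioo 0 ℓ)
    (u : ℝ → ℝ → ℝ) (hu : ∀ t x, u t x = ∑' k : ℤ, φ (x - t - k * ℓ)) :
    ContDiff ℝ (⊤ : ℕ∞) (fun pt : ℝ × ℝ => u pt.1 pt.2) ∧
    (∀ t x : ℝ, deriv (fun τ => u τ x) t + deriv (fun y => u t y) x = 0) ∧
    (∀ t : ℝ, u t 0 = u t L₁ ∧ u t 0 = u t L₂ ∧ u t 0 = (u t L₁ + u t L₂) / 2) ∧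
    (∀ t x : ℝ, u (t + ℓ) x = u t x) ∧
    (φ ≠ 0 → ∃ t x : ℝ, 0 ≤ t ∧ x ∈ Set.Icc 0 L₁ ∧ u t x ≠ 0) ∧
    ((¬ ∃ c : ℝ, ∀ x, φ x = c) →
      ∃ t x t' x' : ℝ, 0 ≤ t ∧ 0 ≤ t' ∧ x ∈ Set.Icc 0 L₁ ∧ x' ∈ Set.Icc 0 L₁ ∧
        u t x ≠ u t' x') := by
  have hp0 : (0:ℝ) < p := by exact_mod_cast hp
  have hq0 : (0:ℝ) < q := by exact_mod_cast hq
  have hℓpos : 0 < ℓ := hℓ₁ ▸ div_pos hL₁ hp0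
  have hφ0 : ∀ y : ℝ, y ∉ Set.Ioo 0 ℓ → φ y = 0 := fun y hy =>
    image_eq_zero_of_notMem_tsupport (fun h => hy (hφsupp h))
  set S : ℝ → ℝ := fun y => ∑' k : ℤ, φ (y - k * ℓ) with hS_def
  have huS : ∀ t x, u t x = S (x - t) := fun t x => hu t x
  -- local formula for S
  have hloc : ∀ (k : ℤ) (y : ℝ), (k:ℝ) * ℓ - ℓ < y → y < (k:ℝ) * ℓ + ℓ →
      S y = φ (y - ((k:ℝ) - 1) * ℓ) + φ (y - (k:ℝ) * ℓ) := by
    intro k y h1 h2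
    have hsum : S y = ∑ j ∈ ({k-1, k} : Finset ℤ), φ (y - j * ℓ) := by
      apply tsum_eq_sum
      intro j hj
      simp only [Finset.mem_insert, Finset.mem_singleton] at hj
      push_neg at hj
      apply hφ0
      simp only [Set.mem_Ioo, not_and_or, not_lt]
      rcases lt_or_ge j k with hlt | hge
      · right
        have hj2 : j ≤ k - 2 := by omega
        have hj2' : (j:ℝ) ≤ (k:ℝ) - 2 := by exact_mod_cast hj2
        nlinarith
      · left
        have hj2 : k + 1 ≤ j := by omega
        have hj2' : (k:ℝ) + 1 ≤ (j:ℝ) := by exact_mod_cast hj2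
        nlinarith
    rw [hsum, Finset.sum_pair (by omega : k - 1 ≠ k)]
    push_cast
    ring_nf
  -- periodicity of S
  have hper : ∀ y, S (y + ℓ) = S y := by
    intro y
    have h1 : S (y + ℓ) = ∑' k : ℤ, (fun j : ℤ => φ (y - j * ℓ)) ((Equiv.subRight (1:ℤ)) k) := by
      apply tsum_congr
      intro k
      simp only [Equiv.subRight_apply]
      congr 1
      push_cast
      ring
    rw [h1, Equiv.tsum_eq (Equiv.subRight (1:ℤ)) (fun j : ℤ => φ (y - j * ℓ))]
  have hpern : ∀ (n : ℕ) (y : ℝ), S (y + n * ℓ) = S y := by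
    intro n
    induction n with
    | zero => intro y; simp
    | succ m ih =>
      intro y
      have : y + ((m:ℝ) + 1) * ℓ = (y + m * ℓ) + ℓ := by ring
      push_cast
      rw [this, hper, ih]
  -- smoothness of S
  have hSsmooth : ContDiff ℝ (⊤ : ℕ∞) S := by
    rw [contDiff_iff_contDiffAt]
    intro y₀
    set k := ⌊y₀ / ℓ⌋ with hk
    have hk1 : (k:ℝ) * ℓ ≤ y₀ := by
      exact (le_div_iff₀ hℓpos).mp (Int.floor_le (y₀ / ℓ))
    have hk2 : y₀ < (k:ℝ) * ℓ + ℓ := by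
      have := Int.lt_floor_add_one (y₀ / ℓ)
      have h := (div_lt_iff₀ hℓpos).mp this
      nlinarith
    have hg : ContDiff ℝ (⊤ : ℕ∞) (fun y => φ (y - ((k:ℝ) - 1) * ℓ) + φ (y - (k:ℝ) * ℓ)) :=
      (hφ.comp (contDiff_id.sub contDiff_const)).add (hφ.comp (contDiff_id.sub contDiff_const))
    apply hg.contDiffAt.congr_of_eventuallyEq
    have hopen : Set.Ioo ((k:ℝ)*ℓ - ℓ) ((k:ℝ)*ℓ + ℓ) ∈ nhds y₀ :=
      Ioo_mem_nhds (by linarith) hk2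
    filter_upwards [hopen] with y hy
    exact hloc k y hy.1 hy.2
  have hSdiff : Differentiable ℝ S := hSsmooth.differentiable (by simp)
  have hℓleL₁ : ℓ ≤ L₁ := by
    rw [hℓ₁]
    apply div_le_self hL₁.le
    exact_mod_cast hp
  have hL1eq : L₁ = (p:ℝ) * ℓ := by
    rw [hℓ₁]; field_simp
  have hL2eq : L₂ = (q:ℝ) * ℓ := by
    rw [hℓ₂]; field_simp
  have key1 : ∀ t, u t L₁ = u t 0 := by
    intro t
    rw [huS, huS]
    have h := hpern p (-t)
    rw [show L₁ - t = -t + (p:ℝ) * ℓ by rw [hL1eq]; ring, h, show (0:ℝ) - t = -t by ring]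
  have key2 : ∀ t, u t L₂ = u t 0 := by
    intro t
    rw [huS, huS]
    have h := hpern q (-t)
    rw [show L₂ - t = -t + (q:ℝ) * ℓ by rw [hL2eq]; ring, h, show (0:ℝ) - t = -t by ring]
  -- derivative facts
  refine ⟨?_, ?_, ?_, ?_, ?_, ?_⟩
  · have heq : (fun pt : ℝ × ℝ => u pt.1 pt.2) = fun pt : ℝ × ℝ => S (pt.2 - pt.1) :=
      funext fun pt => huS pt.1 pt.2
    rw [heq]
    exact hSsmooth.comp (contDiff_snd.sub contDiff_fst)
  · intro t x
    have h1 : (fun τ => u τ x) = fun τ => S (x - τ) := funext fun τ => huS τ x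
    have h2 : (fun y => u t y) = fun y => S (y - t) := funext fun y => huS t y
    rw [h1, h2]
    have hd : HasDerivAt S (deriv S (x - t)) (x - t) := (hSdiff (x - t)).hasDerivAt
    have hi1 : HasDerivAt (fun τ : ℝ => x - τ) (-1) t := by
      simpa using (hasDerivAt_id t).const_sub x
    have hi2 : HasDerivAt (fun y : ℝ => y - t) 1 x := (hasDerivAt_id x).sub_const t
    have hd1 : HasDerivAt (fun τ => S (x - τ)) (deriv S (x - t) * (-1)) t := hd.comp t hi1
    have hd2 : HasDerivAt (fun y => S (y - t)) (deriv S (x - t) * 1) x := by have := hd.comp x hi2; exact this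
    rw [hd1.deriv, hd2.deriv]
    ring
  · intro t
    rw [key1 t, key2 t]
    refine ⟨rfl, rfl, by ring⟩
  · intro t x
    rw [huS, huS, show x - t = (x - (t + ℓ)) + ℓ by ring, hper]
  · intro hne
    obtain ⟨y₀, hy₀⟩ : ∃ y, φ y ≠ 0 := by
      by_contra h
      push_neg at h
      exact hne (funext h)
    have hy₀mem : y₀ ∈ Set.Ioo 0 ℓ := hφsupp (subset_tsupport φ (by simpa using hy₀))
    have hu0 : u 0 y₀ = φ y₀ := by
      rw [huS, show y₀ - 0 = y₀ by ring,
        hloc 1 y₀ (by push_cast; linarith [hy₀mem.1]) (by push_cast; linarith [hy₀mem.2])]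
      push_cast
      rw [hφ0 (y₀ - 1 * ℓ) (by simp only [Set.mem_Ioo, not_and_or, not_lt]; left; linarith [hy₀mem.2])]
      ring_nf
    exact ⟨0, y₀, le_refl 0, ⟨hy₀mem.1.le, le_trans hy₀mem.2.le hℓleL₁⟩, by rw [hu0]; exact hy₀⟩
  · intro hnc
    have hφne : φ ≠ 0 := by
      intro h
      exact hnc ⟨0, fun x => by rw [h]; rfl⟩
    obtain ⟨y₀, hy₀⟩ : ∃ y, φ y ≠ 0 := by
      by_contra h
      push_neg at h
      exact hφne (funext h)
    have hy₀mem : y₀ ∈ Set.Ioo 0 ℓ := hφsupp (subset_tsupport φ (by simpa using hy₀))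
    have hu0 : u 0 y₀ = φ y₀ := by
      rw [huS, show y₀ - 0 = y₀ by ring,
        hloc 1 y₀ (by push_cast; linarith [hy₀mem.1]) (by push_cast; linarith [hy₀mem.2])]
      push_cast
      rw [hφ0 (y₀ - 1 * ℓ) (by simp only [Set.mem_Ioo, not_and_or, not_lt]; left; linarith [hy₀mem.2])]
      ring_nf
    have hu00 : u 0 0 = 0 := by
      rw [huS, show (0:ℝ) - 0 = 0 by ring,
        hloc 0 0 (by push_cast; linarith) (by push_cast; linarith)]
      push_cast
      rw [hφ0 (0 - (0 - 1) * ℓ) (by simp only [Set.mem_Ioo, not_and_or, not_lt]; right; nlinarith),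
        hφ0 (0 - 0 * ℓ) (by simp)]
      ring
    exact ⟨0, y₀, 0, 0, le_refl 0, le_refl 0,
      ⟨hy₀mem.1.le, le_trans hy₀mem.2.le hℓleL₁⟩, ⟨le_refl 0, hL₁.le⟩,
      by rw [hu0, hu00]; exact hy₀⟩
end
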